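/- arXiv:2212.05431 — 8 statements merged into one kernel-verified Lean document; each statement's English description precedes it below -/
import Mathlib

section
/- Let φ = (φ_1, …, φ_n) be random variables on a probability space with A_k ≤ φ_k ≤ B_k almost surely, where A_k < 0 < B_k, let d ≤ n be a positive integer, and let G : ℝ^n → [0, ∞) be convex in each variable separately. Then there exist a probability space and random variables ξ_1, …, ξ_n on it such that each ξ_k takes only the two values A_k and B_k, has mean zero, any d of the ξ_k are mutually independent, and E[G(φ_1, …, φ_n)] ≤ (1 + μ_d(φ)) · E[G(ξ_1, …, ξ_n)]. -/
/-!
Round each `φ k` to `a k` or `b k`, independently given `φ` and with the probabilities that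
preserve its value. Separate convexity of `G` gives `E G(φ) ≤ E G(η)` for the rounded vector `η`,
and the law `ρ` of `η` on the vertices of the box has the same mixed moments `m_A = E ∏_{j∈A} φ_j`
as `φ`. A signed measure on the vertices is determined by its mixed moments, which admit a dual
basis `e_A` with `|e_A| ≤ (∏_{j∈A} C_j⁻¹) p`, where `p` is the law of independent mean-zero
two-point variables. Hence `ν = (ρ + μ_d p - ∑_{0 < #A ≤ d} m_A e_A) / (1 + μ_d)` is a probability
law whose mixed moments of orders `1, …, d` vanish, which makes its coordinates mean-zero and
`d`-independent, and `ρ ≤ (1 + μ_d) ν` gives the inequality since `G ≥ 0`.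
-/

open MeasureTheory ProbabilityTheory Finset

noncomputable section

namespace ExtremeInequality

section TwoPoint

variable {a b t : ℝ}

def twoPoint (a b : ℝ) (c : Bool) : ℝ := cond c b a

def twoPointWeight (a b t : ℝ) (c : Bool) : ℝ :=
  cond c ((t - a) / (b - a)) ((b - t) / (b - a))

def twoPointSlope (a b : ℝ) (c : Bool) : ℝ := cond c 1 (-1) / (b - a)

lemma twoPoint_eq_or (c : Bool) : twoPoint a b c = a ∨ twoPoint a b c = b := by
  cases c <;> simp [twoPoint]

lemma twoPoint_mem_Icc (hab : a ≤ b) (c : Bool) : twoPoint a b c ∈ Set.Icc a b := by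
  cases c <;> simp [twoPoint, hab]

lemma sum_twoPointWeight (hab : a ≠ b) (t : ℝ) : ∑ c, twoPointWeight a b t c = 1 := by
  have : b - a ≠ 0 := sub_ne_zero.2 hab.symm
  simp only [Fintype.sum_bool, twoPointWeight, cond_true, cond_false]
  field_simp
  ring

lemma sum_twoPointWeight_mul (hab : a ≠ b) (t : ℝ) :
    ∑ c, twoPointWeight a b t c * twoPoint a b c = t := by
  have : b - a ≠ 0 := sub_ne_zero.2 hab.symm
  simp only [Fintype.sum_bool, twoPointWeight, twoPoint, cond_true, cond_false]
  field_simp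
  ring

lemma twoPointWeight_nonneg (ht : t ∈ Set.Icc a b) (c : Bool) : 0 ≤ twoPointWeight a b t c := by
  have : 0 ≤ b - a := sub_nonneg.2 (ht.1.trans ht.2)
  cases c
  · exact div_nonneg (sub_nonneg.2 ht.2) this
  · exact div_nonneg (sub_nonneg.2 ht.1) this

lemma twoPointWeight_le_one (ht : t ∈ Set.Icc a b) (c : Bool) : twoPointWeight a b t c ≤ 1 := by
  have : 0 ≤ b - a := sub_nonneg.2 (ht.1.trans ht.2)
  cases c
  · exact div_le_one_of_le₀ (by linarith [ht.1]) this
  · exact div_le_one_of_le₀ (by linarith [ht.2]) this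

lemma twoPointWeight_twoPoint (hab : a ≠ b) (c c' : Bool) :
    twoPointWeight a b (twoPoint a b c) c' = if c' = c then 1 else 0 := by
  have : b - a ≠ 0 := sub_ne_zero.2 hab.symm
  cases c <;> cases c' <;> simp [twoPointWeight, twoPoint, this]

lemma sum_twoPointSlope (a b : ℝ) : ∑ c, twoPointSlope a b c = 0 := by
  simp [twoPointSlope, neg_div]

lemma sum_twoPointSlope_mul (hab : a ≠ b) : ∑ c, twoPointSlope a b c * twoPoint a b c = 1 := by
  have : b - a ≠ 0 := sub_ne_zero.2 hab.symm
  simp only [Fintype.sum_bool, twoPointSlope, twoPoint, cond_true, cond_false]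
  field_simp
  ring

/-- Both atoms of the mean-zero law `twoPointWeight a b 0` are at least `min (-a) b / (b - a)`. -/
lemma abs_twoPointSlope_le (ha : a < 0) (hb : 0 < b) (c : Bool) :
    |twoPointSlope a b c| ≤ (min (-a) b)⁻¹ * twoPointWeight a b 0 c := by
  have hba : 0 < b - a := by linarith
  have hC : 0 < min (-a) b := lt_min (neg_pos.2 ha) hb
  have hatom : min (-a) b ≤ cond c (-a) b := by cases c <;> simp
  have habs : |twoPointSlope a b c| = 1 / (b - a) := by
    cases c <;> simp [twoPointSlope, abs_div, abs_of_pos hba]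
  have hw : twoPointWeight a b 0 c = cond c (-a) b / (b - a) := by
    cases c <;> simp [twoPointWeight]
  rw [habs, hw, ← mul_div_assoc]
  gcongr
  exact (one_le_inv_mul₀ hC).2 hatom

lemma eq_mul_twoPoint_add (hab : a ≠ b) (g : Bool → ℝ) :
    ∃ α β : ℝ, ∀ c, g c = β * twoPoint a b c + α := by
  have : b - a ≠ 0 := sub_ne_zero.2 hab.symm
  refine ⟨(g false * b - g true * a) / (b - a), (g true - g false) / (b - a), fun c => ?_⟩
  cases c <;> simp only [twoPoint, cond_true, cond_false] <;> field_simp <;> ring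

lemma _root_.ConvexOn.le_sum_twoPointWeight_mul {f : ℝ → ℝ} (hf : ConvexOn ℝ Set.univ f) (hab : a < b)
    (ht : t ∈ Set.Icc a b) : f t ≤ ∑ c, twoPointWeight a b t c * f (twoPoint a b c) := by
  have hsum := sum_twoPointWeight hab.ne t
  have hmean := sum_twoPointWeight_mul hab.ne t
  simp only [Fintype.sum_bool, twoPoint, cond_true, cond_false] at hsum hmean ⊢
  have := hf.2 (Set.mem_univ b) (Set.mem_univ a) (twoPointWeight_nonneg ht true)
    (twoPointWeight_nonneg ht false) hsum
  rwa [smul_eq_mul, smul_eq_mul, hmean] at this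

end TwoPoint

section Cube

variable {ι : Type*} [Fintype ι] {a b : ι → ℝ}

def vertex (a b : ι → ℝ) (ε : ι → Bool) : ι → ℝ := fun k => twoPoint (a k) (b k) (ε k)

def cubeWeight (a b t : ι → ℝ) (ε : ι → Bool) : ℝ := ∏ k, twoPointWeight (a k) (b k) (t k) (ε k)

lemma cubeWeight_vertex (hab : ∀ k, a k ≠ b k) (ε₀ ε : ι → Bool) :
    cubeWeight a b (vertex a b ε₀) ε = if ε = ε₀ then 1 else 0 := by
  simp only [cubeWeight, vertex, twoPointWeight_twoPoint (hab _), prod_boole, mem_univ,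
    true_imp_iff, funext_iff]

variable [DecidableEq ι]

def cubeMoment (a b : ι → ℝ) (B : Finset ι) : ((ι → Bool) → ℝ) →ₗ[ℝ] ℝ where
  toFun ρ := ∑ ε, ρ ε * ∏ k ∈ B, vertex a b ε k
  map_add' ρ σ := by simp only [Pi.add_apply, add_mul, sum_add_distrib]
  map_smul' r ρ := by simp only [Pi.smul_apply, smul_eq_mul, mul_assoc, mul_sum, RingHom.id_apply]

lemma cubeMoment_apply (B : Finset ι) (ρ : (ι → Bool) → ℝ) :
    cubeMoment a b B ρ = ∑ ε, ρ ε * ∏ k ∈ B, vertex a b ε k := rfl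

lemma cubeMoment_empty (ρ : (ι → Bool) → ℝ) : cubeMoment a b ∅ ρ = ∑ ε, ρ ε := by
  simp [cubeMoment_apply]

lemma cubeMoment_prod (h : ι → Bool → ℝ) (B : Finset ι) :
    cubeMoment a b B (fun ε => ∏ k, h k (ε k)) =
      ∏ k, if k ∈ B then ∑ c, h k c * twoPoint (a k) (b k) c else ∑ c, h k c := by
  have hfactor : ∀ k, (if k ∈ B then ∑ c, h k c * twoPoint (a k) (b k) c else ∑ c, h k c) =
      ∑ c, h k c * if k ∈ B then twoPoint (a k) (b k) c else 1 := by
    intro k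
    split_ifs <;> simp
  simp_rw [hfactor, Fintype.prod_sum, cubeMoment_apply, prod_mul_distrib, Fintype.prod_ite_mem]
  rfl

lemma cubeMoment_cubeWeight (hab : ∀ k, a k ≠ b k) (t : ι → ℝ) (B : Finset ι) :
    cubeMoment a b B (cubeWeight a b t) = ∏ k ∈ B, t k := by
  unfold cubeWeight
  rw [cubeMoment_prod, ← Fintype.prod_ite_mem B]
  refine prod_congr rfl fun k _ => ?_
  split_ifs
  · exact sum_twoPointWeight_mul (hab k) (t k)
  · exact sum_twoPointWeight (hab k) (t k)

lemma cubeWeight_update (t : ι → ℝ) (j : ι) (x : ℝ) (ε : ι → Bool) :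
    cubeWeight a b (Function.update t j x) ε =
      twoPointWeight (a j) (b j) x (ε j) *
        ∏ k ∈ univ.erase j, twoPointWeight (a k) (b k) (t k) (ε k) := by
  rw [cubeWeight, ← mul_prod_erase univ _ (mem_univ j), Function.update_self]
  congr 1
  exact prod_congr rfl fun k hk => by rw [Function.update_of_ne (ne_of_mem_erase hk)]

lemma sum_twoPointWeight_mul_cubeWeight_update (hab : ∀ k, a k ≠ b k) (t : ι → ℝ) (j : ι)
    (ε : ι → Bool) :
    ∑ c, twoPointWeight (a j) (b j) (t j) c *
        cubeWeight a b (Function.update t j (twoPoint (a j) (b j) c)) ε = cubeWeight a b t ε := by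
  simp_rw [cubeWeight_update, twoPointWeight_twoPoint (hab j), ← mul_assoc, ← sum_mul, mul_ite,
    mul_one, mul_zero, Fintype.sum_ite_eq]
  rw [cubeWeight, ← mul_prod_erase univ _ (mem_univ j)]

/-- The coordinates not yet at an endpoint are moved there one at a time, by convexity of `G` in
that coordinate. -/
theorem le_sum_cubeWeight_mul {G : (ι → ℝ) → ℝ} (hab : ∀ k, a k < b k)
    (hG : ∀ k x, ConvexOn ℝ Set.univ fun s => G (Function.update x k s))
    {t : ι → ℝ} (ht : ∀ k, t k ∈ Set.Icc (a k) (b k)) :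
    G t ≤ ∑ ε, cubeWeight a b t ε * G (vertex a b ε) := by
  suffices h : ∀ s : Finset ι, ∀ t : ι → ℝ, (∀ k, t k ∈ Set.Icc (a k) (b k)) →
      (∀ k ∉ s, ∃ c, t k = twoPoint (a k) (b k) c) →
      G t ≤ ∑ ε, cubeWeight a b t ε * G (vertex a b ε) from
    h univ t ht fun k hk => absurd (mem_univ k) hk
  intro s
  induction s using Finset.induction_on with
  | empty =>
    intro t _ hvertex
    choose ε₀ hε₀ using fun k => hvertex k (notMem_empty k)
    obtain rfl : t = vertex a b ε₀ := funext hε₀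
    simp [cubeWeight_vertex fun k => (hab k).ne]
  | insert j s hj ih =>
    intro t ht hvertex
    have ht' : ∀ c k, Function.update t j (twoPoint (a j) (b j) c) k ∈ Set.Icc (a k) (b k) := by
      intro c k
      rcases eq_or_ne k j with rfl | hk
      · simpa using twoPoint_mem_Icc (hab k).le c
      · simpa [hk] using ht k
    have hvertex' : ∀ c, ∀ k ∉ s,
        ∃ c', Function.update t j (twoPoint (a j) (b j) c) k = twoPoint (a k) (b k) c' := by
      intro c k hks
      rcases eq_or_ne k j with rfl | hk
      · exact ⟨c, Function.update_self ..⟩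
      · simpa [hk] using hvertex k (by simp [hk, hks])
    calc G t = G (Function.update t j (t j)) := by rw [Function.update_eq_self]
      _ ≤ ∑ c, twoPointWeight (a j) (b j) (t j) c *
            G (Function.update t j (twoPoint (a j) (b j) c)) :=
          (hG j t).le_sum_twoPointWeight_mul (hab j) (ht j)
      _ ≤ ∑ c, twoPointWeight (a j) (b j) (t j) c *
            ∑ ε, cubeWeight a b (Function.update t j (twoPoint (a j) (b j) c)) ε *
              G (vertex a b ε) := by
          gcongr with c
          · exact twoPointWeight_nonneg (ht j) c
          · exact ih _ (ht' c) (hvertex' c)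
      _ = ∑ ε, cubeWeight a b t ε * G (vertex a b ε) := by
          simp_rw [mul_sum, ← mul_assoc]
          rw [sum_comm]
          simp_rw [← sum_mul, sum_twoPointWeight_mul_cubeWeight_update (fun k => (hab k).ne)]

def dualBasis (a b : ι → ℝ) (A : Finset ι) (ε : ι → Bool) : ℝ :=
  ∏ k, if k ∈ A then twoPointSlope (a k) (b k) (ε k) else twoPointWeight (a k) (b k) 0 (ε k)

lemma dualBasis_empty : dualBasis a b ∅ = cubeWeight a b 0 := by
  ext ε
  simp [dualBasis, cubeWeight]

lemma cubeMoment_dualBasis (hab : ∀ k, a k ≠ b k) (A B : Finset ι) :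
    cubeMoment a b B (dualBasis a b A) = if A = B then 1 else 0 := by
  unfold dualBasis
  rw [cubeMoment_prod fun k c =>
    if k ∈ A then twoPointSlope (a k) (b k) c else twoPointWeight (a k) (b k) 0 c]
  calc _ = ∏ k, if (k ∈ A ↔ k ∈ B) then (1 : ℝ) else 0 := by
        refine prod_congr rfl fun k _ => ?_
        by_cases hA : k ∈ A <;> by_cases hB : k ∈ B <;>
          simp only [hA, hB, ↓reduceIte, iff_self, iff_false, false_iff, not_true_eq_false,
            sum_twoPointSlope, sum_twoPointSlope_mul (hab k),
            sum_twoPointWeight_mul (hab k), sum_twoPointWeight (hab k)]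
    _ = if A = B then 1 else 0 := by
        simp_rw [prod_boole, mem_univ, true_imp_iff, ← Finset.ext_iff]

lemma abs_dualBasis_le (ha : ∀ k, a k < 0) (hb : ∀ k, 0 < b k) (A : Finset ι) (ε : ι → Bool) :
    |dualBasis a b A ε| ≤ (∏ j ∈ A, (min (-a j) (b j))⁻¹) * cubeWeight a b 0 ε := by
  rw [dualBasis, abs_prod, cubeWeight, ← Fintype.prod_ite_mem A, ← prod_mul_distrib]
  gcongr with k
  split_ifs
  · exact abs_twoPointSlope_le (ha k) (hb k) _
  · rw [one_mul, abs_of_nonneg (twoPointWeight_nonneg ⟨(ha k).le, (hb k).le⟩ _), Pi.zero_apply]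

end Cube

section CubeLaw

variable {ι : Type*} [Fintype ι] {Ω : Type*} [MeasurableSpace Ω] {μ : Measure Ω}
  {a b : ι → ℝ} {φ : ι → Ω → ℝ}

/-- The law of the vertex obtained by rounding each `φ k` to `a k` or `b k`, independently given
`φ` and with the probabilities making the rounding mean-preserving. -/
def cubeLaw (μ : Measure Ω) (a b : ι → ℝ) (φ : ι → Ω → ℝ) (ε : ι → Bool) : ℝ :=
  ∫ ω, cubeWeight a b (fun k => φ k ω) ε ∂μ

lemma cubeLaw_nonneg (hφ : ∀ᵐ ω ∂μ, ∀ k, φ k ω ∈ Set.Icc (a k) (b k)) (ε : ι → Bool) :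
    0 ≤ cubeLaw μ a b φ ε :=
  integral_nonneg_of_ae <| hφ.mono fun _ hω =>
    prod_nonneg fun k _ => twoPointWeight_nonneg (hω k) (ε k)

lemma integrable_cubeWeight [IsFiniteMeasure μ] (hmeas : ∀ k, Measurable (φ k))
    (hφ : ∀ᵐ ω ∂μ, ∀ k, φ k ω ∈ Set.Icc (a k) (b k)) (ε : ι → Bool) :
    Integrable (fun ω => cubeWeight a b (fun k => φ k ω) ε) μ := by
  have hmeas' : ∀ k, Measurable fun ω => twoPointWeight (a k) (b k) (φ k ω) (ε k) := fun k => by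
    cases ε k <;> simp only [twoPointWeight, cond_true, cond_false] <;> fun_prop
  refine Integrable.mono' (integrable_const 1)
    (Finset.measurable_prod univ fun k _ => hmeas' k).aestronglyMeasurable ?_
  filter_upwards [hφ] with ω hω
  rw [Real.norm_eq_abs, cubeWeight,
    abs_of_nonneg (prod_nonneg fun k _ => twoPointWeight_nonneg (hω k) _)]
  exact prod_le_one (fun k _ => twoPointWeight_nonneg (hω k) _)
    fun k _ => twoPointWeight_le_one (hω k) _

variable [DecidableEq ι] [IsFiniteMeasure μ]

lemma cubeMoment_cubeLaw (hmeas : ∀ k, Measurable (φ k))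
    (hφ : ∀ᵐ ω ∂μ, ∀ k, φ k ω ∈ Set.Icc (a k) (b k)) (hab : ∀ k, a k ≠ b k) (B : Finset ι) :
    cubeMoment a b B (cubeLaw μ a b φ) = ∫ ω, ∏ k ∈ B, φ k ω ∂μ := by
  simp_rw [cubeMoment_apply, cubeLaw, ← integral_mul_const]
  rw [← integral_finsetSum _ fun ε _ => (integrable_cubeWeight hmeas hφ ε).mul_const _]
  congr 1 with ω
  exact cubeMoment_cubeWeight hab _ B

theorem integral_le_sum_cubeLaw_mul (hmeas : ∀ k, Measurable (φ k))
    (hφ : ∀ᵐ ω ∂μ, ∀ k, φ k ω ∈ Set.Icc (a k) (b k)) (hab : ∀ k, a k < b k) {G : (ι → ℝ) → ℝ}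
    (hG0 : ∀ t, 0 ≤ G t) (hG : ∀ k x, ConvexOn ℝ Set.univ fun s => G (Function.update x k s)) :
    ∫ ω, G (fun k => φ k ω) ∂μ ≤ ∑ ε, cubeLaw μ a b φ ε * G (vertex a b ε) := by
  by_cases hint : Integrable (fun ω => G (fun k => φ k ω)) μ
  · have hint' : ∀ ε, Integrable
        (fun ω => cubeWeight a b (fun k => φ k ω) ε * G (vertex a b ε)) μ :=
      fun ε => (integrable_cubeWeight hmeas hφ ε).mul_const _
    calc ∫ ω, G (fun k => φ k ω) ∂μ
        ≤ ∫ ω, ∑ ε, cubeWeight a b (fun k => φ k ω) ε * G (vertex a b ε) ∂μ :=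
          integral_mono_ae hint (integrable_finsetSum _ fun ε _ => hint' ε)
            (hφ.mono fun _ hω => le_sum_cubeWeight_mul hab hG hω)
      _ = ∑ ε, cubeLaw μ a b φ ε * G (vertex a b ε) := by
          rw [integral_finsetSum _ fun ε _ => hint' ε]
          simp_rw [cubeLaw, integral_mul_const]
  · rw [integral_undef hint]
    exact sum_nonneg fun ε _ => mul_nonneg (cubeLaw_nonneg hφ ε) (hG0 _)

end CubeLaw

section Correction

variable {ι : Type*} [Fintype ι] [DecidableEq ι] {a b : ι → ℝ} {I : Finset (Finset ι)}
  {ρ : (ι → Bool) → ℝ}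

def errorWeight (a b : ι → ℝ) (I : Finset (Finset ι)) (ρ : (ι → Bool) → ℝ) : ℝ :=
  ∑ A ∈ I, (∏ j ∈ A, (min (-a j) (b j))⁻¹) * |cubeMoment a b A ρ|

def correction (a b : ι → ℝ) (I : Finset (Finset ι)) (ρ : (ι → Bool) → ℝ) : (ι → Bool) → ℝ :=
  (1 + errorWeight a b I ρ)⁻¹ • (ρ + errorWeight a b I ρ • cubeWeight a b 0 -
    ∑ A ∈ I, cubeMoment a b A ρ • dualBasis a b A)

lemma errorWeight_nonneg (ha : ∀ k, a k < 0) (hb : ∀ k, 0 < b k) (I : Finset (Finset ι))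
    (ρ : (ι → Bool) → ℝ) : 0 ≤ errorWeight a b I ρ :=
  sum_nonneg fun _ _ => mul_nonneg
    (prod_nonneg fun j _ => inv_nonneg.2 (le_min (neg_nonneg.2 (ha j).le) (hb j).le))
    (abs_nonneg _)

lemma abs_sum_mul_dualBasis_le (ha : ∀ k, a k < 0) (hb : ∀ k, 0 < b k) (I : Finset (Finset ι))
    (ρ : (ι → Bool) → ℝ) (ε : ι → Bool) :
    |∑ A ∈ I, cubeMoment a b A ρ * dualBasis a b A ε| ≤
      errorWeight a b I ρ * cubeWeight a b 0 ε :=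
  calc |∑ A ∈ I, cubeMoment a b A ρ * dualBasis a b A ε|
      ≤ ∑ A ∈ I, |cubeMoment a b A ρ| * |dualBasis a b A ε| := by
        simpa only [abs_mul] using
          abs_sum_le_sum_abs (fun A => cubeMoment a b A ρ * dualBasis a b A ε) I
    _ ≤ ∑ A ∈ I, |cubeMoment a b A ρ| *
          ((∏ j ∈ A, (min (-a j) (b j))⁻¹) * cubeWeight a b 0 ε) := by
        gcongr with A
        exact abs_dualBasis_le ha hb A ε
    _ = errorWeight a b I ρ * cubeWeight a b 0 ε := by
        rw [errorWeight, sum_mul]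
        exact sum_congr rfl fun A _ => by ring

lemma correction_apply (ε : ι → Bool) :
    correction a b I ρ ε = (ρ ε + errorWeight a b I ρ * cubeWeight a b 0 ε -
      ∑ A ∈ I, cubeMoment a b A ρ * dualBasis a b A ε) / (1 + errorWeight a b I ρ) := by
  simp [correction, div_eq_inv_mul]

lemma correction_nonneg (ha : ∀ k, a k < 0) (hb : ∀ k, 0 < b k) (hρ : ∀ ε, 0 ≤ ρ ε)
    (ε : ι → Bool) : 0 ≤ correction a b I ρ ε := by
  have := (abs_le.1 (abs_sum_mul_dualBasis_le ha hb I ρ ε)).2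
  rw [correction_apply]
  exact div_nonneg (by linarith [hρ ε]) (by linarith [errorWeight_nonneg ha hb I ρ])

lemma le_one_add_errorWeight_mul_correction (ha : ∀ k, a k < 0) (hb : ∀ k, 0 < b k)
    (ε : ι → Bool) : ρ ε ≤ (1 + errorWeight a b I ρ) * correction a b I ρ ε := by
  have := (abs_le.1 (abs_sum_mul_dualBasis_le ha hb I ρ ε)).2
  rw [correction_apply, mul_div_cancel₀]
  · linarith
  · linarith [errorWeight_nonneg ha hb I ρ]

lemma cubeMoment_correction (hab : ∀ k, a k ≠ b k) (B : Finset ι) :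
    cubeMoment a b B (correction a b I ρ) = (1 + errorWeight a b I ρ)⁻¹ *
      (cubeMoment a b B ρ + errorWeight a b I ρ * (if B = ∅ then 1 else 0) -
        if B ∈ I then cubeMoment a b B ρ else 0) := by
  simp only [correction, map_smul, map_sub, map_add, map_sum, smul_eq_mul, ← dualBasis_empty,
    cubeMoment_dualBasis hab, mul_ite, mul_one, mul_zero, sum_ite_eq', eq_comm (a := ∅)]

lemma cubeMoment_correction_of_mem (hab : ∀ k, a k ≠ b k) {B : Finset ι} (hB : B ∈ I)
    (hI : ∅ ∉ I) : cubeMoment a b B (correction a b I ρ) = 0 := by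
  rw [cubeMoment_correction hab, if_neg (ne_of_mem_of_not_mem hB hI), if_pos hB]
  ring

lemma cubeMoment_correction_empty (ha : ∀ k, a k < 0) (hb : ∀ k, 0 < b k) (hI : ∅ ∉ I)
    (hρ : cubeMoment a b ∅ ρ = 1) : cubeMoment a b ∅ (correction a b I ρ) = 1 := by
  rw [cubeMoment_correction (fun k => ((ha k).trans (hb k)).ne), if_pos rfl, if_neg hI, hρ,
    mul_one, sub_zero, inv_mul_cancel₀]
  linarith [errorWeight_nonneg ha hb I ρ]

lemma sum_mul_le_one_add_errorWeight_mul_sum_correction_mul (ha : ∀ k, a k < 0)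
    (hb : ∀ k, 0 < b k) {F : (ι → Bool) → ℝ} (hF : ∀ ε, 0 ≤ F ε) :
    ∑ ε, ρ ε * F ε ≤ (1 + errorWeight a b I ρ) * ∑ ε, correction a b I ρ ε * F ε := by
  rw [mul_sum]
  refine sum_le_sum fun ε _ => ?_
  rw [← mul_assoc]
  exact mul_le_mul_of_nonneg_right (le_one_add_errorWeight_mul_correction ha hb ε) (hF ε)

end Correction

section DiscreteLaw

variable {X : Type*} [Fintype X] [MeasurableSpace X] [MeasurableSingletonClass X]
  {ν : X → ℝ}

def pmfOfReal (ν : X → ℝ) (h0 : ∀ x, 0 ≤ ν x) (h1 : ∑ x, ν x = 1) : PMF X :=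
  PMF.ofFintype (fun x => ENNReal.ofReal (ν x)) (by
    rw [← ENNReal.ofReal_sum_of_nonneg fun x _ => h0 x, h1, ENNReal.ofReal_one])

lemma integral_pmfOfReal (h0 : ∀ x, 0 ≤ ν x) (h1 : ∑ x, ν x = 1) (f : X → ℝ) :
    ∫ x, f x ∂(pmfOfReal ν h0 h1).toMeasure = ∑ x, ν x * f x := by
  simp [PMF.integral_eq_sum, pmfOfReal, ENNReal.toReal_ofReal (h0 _)]

lemma pmfOfReal_toMeasure_apply (h0 : ∀ x, 0 ≤ ν x) (h1 : ∑ x, ν x = 1) (A : Set X) :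
    (pmfOfReal ν h0 h1).toMeasure A = ENNReal.ofReal (∑ x, ν x * A.indicator 1 x) := by
  rw [← ofReal_measureReal, ← integral_indicator_one A.toFinite.measurableSet, integral_pmfOfReal]

end DiscreteLaw

section Independence

variable {ι : Type*} [Fintype ι] [DecidableEq ι] {a b : ι → ℝ} {ρ : (ι → Bool) → ℝ}

/-- Each `g k` is affine in the vertex coordinate `k`, so only the moments of `ρ` indexed by subsets
of `s` enter, and these are those of a product law. -/
theorem sum_mul_prod_eq_prod_sum_of_cubeMoment_eq_zero (hab : ∀ k, a k ≠ b k) {s : Finset ι}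
    (hρ : ∑ ε, ρ ε = 1) (hmom : ∀ B ⊆ s, B.Nonempty → cubeMoment a b B ρ = 0)
    (g : ι → Bool → ℝ) :
    ∑ ε, ρ ε * ∏ k ∈ s, g k (ε k) = ∏ k ∈ s, ∑ ε, ρ ε * g k (ε k) := by
  choose α β hg using fun k => eq_mul_twoPoint_add (hab k) (g k)
  have hcoord : ∀ k ∈ s, ∑ ε, ρ ε * g k (ε k) = α k := by
    intro k hk
    have h := hmom {k} (singleton_subset_iff.2 hk) (singleton_nonempty k)
    simp only [cubeMoment_apply, prod_singleton, vertex] at h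
    simp only [hg, mul_add, sum_add_distrib, ← sum_mul, hρ, one_mul]
    simp only [mul_left_comm _ (β k), ← mul_sum, h, mul_zero, zero_add]
  rw [prod_congr rfl hcoord]
  calc ∑ ε, ρ ε * ∏ k ∈ s, g k (ε k)
      = ∑ t ∈ s.powerset, (∏ k ∈ t, β k) * (∏ k ∈ s \ t, α k) * cubeMoment a b t ρ := by
        simp only [hg, prod_add, mul_sum, cubeMoment_apply, prod_mul_distrib, vertex]
        rw [sum_comm]
        exact sum_congr rfl fun t _ => sum_congr rfl fun ε _ => by ring
    _ = ∏ k ∈ s, α k := by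
        rw [sum_eq_single_of_mem ∅ (empty_mem_powerset s)]
        · simp [cubeMoment_empty, hρ]
        · intro t ht hne
          rw [hmom t (mem_powerset.1 ht) (nonempty_iff_ne_empty.2 hne), mul_zero]

theorem iIndepFun_eval_of_cubeMoment_eq_zero (hab : ∀ k, a k ≠ b k) (h0 : ∀ ε, 0 ≤ ρ ε)
    (h1 : ∑ ε, ρ ε = 1) {s : Finset ι} (hmom : ∀ B ⊆ s, B.Nonempty → cubeMoment a b B ρ = 0) :
    iIndepFun (fun (i : s) (ε : ι → Bool) => ε i) (pmfOfReal ρ h0 h1).toMeasure := by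
  rw [iIndepFun_iff_measure_inter_preimage_eq_mul]
  intro T sets _
  let g : ι → Bool → ℝ := fun k => if h : k ∈ s then (sets ⟨k, h⟩).indicator 1 else 1
  have hg : ∀ i : s, g i = (sets i).indicator 1 := fun i => by simp [g]
  have hT : T.map (Function.Embedding.subtype _) ⊆ s := fun k hk => by
    obtain ⟨i, -, rfl⟩ := mem_map.1 hk
    exact i.2
  have hfactor := sum_mul_prod_eq_prod_sum_of_cubeMoment_eq_zero hab h1
    (fun B hB => hmom B (hB.trans hT)) g
  simp only [prod_map, Function.Embedding.coe_subtype, hg] at hfactor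
  simp only [pmfOfReal_toMeasure_apply]
  rw [← ENNReal.ofReal_prod_of_nonneg fun i _ => ?_]
  · congr 1
    convert hfactor using 3 with ε
    · classical
      simp [Set.indicator_apply, prod_boole]
    · rfl
  · exact sum_nonneg fun ε _ => mul_nonneg (h0 ε) (Set.indicator_nonneg (fun _ _ => zero_le_one) _)

end Independence

end ExtremeInequality

end

open ExtremeInequality in
theorem extreme_inequality_convex_multivariate_general
    {Ω : Type*} [MeasurableSpace Ω] (μ : Measure Ω) [IsProbabilityMeasure μ]
    (n d : ℕ) (hd : 0 < d)
    (φ : Fin n → Ω → ℝ) (hφmeas : ∀ k, Measurable (φ k))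
    (a b : Fin n → ℝ) (ha : ∀ k, a k < 0) (hb : ∀ k, 0 < b k)
    (hbound : ∀ k, ∀ᵐ ω ∂μ, a k ≤ φ k ω ∧ φ k ω ≤ b k)
    (G : (Fin n → ℝ) → ℝ) (hG0 : ∀ t, 0 ≤ G t)
    (hGconv : ∀ (k : Fin n) (x : Fin n → ℝ),
      ConvexOn ℝ Set.univ (fun t : ℝ => G (Function.update x k t))) :
    ∃ (Ω' : Type) (_ : MeasurableSpace Ω') (μ' : Measure Ω')
      (_ : IsProbabilityMeasure μ') (ξ : Fin n → Ω' → ℝ),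
      (∀ k, Measurable (ξ k)) ∧
      (∀ k ω', ξ k ω' = a k ∨ ξ k ω' = b k) ∧
      (∀ k, ∫ ω', ξ k ω' ∂μ' = 0) ∧
      (∀ S : Finset (Fin n), S.card ≤ d →
        iIndepFun (m := fun _ => Real.measurableSpace) (fun i : S => ξ i) μ') ∧
      ∫ ω, G (fun k => φ k ω) ∂μ ≤
        (1 + ∑ A ∈ Finset.univ.filter
              (fun A : Finset (Fin n) => A.Nonempty ∧ A.card ≤ d),
            (∏ j ∈ A, (min (-(a j)) (b j))⁻¹) * |∫ ω, ∏ j ∈ A, φ j ω ∂μ|) *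
          ∫ ω', G (fun k => ξ k ω') ∂μ' := by
  have hab : ∀ k, a k < b k := fun k => (ha k).trans (hb k)
  have hφ : ∀ᵐ ω ∂μ, ∀ k, φ k ω ∈ Set.Icc (a k) (b k) := ae_all_iff.2 hbound
  set I := Finset.univ.filter fun A : Finset (Fin n) => A.Nonempty ∧ A.card ≤ d
  have hI : ∅ ∉ I := by simp [I]
  set ρ := cubeLaw μ a b φ
  have hρ : ∀ B, cubeMoment a b B ρ = ∫ ω, ∏ j ∈ B, φ j ω ∂μ :=
    cubeMoment_cubeLaw hφmeas hφ fun k => (hab k).ne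
  set ν := correction a b I ρ
  have h0 : ∀ ε, 0 ≤ ν ε := correction_nonneg ha hb (cubeLaw_nonneg hφ)
  have h1 : ∑ ε, ν ε = 1 := by
    rw [← cubeMoment_empty]
    exact cubeMoment_correction_empty ha hb hI (by simp [hρ])
  have hνI : ∀ B ∈ I, cubeMoment a b B ν = 0 := fun B hB =>
    cubeMoment_correction_of_mem (fun k => (hab k).ne) hB hI
  refine ⟨Fin n → Bool, inferInstance, (pmfOfReal ν h0 h1).toMeasure, inferInstance,
    fun k ε => vertex a b ε k, fun k => ?_, fun k ε => twoPoint_eq_or _, fun k => ?_,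
    fun S hS => ?_, ?_⟩
  · exact Measurable.of_discrete.comp (measurable_pi_apply k)
  · simpa [integral_pmfOfReal, cubeMoment_apply] using hνI {k} (by simpa [I, Nat.one_le_iff_ne_zero] using hd.ne')
  · refine (iIndepFun_eval_of_cubeMoment_eq_zero (fun k => (hab k).ne) h0 h1
      fun B hB hne => hνI B ?_).comp (fun i => twoPoint (a i) (b i)) fun _ => .of_discrete
    simp [I, hne, (card_le_card hB).trans hS]
  · rw [integral_pmfOfReal]
    calc ∫ ω, G (fun k => φ k ω) ∂μ ≤ ∑ ε, ρ ε * G (vertex a b ε) :=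
          integral_le_sum_cubeLaw_mul hφmeas hφ hab hG0 hGconv
      _ ≤ (1 + errorWeight a b I ρ) * ∑ ε, ν ε * G (vertex a b ε) :=
          sum_mul_le_one_add_errorWeight_mul_sum_correction_mul ha hb fun _ => hG0 _
      _ = _ := by simp only [errorWeight, hρ]

/-- Theorem 1 of the paper. Let `φ = (φ_1, …, φ_n)` be random variables with
`A_k ≤ φ_k ≤ B_k` a.s., `A_k < 0 < B_k`, `d ≤ n` a positive integer, and `G : ℝⁿ → [0,∞)`
convex in each variable separately. Then there exist `{A_k, B_k}`-valued, mean-zero,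
`d`-independent random variables `ξ_k` on some probability space with
`E[G(φ)] ≤ (1 + μ_d(φ)) E[G(ξ)]`, where
`μ_d(φ) = ∑_{∅ ≠ A ⊆ {1,…,n}, #A ≤ d} (∏_{j∈A} C_j⁻¹) |E[∏_{j∈A} φ_j]|`, `C_j = min{-A_j, B_j}`. -/
theorem extreme_inequality_convex_multivariate
    {Ω : Type*} [MeasurableSpace Ω] (μ : Measure Ω) [IsProbabilityMeasure μ]
    (n d : ℕ) (hd : 0 < d) (hdn : d ≤ n)
    (φ : Fin n → Ω → ℝ) (hφmeas : ∀ k, Measurable (φ k))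
    (a b : Fin n → ℝ) (ha : ∀ k, a k < 0) (hb : ∀ k, 0 < b k)
    (hbound : ∀ k, ∀ᵐ ω ∂μ, a k ≤ φ k ω ∧ φ k ω ≤ b k)
    (G : (Fin n → ℝ) → ℝ) (hG0 : ∀ t, 0 ≤ G t)
    (hGconv : ∀ (k : Fin n) (x : Fin n → ℝ),
      ConvexOn ℝ Set.univ (fun t : ℝ => G (Function.update x k t))) :
    ∃ (Ω' : Type) (_ : MeasurableSpace Ω') (μ' : Measure Ω')
      (_ : IsProbabilityMeasure μ') (ξ : Fin n → Ω' → ℝ),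
      (∀ k, Measurable (ξ k)) ∧
      (∀ k ω', ξ k ω' = a k ∨ ξ k ω' = b k) ∧
      (∀ k, ∫ ω', ξ k ω' ∂μ' = 0) ∧
      (∀ S : Finset (Fin n), S.card ≤ d →
        iIndepFun (m := fun _ => Real.measurableSpace) (fun i : S => ξ i) μ') ∧
      ∫ ω, G (fun k => φ k ω) ∂μ ≤
        (1 + ∑ A ∈ Finset.univ.filter
              (fun A : Finset (Fin n) => A.Nonempty ∧ A.card ≤ d),
            (∏ j ∈ A, (min (-(a j)) (b j))⁻¹) * |∫ ω, ∏ j ∈ A, φ j ω ∂μ|) *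
          ∫ ω', G (fun k => ξ k ω') ∂μ' :=
  extreme_inequality_convex_multivariate_general μ n d hd φ hφmeas a b ha hb hbound G hG0 hGconv
end

section
/- Let φ = (φ_1, …, φ_n) be random variables with ‖φ_k‖_∞ ≤ 1 for every k, let d ≤ n be a positive integer, and let G : ℝ^n → [0, ∞) be convex in each variable separately. Then there exist a probability space and random variables r_1, …, r_n on it such that each r_k takes only the values −1 and +1 with mean zero, any d of the r_k are mutually independent, and E[G(φ_1, …, φ_n)] ≤ (1 + μ_d(φ)) · E[G(r_1, …, r_n)]. In particular, when d = n the r_k may be taken to be independent Rademacher random variables. -/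
/-!
Separate convexity in each of the `n` coordinates bounds `G x`, for `x ∈ [-1, 1]ⁿ`, by the
multilinear interpolation of `G` from the vertices of the cube, with weights
`∏ₖ (1 + εₖ xₖ) / 2`. Taking expectations, `E G(φ) ≤ ∑_ε w(ε) G(ε)`, where `w` is the
distribution of "φ rounded to a vertex", whose Walsh coefficients are the moments
`m_B = E ∏_{j ∈ B} φ_j`. Now let `q` be the weight on the cube whose Walsh coefficients are
`1` at `∅`, `0` at levels `1, …, d` and `m_B / M` above level `d`, where `M = 1 + μ_d(φ)`.
Then `M q - w` has Walsh expansion `2⁻ⁿ (M - ∑_{#B ≤ d} m_B χ_B)`, which is nonnegative,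
so `q ≥ 0` and `E G(φ) ≤ M ∑_ε q(ε) G(ε)`. Vanishing of the Walsh coefficients of `q` at levels
`1, …, d` says exactly that the coordinates of a `q`-distributed vertex are `d`-wise independent
Rademacher variables.
-/

open MeasureTheory ProbabilityTheory Finset

lemma ConvexOn.le_of_abs_le_one {g : ℝ → ℝ} (hg : ConvexOn ℝ (Set.Icc (-1) 1) g) {t : ℝ}
    (ht : |t| ≤ 1) : g t ≤ (1 + t) / 2 * g 1 + (1 - t) / 2 * g (-1) := by
  obtain ⟨ht₁, ht₂⟩ := abs_le.1 ht
  have h := hg.2 (show (1 : ℝ) ∈ Set.Icc (-1) 1 by norm_num)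
    (show (-1 : ℝ) ∈ Set.Icc (-1) 1 by norm_num)
    (show 0 ≤ (1 + t) / 2 by linarith) (show 0 ≤ (1 - t) / 2 by linarith) (by ring)
  rwa [smul_eq_mul, smul_eq_mul, show (1 + t) / 2 * 1 + (1 - t) / 2 * -1 = t by ring] at h

lemma integrable_finset_prod_of_abs_le_one {ι Ω : Type*} [MeasurableSpace Ω] {μ : Measure Ω}
    [IsFiniteMeasure μ] {φ : ι → Ω → ℝ} (hφ : ∀ k, AEStronglyMeasurable (φ k) μ)
    (hbound : ∀ᵐ ω ∂μ, ∀ k, |φ k ω| ≤ 1) (B : Finset ι) :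
    Integrable (fun ω => ∏ j ∈ B, φ j ω) μ := by
  refine .of_bound (aestronglyMeasurable_fun_prod B fun j _ => hφ j) 1 ?_
  filter_upwards [hbound] with ω hω
  rw [Real.norm_eq_abs, abs_prod]
  exact prod_le_one (fun j _ => abs_nonneg _) fun j _ => hω j

lemma sum_card_le_eq_add_sum_nonempty {ι β : Type*} [DecidableEq ι] [Fintype ι] [AddCommMonoid β]
    (f : Finset ι → β) (d : ℕ) :
    ∑ B with B.card ≤ d, f B = f ∅ + ∑ B with B.Nonempty ∧ B.card ≤ d, f B := by
  rw [← add_sum_erase _ _ (a := ∅) (mem_filter.2 ⟨mem_univ _, by simp⟩)]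
  congr 2
  ext B
  simp [nonempty_iff_ne_empty]

namespace BooleanCube

variable {ι : Type*} [DecidableEq ι]

def signVec (A : Finset ι) (i : ι) : ℝ := if i ∈ A then 1 else -1

lemma signVec_eq_neg_one_or_one (A : Finset ι) (i : ι) : signVec A i = -1 ∨ signVec A i = 1 := by
  unfold signVec; split_ifs <;> simp

lemma signVec_mul_self (A : Finset ι) (i : ι) : signVec A i * signVec A i = 1 := by
  unfold signVec; split_ifs <;> norm_num

lemma abs_signVec (A : Finset ι) (i : ι) : |signVec A i| = 1 := by
  unfold signVec; split_ifs <;> norm_num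

lemma signVec_of_mem {A : Finset ι} {i : ι} (h : i ∈ A) : signVec A i = 1 := if_pos h

lemma signVec_of_notMem {A : Finset ι} {i : ι} (h : i ∉ A) : signVec A i = -1 := if_neg h

lemma signVec_insert_of_ne (A : Finset ι) {i j : ι} (h : i ≠ j) :
    signVec (insert j A) i = signVec A i := by
  simp [signVec, h]

lemma one_add_signVec_mul_nonneg {x : ℝ} (hx : |x| ≤ 1) (A : Finset ι) (i : ι) :
    0 ≤ 1 + signVec A i * x := by
  have := neg_abs_le (signVec A i * x)
  rw [abs_mul, abs_signVec, one_mul] at this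
  linarith

lemma apply_signVec_eq (f : ℝ → ℝ) (A : Finset ι) (i : ι) :
    f (signVec A i) = (f 1 - f (-1)) / 2 * signVec A i + (f 1 + f (-1)) / 2 := by
  unfold signVec; split_ifs <;> ring

lemma signVec_symmDiff_singleton (A : Finset ι) (i j : ι) :
    signVec (symmDiff A {j}) i = if i = j then -signVec A i else signVec A i := by
  unfold signVec
  by_cases hij : i = j
  · subst hij; by_cases hiA : i ∈ A <;> simp [mem_symmDiff, hiA]
  · simp [mem_symmDiff, hij]

def walsh (C A : Finset ι) : ℝ := ∏ j ∈ C, signVec A j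

lemma abs_walsh (C A : Finset ι) : |walsh C A| = 1 := by
  simp [walsh, abs_prod, abs_signVec]

lemma walsh_mul_walsh (B C A : Finset ι) : walsh B A * walsh C A = walsh (symmDiff B C) A := by
  have hsq : walsh (B ∩ C) A * walsh (B ∩ C) A = 1 := by
    simp [walsh, ← prod_mul_distrib, signVec_mul_self]
  have hunion : walsh (B ∪ C) A = walsh (symmDiff B C) A * walsh (B ∩ C) A := by
    rw [walsh, show B ∪ C = symmDiff B C ∪ B ∩ C from (symmDiff_sup_inf B C).symm]
    exact prod_union (disjoint_symmDiff_inf B C)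
  calc walsh B A * walsh C A = walsh (B ∪ C) A * walsh (B ∩ C) A :=
        (prod_union_inter).symm
    _ = walsh (symmDiff B C) A := by rw [hunion, mul_assoc, hsq, mul_one]

-- Flipping a coordinate of `C` changes the sign of `walsh C`, and flipping is a bijection.
lemma sum_walsh [Fintype ι] (C : Finset ι) :
    ∑ A, walsh C A = if C = ∅ then (2 : ℝ) ^ Fintype.card ι else 0 := by
  split_ifs with hC
  · simp [hC, walsh, Fintype.card_finset]
  obtain ⟨j, hj⟩ := nonempty_iff_ne_empty.2 hC
  have hflip : ∀ A, walsh C (symmDiff A {j}) = -walsh C A := fun A => by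
    rw [walsh, walsh, ← mul_prod_erase C _ hj, ← mul_prod_erase C _ hj,
      signVec_symmDiff_singleton, if_pos rfl,
      prod_congr rfl fun i hi => by rw [signVec_symmDiff_singleton, if_neg (ne_of_mem_erase hi)]]
    ring
  have := Equiv.sum_comp (Function.Involutive.toPerm _ (symmDiff_left_involutive {j})) (walsh C)
  simp only [Function.Involutive.coe_toPerm, hflip, sum_neg_distrib] at this
  linarith

lemma sum_walsh_mul_walsh [Fintype ι] (B C : Finset ι) :
    ∑ A, walsh B A * walsh C A = if B = C then (2 : ℝ) ^ Fintype.card ι else 0 := by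
  simp only [walsh_mul_walsh, sum_walsh, ← bot_eq_empty, symmDiff_eq_bot]

section Interpolation

variable (G : (ι → ℝ) → ℝ) {x : ι → ℝ}

lemma le_sum_powerset_mul_piecewise
    (hG : ∀ k y, ConvexOn ℝ Set.univ (fun t : ℝ => G (Function.update y k t)))
    (hx : ∀ k, |x k| ≤ 1) (s : Finset ι) :
    G x ≤ ∑ A ∈ s.powerset,
      (∏ k ∈ s, (1 + signVec A k * x k) / 2) * G (s.piecewise (signVec A) x) := by
  induction s using Finset.induction_on with
  | empty => simp
  | @insert j s hj ih =>
    -- Convexity in coordinate `j` at the partially rounded point `y` splits the term of `A`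
    -- into those of `A` and `insert j A`.
    refine ih.trans ?_
    rw [sum_powerset_insert hj, ← sum_add_distrib]
    refine sum_le_sum fun A hA => ?_
    have hjA : j ∉ A := fun h => hj (mem_powerset.1 hA h)
    set y := s.piecewise (signVec A) x
    set P := ∏ k ∈ s, (1 + signVec A k * x k) / 2
    have hyj : y j = x j := piecewise_eq_of_notMem _ _ _ hj
    have hP : ∏ k ∈ s, (1 + signVec (insert j A) k * x k) / 2 = P :=
      prod_congr rfl fun k hk => by rw [signVec_insert_of_ne A (ne_of_mem_of_not_mem hk hj)]
    have hy : s.piecewise (signVec (insert j A)) x = y :=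
      piecewise_congr _ (fun k hk => signVec_insert_of_ne A (ne_of_mem_of_not_mem hk hj))
        fun _ _ => rfl
    have hconv := ((hG j y).subset (Set.subset_univ _) (convex_Icc _ _)).le_of_abs_le_one (hx j)
    rw [← hyj, Function.update_eq_self, hyj] at hconv
    rw [prod_insert hj, prod_insert hj, piecewise_insert,
      piecewise_insert, hP, hy, signVec_of_notMem hjA, signVec_of_mem (mem_insert_self j A)]
    have hP0 : 0 ≤ P := prod_nonneg fun k _ => by
      have := one_add_signVec_mul_nonneg (hx k) A k; positivity
    nlinarith [mul_le_mul_of_nonneg_left hconv hP0]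

variable [Fintype ι]

noncomputable def cubeWeight (x : ι → ℝ) (A : Finset ι) : ℝ := ∏ k, (1 + signVec A k * x k) / 2

lemma cubeWeight_nonneg (hx : ∀ k, |x k| ≤ 1) (A : Finset ι) : 0 ≤ cubeWeight x A :=
  prod_nonneg fun k _ => div_nonneg (one_add_signVec_mul_nonneg (hx k) A k) zero_le_two

lemma cubeWeight_eq_sum_walsh (x : ι → ℝ) (A : Finset ι) :
    cubeWeight x A = (2 ^ Fintype.card ι)⁻¹ * ∑ B, walsh B A * ∏ j ∈ B, x j := by
  rw [cubeWeight, prod_div_distrib, prod_const, card_univ, div_eq_inv_mul]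
  congr 1
  simp_rw [add_comm (1 : ℝ), prod_add, prod_const_one, mul_one,
    powerset_univ, walsh, prod_mul_distrib]

lemma le_sum_cubeWeight_mul
    (hG : ∀ k y, ConvexOn ℝ Set.univ (fun t : ℝ => G (Function.update y k t)))
    (hx : ∀ k, |x k| ≤ 1) : G x ≤ ∑ A, cubeWeight x A * G (signVec A) := by
  simpa only [cubeWeight, powerset_univ, piecewise_univ] using
    le_sum_powerset_mul_piecewise G hG hx univ

end Interpolation

section DWiseUniform

variable [Fintype ι] {d : ℕ} {q : Finset ι → ℝ}

def IsDWiseUniform (d : ℕ) (q : Finset ι → ℝ) : Prop :=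
  ∀ C : Finset ι, C.card ≤ d → ∑ A, walsh C A * q A = if C = ∅ then 1 else 0

lemma IsDWiseUniform.sum_eq_one (hq : IsDWiseUniform d q) : ∑ A, q A = 1 := by
  simpa [walsh] using hq ∅ (by simp)

-- Expand each factor in the Walsh basis: only the constant term survives the averaging.
lemma IsDWiseUniform.sum_mul_prod_apply_signVec (hq : IsDWiseUniform d q) {κ : Type*}
    [DecidableEq κ] {e : κ → ι} (he : Function.Injective e) {t : Finset κ} (ht : t.card ≤ d)
    (f : κ → ℝ → ℝ) :
    ∑ A, q A * ∏ i ∈ t, f i (signVec A (e i)) = ∏ i ∈ t, (f i 1 + f i (-1)) / 2 := by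
  have hexpand : ∀ A, ∏ i ∈ t, f i (signVec A (e i)) = ∑ C ∈ t.powerset,
      (∏ i ∈ C, (f i 1 - f i (-1)) / 2) * (∏ i ∈ t \ C, (f i 1 + f i (-1)) / 2) *
        walsh (C.map ⟨e, he⟩) A := fun A => by
    simp_rw [apply_signVec_eq (f _), prod_add, walsh, prod_map, prod_mul_distrib]
    exact sum_congr rfl fun C _ => by simp only [Function.Embedding.coeFn_mk]; ring
  simp_rw [hexpand, mul_sum, ← sum_comm (s := t.powerset)]
  rw [sum_eq_single_of_mem ∅ (empty_mem_powerset t)]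
  · simp only [prod_empty, one_mul, sdiff_empty, map_empty, walsh, mul_one]
    rw [← sum_mul, hq.sum_eq_one, one_mul]
  · intro C hC hC0
    have hcard : (C.map ⟨e, he⟩).card ≤ d :=
      (card_map _).le.trans ((card_le_card (mem_powerset.1 hC)).trans ht)
    have := hq _ hcard
    rw [if_neg (by simpa using hC0)] at this
    simp_rw [mul_comm (q _), mul_assoc, ← mul_sum, this, mul_zero]

noncomputable def tailWeight (d : ℕ) (M : ℝ) (m : Finset ι → ℝ) (A : Finset ι) : ℝ :=
  (2 ^ Fintype.card ι)⁻¹ * (1 + (∑ B with d < B.card, walsh B A * m B) / M)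

lemma isDWiseUniform_tailWeight (d : ℕ) (M : ℝ) (m : Finset ι → ℝ) :
    IsDWiseUniform d (tailWeight d M m) := by
  intro C hC
  have hhigh : ∑ A, walsh C A * ∑ B with d < B.card, walsh B A * m B = 0 := by
    simp_rw [mul_sum, ← mul_assoc]
    rw [sum_comm]
    refine sum_eq_zero fun B hB => ?_
    have hCB : C ≠ B := fun h => by
      subst h; rw [mem_filter] at hB; omega
    rw [← sum_mul, sum_walsh_mul_walsh, if_neg hCB, zero_mul]
  have hpow : (2 : ℝ) ^ Fintype.card ι ≠ 0 := by positivity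
  simp only [tailWeight, mul_add, mul_one, sum_add_distrib]
  simp_rw [mul_left_comm (walsh C _), ← mul_sum, mul_div, ← sum_div, hhigh]
  rw [zero_div, mul_zero, add_zero, ← sum_mul, sum_walsh]
  split_ifs <;> simp [hpow]

lemma inv_pow_mul_sum_walsh_mul_le_mul_tailWeight {d : ℕ} {M : ℝ} {m : Finset ι → ℝ}
    (hM : ∑ B with B.card ≤ d, |m B| ≤ M) (hM0 : 0 < M) (A : Finset ι) :
    (2 ^ Fintype.card ι)⁻¹ * ∑ B, walsh B A * m B ≤ M * tailWeight d M m A := by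
  have hlow : ∑ B with B.card ≤ d, walsh B A * m B ≤ M :=
    (sum_le_sum fun B _ => (le_abs_self _).trans (by rw [abs_mul, abs_walsh, one_mul])).trans hM
  have hsplit := sum_filter_add_sum_filter_not univ (fun B : Finset ι => B.card ≤ d)
    (fun B => walsh B A * m B)
  simp only [not_le] at hsplit
  rw [tailWeight, ← hsplit, mul_left_comm M, mul_add M, mul_one, mul_div_cancel₀ _ hM0.ne']
  gcongr

end DWiseUniform

section Measure

variable [Fintype ι] {d : ℕ} {q : Finset ι → ℝ}

noncomputable def IsDWiseUniform.toMeasure (hq : IsDWiseUniform d q) (hq0 : ∀ A, 0 ≤ q A) :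
    Measure (Finset ι) :=
  PMF.toMeasure <| PMF.ofFintype (fun A => ENNReal.ofReal (q A)) <| by
    rw [← ENNReal.ofReal_sum_of_nonneg fun A _ => hq0 A, hq.sum_eq_one, ENNReal.ofReal_one]

variable (hq : IsDWiseUniform d q) (hq0 : ∀ A, 0 ≤ q A)

instance IsDWiseUniform.isProbabilityMeasure_toMeasure :
    IsProbabilityMeasure (hq.toMeasure hq0) := by
  unfold IsDWiseUniform.toMeasure; infer_instance

lemma IsDWiseUniform.integral_toMeasure (f : Finset ι → ℝ) :
    ∫ A, f A ∂hq.toMeasure hq0 = ∑ A, q A * f A := by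
  simp [IsDWiseUniform.toMeasure, PMF.integral_eq_sum, PMF.ofFintype_apply,
    ENNReal.toReal_ofReal (hq0 _)]

lemma IsDWiseUniform.toMeasure_apply (E : Set (Finset ι)) :
    hq.toMeasure hq0 E = ENNReal.ofReal (∑ A, q A * E.indicator 1 A) := by
  rw [← hq.integral_toMeasure hq0, integral_indicator_one MeasurableSet.of_discrete,
    ofReal_measureReal]

lemma IsDWiseUniform.toMeasure_setOf_forall_signVec_mem {κ : Type*} [DecidableEq κ]
    {e : κ → ι} (he : Function.Injective e) {t : Finset κ} (ht : t.card ≤ d) (E : κ → Set ℝ) :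
    hq.toMeasure hq0 {A | ∀ i ∈ t, signVec A (e i) ∈ E i} =
      ∏ i ∈ t, ENNReal.ofReal (((E i).indicator 1 1 + (E i).indicator 1 (-1)) / 2) := by
  rw [toMeasure_apply, ← ENNReal.ofReal_prod_of_nonneg fun i _ => by
      have := Set.indicator_nonneg (fun _ _ => zero_le_one) (s := E i) (f := (1 : ℝ → ℝ))
      exact div_nonneg (add_nonneg (this 1) (this (-1))) zero_le_two,
    ← hq.sum_mul_prod_apply_signVec he ht fun i => (E i).indicator 1]
  refine congrArg ENNReal.ofReal (sum_congr rfl fun A _ => ?_)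
  classical
  simp only [Set.indicator_apply, Set.mem_ofPred_eq, Pi.one_apply, prod_boole]

lemma IsDWiseUniform.toMeasure_signVec_mem (hd : 0 < d) (i : ι) (E : Set ℝ) :
    hq.toMeasure hq0 {A | signVec A i ∈ E} =
      ENNReal.ofReal ((E.indicator 1 1 + E.indicator 1 (-1)) / 2) := by
  simpa using hq.toMeasure_setOf_forall_signVec_mem hq0 Function.injective_id
    (t := {i}) (by rw [card_singleton]; exact hd) fun _ => E

lemma IsDWiseUniform.integral_signVec (hd : 0 < d) (i : ι) :
    ∫ A, signVec A i ∂hq.toMeasure hq0 = 0 := by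
  simpa [hq.integral_toMeasure hq0, walsh, mul_comm] using
    hq {i} (by rw [card_singleton]; exact hd)

lemma IsDWiseUniform.iIndepFun_signVec {S : Finset ι} (hS : S.card ≤ d) :
    iIndepFun (fun (i : S) (A : Finset ι) => signVec A i) (hq.toMeasure hq0) := by
  rw [iIndepFun_iff_measure_inter_preimage_eq_mul]
  intro t E _
  have ht : t.card ≤ d := (card_le_univ t).trans (by simpa using hS)
  convert hq.toMeasure_setOf_forall_signVec_mem hq0 Subtype.val_injective ht E using 1
  · congr 1 with A; simp
  · refine prod_congr rfl fun i hi => ?_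
    exact hq.toMeasure_signVec_mem hq0 ((card_pos.2 ⟨i, hi⟩).trans_le ht) i (E i)

end Measure

section Integral

variable [Fintype ι] {Ω : Type*} [MeasurableSpace Ω] {μ : Measure Ω} [IsFiniteMeasure μ]
  {φ : ι → Ω → ℝ}

lemma integrable_cubeWeight (hφ : ∀ k, AEStronglyMeasurable (φ k) μ)
    (hbound : ∀ᵐ ω ∂μ, ∀ k, |φ k ω| ≤ 1) (A : Finset ι) :
    Integrable (fun ω => cubeWeight (φ · ω) A) μ := by
  simp_rw [cubeWeight_eq_sum_walsh]
  exact (integrable_finsetSum _ fun B _ =>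
    (integrable_finset_prod_of_abs_le_one hφ hbound B).const_mul _).const_mul _

lemma integral_cubeWeight (hφ : ∀ k, AEStronglyMeasurable (φ k) μ)
    (hbound : ∀ᵐ ω ∂μ, ∀ k, |φ k ω| ≤ 1) (A : Finset ι) :
    ∫ ω, cubeWeight (φ · ω) A ∂μ =
      (2 ^ Fintype.card ι)⁻¹ * ∑ B, walsh B A * ∫ ω, ∏ j ∈ B, φ j ω ∂μ := by
  simp_rw [cubeWeight_eq_sum_walsh, integral_const_mul]
  rw [integral_finsetSum _ fun B _ =>
    (integrable_finset_prod_of_abs_le_one hφ hbound B).const_mul _]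
  simp_rw [integral_const_mul]

lemma integral_le_sum_integral_cubeWeight_mul (hφ : ∀ k, AEStronglyMeasurable (φ k) μ)
    (hbound : ∀ᵐ ω ∂μ, ∀ k, |φ k ω| ≤ 1) (G : (ι → ℝ) → ℝ) (hG0 : ∀ x, 0 ≤ G x)
    (hG : ∀ k y, ConvexOn ℝ Set.univ (fun t : ℝ => G (Function.update y k t))) :
    ∫ ω, G (φ · ω) ∂μ ≤ ∑ A, (∫ ω, cubeWeight (φ · ω) A ∂μ) * G (signVec A) := by
  have hint : ∀ A, Integrable (fun ω => cubeWeight (φ · ω) A * G (signVec A)) μ := fun A =>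
    (integrable_cubeWeight hφ hbound A).mul_const _
  simp_rw [← integral_mul_const]
  rw [← integral_finsetSum _ fun A _ => hint A]
  refine integral_mono_of_nonneg (.of_forall fun ω => hG0 _)
    (integrable_finsetSum _ fun A _ => hint A) ?_
  filter_upwards [hbound] with ω hω
  exact le_sum_cubeWeight_mul G hG hω

end Integral

end BooleanCube

open BooleanCube

theorem extreme_inequality_convex_multivariate_rademacher_general
    {Ω : Type*} [MeasurableSpace Ω] (μ : Measure Ω) [IsProbabilityMeasure μ]
    (n d : ℕ) (hd : 0 < d)
    (φ : Fin n → Ω → ℝ) (hφmeas : ∀ k, Measurable (φ k))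
    (hbound : ∀ k, ∀ᵐ ω ∂μ, |φ k ω| ≤ 1)
    (G : (Fin n → ℝ) → ℝ) (hG0 : ∀ t, 0 ≤ G t)
    (hGconv : ∀ (k : Fin n) (x : Fin n → ℝ),
      ConvexOn ℝ Set.univ (fun t : ℝ => G (Function.update x k t))) :
    ∃ (Ω' : Type) (_ : MeasurableSpace Ω') (μ' : Measure Ω')
      (_ : IsProbabilityMeasure μ') (r : Fin n → Ω' → ℝ),
      (∀ k, Measurable (r k)) ∧
      (∀ k ω', r k ω' = -1 ∨ r k ω' = 1) ∧
      (∀ k, μ' {ω' | r k ω' = 1} = 1/2) ∧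
      (∀ k, ∫ ω', r k ω' ∂μ' = 0) ∧
      (∀ S : Finset (Fin n), S.card ≤ d →
        iIndepFun (fun i : S => r i) μ') ∧
      ∫ ω, G (fun k => φ k ω) ∂μ ≤
        (1 + ∑ A ∈ Finset.univ.filter
              (fun A : Finset (Fin n) => A.Nonempty ∧ A.card ≤ d),
            |∫ ω, ∏ j ∈ A, φ j ω ∂μ|) *
          ∫ ω', G (fun k => r k ω') ∂μ' := by
  have hφ k := (hφmeas k).aestronglyMeasurable (μ := μ)
  have hbound_all := ae_all_iff.2 hbound
  set m : Finset (Fin n) → ℝ := fun B => ∫ ω, ∏ j ∈ B, φ j ω ∂μ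
  set M := ∑ B with B.card ≤ d, |m B|
  have hM : M = 1 + ∑ B with B.Nonempty ∧ B.card ≤ d, |m B| := by
    simp [M, sum_card_le_eq_add_sum_nonempty, m]
  have hM0 : 0 < M := by rw [hM]; positivity
  have hq := isDWiseUniform_tailWeight d M m
  have hw A : ∫ ω, cubeWeight (φ · ω) A ∂μ ≤ M * tailWeight d M m A := by
    rw [integral_cubeWeight hφ hbound_all]
    exact inv_pow_mul_sum_walsh_mul_le_mul_tailWeight le_rfl hM0 A
  have hq0 A : 0 ≤ tailWeight d M m A := by
    refine nonneg_of_mul_nonneg_right (le_trans ?_ (hw A)) hM0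
    exact integral_nonneg_of_ae (hbound_all.mono fun ω hω => cubeWeight_nonneg hω A)
  refine ⟨Finset (Fin n), inferInstance, hq.toMeasure hq0, inferInstance, fun k A => signVec A k,
    fun k => .of_discrete, fun k A => signVec_eq_neg_one_or_one A k, fun k => ?_,
    hq.integral_signVec hq0 hd, fun S hS => hq.iIndepFun_signVec hq0 hS, ?_⟩
  · refine (hq.toMeasure_signVec_mem hq0 hd k {1}).trans ?_
    norm_num [Set.indicator_apply, ENNReal.ofReal_div_of_pos]
  rw [← hM, hq.integral_toMeasure, mul_sum]
  calc ∫ ω, G (φ · ω) ∂μ ≤ ∑ A, (∫ ω, cubeWeight (φ · ω) A ∂μ) * G (signVec A) :=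
        integral_le_sum_integral_cubeWeight_mul hφ hbound_all G hG0 hGconv
    _ ≤ ∑ A, M * (tailWeight d M m A * G (signVec A)) := sum_le_sum fun A _ => by
        rw [← mul_assoc]; exact mul_le_mul_of_nonneg_right (hw A) (hG0 _)

/-- Corollary 1 of the paper. If `‖φ_k‖_∞ ≤ 1` and `G : ℝⁿ → [0,∞)` is convex
in each variable separately, then there exist `d`-independent Rademacher random variables
`r_1, …, r_n` (each `{-1,1}`-valued with mean zero, i.e. taking each value with probability 1/2)
on some probability space such that `E[G(φ)] ≤ (1 + μ_d(φ)) E[G(r)]`, with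
`μ_d(φ) = ∑_{∅ ≠ A ⊆ {1,…,n}, #A ≤ d} |E[∏_{j∈A} φ_j]|`. -/
theorem extreme_inequality_convex_multivariate_rademacher
    {Ω : Type*} [MeasurableSpace Ω] (μ : Measure Ω) [IsProbabilityMeasure μ]
    (n d : ℕ) (hd : 0 < d) (hdn : d ≤ n)
    (φ : Fin n → Ω → ℝ) (hφmeas : ∀ k, Measurable (φ k))
    (hbound : ∀ k, ∀ᵐ ω ∂μ, |φ k ω| ≤ 1)
    (G : (Fin n → ℝ) → ℝ) (hG0 : ∀ t, 0 ≤ G t)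
    (hGconv : ∀ (k : Fin n) (x : Fin n → ℝ),
      ConvexOn ℝ Set.univ (fun t : ℝ => G (Function.update x k t))) :
    ∃ (Ω' : Type) (_ : MeasurableSpace Ω') (μ' : Measure Ω')
      (_ : IsProbabilityMeasure μ') (r : Fin n → Ω' → ℝ),
      (∀ k, Measurable (r k)) ∧
      (∀ k ω', r k ω' = -1 ∨ r k ω' = 1) ∧
      (∀ k, μ' {ω' | r k ω' = 1} = 1/2) ∧
      (∀ k, ∫ ω', r k ω' ∂μ' = 0) ∧
      (∀ S : Finset (Fin n), S.card ≤ d →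
        iIndepFun (fun i : S => r i) μ') ∧
      ∫ ω, G (fun k => φ k ω) ∂μ ≤
        (1 + ∑ A ∈ Finset.univ.filter
              (fun A : Finset (Fin n) => A.Nonempty ∧ A.card ≤ d),
            |∫ ω, ∏ j ∈ A, φ j ω ∂μ|) *
          ∫ ω', G (fun k => r k ω') ∂μ' :=
  extreme_inequality_convex_multivariate_rademacher_general μ n d hd φ hφmeas hbound G hG0 hGconv
end

section
/- Let φ_1, …, φ_n be measurable functions on [0,1) (with Lebesgue measure) satisfying A_k ≤ φ_k(x) ≤ B_k with A_k < 0 < B_k, and let M be an arbitrary family of nonempty subsets of {1, …, n}. Set μ = Σ_{A∈M} (∏_{j∈A} C_j^{−1}) · |∫_0^1 ∏_{j∈A} φ_j|, where C_k = min{−A_k, B_k}, and assume μ < ∞. Then the functions φ_k can be extended to measurable functions on [0, 1+μ) so that A_k ≤ φ_k(x) ≤ B_k for all x ∈ [0, 1+μ), ∫_0^{1+μ} ∏_{j∈A} φ_j = 0 for every A ∈ M, and each φ_k restricted to [1, 1+μ) is a step function. -/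
/-!
For each `A ∈ M` a block of length `(∏ j ∈ A, C_j⁻¹) |I_A|`, where `I_A = ∫ ∏ j ∈ A, φ_j`, is
appended to the right of the current interval. The block is cut into `2 ^ n` equal pieces; on the
piece with index `t`, `φ_k = ±C_k` for `k ∈ A`, the signs being the bits of `t` with one of them
corrected so that their product over `A` is `-sign I_A`, and `φ_k = 0` for `k ∉ A`. Then
`∏ j ∈ A, φ_j = -sign(I_A) ∏ j ∈ A, C_j` on the whole block, which cancels `I_A`. For `B ≠ A` the
block adds nothing to `∫ ∏ j ∈ B, φ_j`: some factor vanishes if `B ⊄ A`, and the signs average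
out over the pieces if `B ⊂ A`. So the blocks for the sets of `M` do not interfere, and the
bounds hold since `C_k = min (-A_k) B_k`.
-/

open MeasureTheory

/-- A step function on `[a, b)`: a finite linear combination of indicator functions of
subintervals `[α, β) ⊆ [a, b)`. -/
def IsStepFunction (f : ℝ → ℝ) (a b : ℝ) : Prop :=
  ∃ (m : ℕ) (c : Fin m → ℝ) (α β : Fin m → ℝ),
    (∀ i, a ≤ α i ∧ β i ≤ b) ∧
    ∀ x ∈ Set.Ico a b,
      f x = ∑ i, c i * (Set.Ico (α i) (β i)).indicator (fun _ => (1 : ℝ)) x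

namespace IsStepFunction

variable {f g : ℝ → ℝ} {a b c : ℝ}

lemma of_eqOn (hg : IsStepFunction g a b) (hfg : Set.EqOn f g (Set.Ico a b)) :
    IsStepFunction f a b :=
  let ⟨m, v, α, β, hαβ, hgv⟩ := hg
  ⟨m, v, α, β, hαβ, fun x hx => (hfg hx).trans (hgv x hx)⟩

lemma self (f : ℝ → ℝ) (a : ℝ) : IsStepFunction f a a :=
  ⟨0, Fin.elim0, Fin.elim0, Fin.elim0, fun i => i.elim0,
    fun _ hx => absurd (hx.1.trans_lt hx.2) (lt_irrefl a)⟩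

lemma append (h₁ : IsStepFunction f a b) (h₂ : IsStepFunction f b c) (hab : a ≤ b)
    (hbc : b ≤ c) : IsStepFunction f a c := by
  obtain ⟨m₁, v₁, α₁, β₁, hαβ₁, hf₁⟩ := h₁
  obtain ⟨m₂, v₂, α₂, β₂, hαβ₂, hf₂⟩ := h₂
  refine ⟨m₁ + m₂, Fin.append v₁ v₂, Fin.append α₁ α₂, Fin.append β₁ β₂,
    fun i => ?_, fun x hx => ?_⟩
  · induction i using Fin.addCases with
    | left i =>
      simp only [Fin.append_left]
      exact ⟨(hαβ₁ i).1, (hαβ₁ i).2.trans hbc⟩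
    | right i =>
      simp only [Fin.append_right]
      exact ⟨hab.trans (hαβ₂ i).1, (hαβ₂ i).2⟩
  rw [Fin.sum_univ_add]
  simp only [Fin.append_left, Fin.append_right]
  rcases lt_or_ge x b with hxb | hxb
  · rw [hf₁ x ⟨hx.1, hxb⟩, left_eq_add]
    refine Finset.sum_eq_zero fun i _ => ?_
    rw [Set.indicator_of_notMem fun hi => (hxb.trans_le (hαβ₂ i).1).not_ge hi.1, mul_zero]
  · rw [hf₂ x ⟨hxb, hx.2⟩, right_eq_add]
    refine Finset.sum_eq_zero fun i _ => ?_
    rw [Set.indicator_of_notMem fun hi => (hi.2.trans_le (hαβ₁ i).2).not_ge hxb, mul_zero]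

end IsStepFunction

lemma measurable_indicator_of_measurable_restrict {α β : Type*} [MeasurableSpace α]
    [MeasurableSpace β] [Zero β] {f : α → β} {s : Set α} (hs : MeasurableSet s)
    (hf : Measurable fun x : s => f x) : Measurable (s.indicator f) :=
  measurable_of_restrict_of_restrict_compl hs
    (by convert hf using 1; exact funext fun x => Set.indicator_of_mem x.2 f)
    (by
      convert (measurable_const : Measurable fun _ : (sᶜ : Set α) => (0 : β)) using 1
      exact funext fun x => Set.indicator_of_notMem x.2 f)

namespace ExtensionLemma

open Finset

def bitSign (t i : ℕ) : ℝ := if t.testBit i then -1 else 1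

lemma bitSign_mul_self (t i : ℕ) : bitSign t i * bitSign t i = 1 := by
  unfold bitSign; split_ifs <;> norm_num

lemma abs_bitSign (t i : ℕ) : |bitSign t i| = 1 := by
  unfold bitSign; split_ifs <;> norm_num

lemma bitSign_xor_two_pow (t i j : ℕ) :
    bitSign (t ^^^ 2 ^ j) i = if i = j then -bitSign t i else bitSign t i := by
  unfold bitSign
  rw [Nat.testBit_xor, Nat.testBit_two_pow]
  by_cases h : i = j
  · subst h; cases t.testBit i <;> simp
  · simp [h, Ne.symm h]

lemma sum_range_two_pow_eq_zero_of_xor {f : ℕ → ℝ} {j m : ℕ} (hj : j < m)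
    (hf : ∀ t, f (t ^^^ 2 ^ j) = -f t) : ∑ t ∈ range (2 ^ m), f t = 0 := by
  have hmaps : ∀ t ∈ range (2 ^ m), t ^^^ 2 ^ j ∈ range (2 ^ m) := fun t ht =>
    mem_range.mpr (Nat.xor_lt_two_pow (mem_range.mp ht) (Nat.pow_lt_pow_right one_lt_two hj))
  have hinv : ∀ t, t ^^^ 2 ^ j ^^^ 2 ^ j = t := fun t => by
    rw [Nat.xor_assoc, Nat.xor_self, Nat.xor_zero]
  have hneg : ∑ t ∈ range (2 ^ m), f t = -∑ t ∈ range (2 ^ m), f t := by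
    rw [← sum_neg_distrib]
    exact sum_nbij' (· ^^^ 2 ^ j) (· ^^^ 2 ^ j) hmaps hmaps (fun t _ => hinv t)
      (fun t _ => hinv t) (fun t _ => by rw [← hf, hinv])
  linarith

variable {n : ℕ}

lemma prod_bitSign_xor_of_mem {U : Finset (Fin n)} {j : Fin n} (hj : j ∈ U) (t : ℕ) :
    ∏ i ∈ U, bitSign (t ^^^ 2 ^ (j : ℕ)) i = -∏ i ∈ U, bitSign t i := by
  rw [← mul_prod_erase U _ hj, ← mul_prod_erase U (fun i => bitSign t i) hj,
    bitSign_xor_two_pow, if_pos rfl, neg_mul]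
  congr 2
  refine prod_congr rfl fun i hi => ?_
  rw [bitSign_xor_two_pow, if_neg (Fin.val_ne_of_ne (ne_of_mem_erase hi))]

lemma prod_bitSign_xor_of_notMem {U : Finset (Fin n)} {j : Fin n} (hj : j ∉ U) (t : ℕ) :
    ∏ i ∈ U, bitSign (t ^^^ 2 ^ (j : ℕ)) i = ∏ i ∈ U, bitSign t i := by
  refine prod_congr rfl fun i hi => ?_
  rw [bitSign_xor_two_pow, if_neg (Fin.val_ne_of_ne (ne_of_mem_of_not_mem hi hj))]

lemma prod_bitSign_sq (U : Finset (Fin n)) (t : ℕ) :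
    (∏ i ∈ U, bitSign t i) * ∏ i ∈ U, bitSign t i = 1 := by
  rw [← prod_mul_distrib]
  exact prod_eq_one fun i _ => bitSign_mul_self t i

section SignPattern

def signPattern (A : Finset (Fin n)) (k₀ : Fin n) (s : ℝ) (t : ℕ) (k : Fin n) : ℝ :=
  bitSign t k * if k = k₀ then s * ∏ i ∈ A, bitSign t i else 1

variable {A : Finset (Fin n)} {k₀ : Fin n} {s : ℝ}

lemma prod_signPattern (B : Finset (Fin n)) (t : ℕ) :
    ∏ k ∈ B, signPattern A k₀ s t k =
      (∏ k ∈ B, bitSign t k) * if k₀ ∈ B then s * ∏ i ∈ A, bitSign t i else 1 := by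
  simp only [signPattern]
  rw [prod_mul_distrib, prod_ite_eq']

lemma prod_signPattern_self (hk₀ : k₀ ∈ A) (t : ℕ) : ∏ k ∈ A, signPattern A k₀ s t k = s := by
  rw [prod_signPattern, if_pos hk₀, mul_left_comm, prod_bitSign_sq, mul_one]

lemma sum_prod_signPattern_eq_zero {B : Finset (Fin n)} (hBA : B ⊂ A)
    (hB : B.Nonempty) : ∑ t ∈ range (2 ^ n), ∏ k ∈ B, signPattern A k₀ s t k = 0 := by
  -- flipping a bit of `t` from `A \ B` (if `k₀ ∈ B`), resp. from `B` (if not), negates the summand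
  simp_rw [prod_signPattern]
  by_cases hk₀B : k₀ ∈ B
  · obtain ⟨j, hjA, hjB⟩ := exists_of_ssubset hBA
    refine sum_range_two_pow_eq_zero_of_xor j.isLt fun t => ?_
    rw [if_pos hk₀B, if_pos hk₀B, prod_bitSign_xor_of_notMem hjB, prod_bitSign_xor_of_mem hjA]
    ring
  · obtain ⟨j, hjB⟩ := hB
    refine sum_range_two_pow_eq_zero_of_xor j.isLt fun t => ?_
    rw [if_neg hk₀B, if_neg hk₀B, prod_bitSign_xor_of_mem hjB]
    ring

lemma abs_signPattern_le (hs : |s| ≤ 1) (t : ℕ) (k : Fin n) :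
    |signPattern A k₀ s t k| ≤ 1 := by
  rw [signPattern, abs_mul, abs_bitSign, one_mul]
  split_ifs
  · rw [abs_mul, abs_prod]
    simpa only [abs_bitSign, prod_const_one, mul_one] using hs
  · simp

end SignPattern

section FloorStep

variable {c h : ℝ}

lemma floorPiece_bounds (hh : 0 ≤ h) {t N : ℕ} (ht : t < N) :
    c ≤ c + t * h ∧ c + (t + 1) * h ≤ c + N * h := by
  have htN : (t : ℝ) + 1 ≤ N := by exact_mod_cast ht
  constructor <;> nlinarith

lemma mem_Ico_iff_floor_eq (hh : 0 < h) {x : ℝ} (hx : c ≤ x) (t : ℕ) :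
    x ∈ Set.Ico (c + t * h) (c + (t + 1) * h) ↔ ⌊(x - c) / h⌋₊ = t := by
  rw [Nat.floor_eq_iff (div_nonneg (sub_nonneg.mpr hx) hh.le), le_div_iff₀ hh, div_lt_iff₀ hh,
    Set.mem_Ico]
  constructor <;> rintro ⟨h₁, h₂⟩ <;> constructor <;> linarith

lemma floor_comp_eq_sum_indicator (w : ℕ → ℝ) (hh : 0 ≤ h) {N : ℕ} {x : ℝ}
    (hx : x ∈ Set.Ico c (c + N * h)) :
    w ⌊(x - c) / h⌋₊ = ∑ t ∈ range N,
      w t * (Set.Ico (c + t * h) (c + (t + 1) * h)).indicator (fun _ => (1 : ℝ)) x := by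
  have hpos : 0 < h := by
    refine hh.lt_of_ne fun h0 => ?_
    rw [← h0, mul_zero, add_zero] at hx
    exact (lt_irrefl c) (hx.1.trans_lt hx.2)
  have hlt : ⌊(x - c) / h⌋₊ < N := by
    rw [Nat.floor_lt (div_nonneg (sub_nonneg.mpr hx.1) hpos.le), div_lt_iff₀ hpos]
    linarith [hx.2]
  simp_rw [Set.indicator_apply, mem_Ico_iff_floor_eq hpos hx.1, mul_ite, mul_one, mul_zero]
  rw [sum_ite_eq, if_pos (mem_range.mpr hlt)]

lemma isStepFunction_floor_comp (w : ℕ → ℝ) (hh : 0 ≤ h) (N : ℕ) :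
    IsStepFunction (fun x => w ⌊(x - c) / h⌋₊) c (c + N * h) := by
  refine ⟨N, fun t => w t, fun t => c + t * h, fun t => c + (t + 1) * h,
    fun t => floorPiece_bounds hh t.isLt, fun x hx => ?_⟩
  exact (floor_comp_eq_sum_indicator w hh hx).trans (Fin.sum_univ_eq_sum_range _ N).symm

lemma setIntegral_floor_comp (w : ℕ → ℝ) (hh : 0 ≤ h) (N : ℕ) :
    ∫ x in Set.Ico c (c + N * h), w ⌊(x - c) / h⌋₊ = h * ∑ t ∈ range N, w t := by
  rw [setIntegral_congr_fun measurableSet_Ico fun x hx => floor_comp_eq_sum_indicator w hh hx,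
    integral_finsetSum _ fun t _ =>
      ((integrable_const _).indicator measurableSet_Ico).const_mul _, mul_sum]
  refine sum_congr rfl fun t ht => ?_
  obtain ⟨hlo, hhi⟩ := floorPiece_bounds (c := c) hh (mem_range.mp ht)
  rw [integral_const_mul, integral_indicator_const _ measurableSet_Ico,
    measureReal_restrict_apply measurableSet_Ico,
    Set.inter_eq_left.mpr (Set.Ico_subset_Ico hlo hhi),
    Real.volume_real_Ico_of_le (by linarith), smul_eq_mul]
  ring

end FloorStep

variable {a b : Fin n → ℝ}

noncomputable def integralProd (c : ℝ) (φ : Fin n → ℝ → ℝ) (B : Finset (Fin n)) : ℝ :=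
  ∫ x in Set.Ico 0 c, ∏ j ∈ B, φ j x

lemma integrableOn_prod_of_mem_Icc {ψ : Fin n → ℝ → ℝ} {s : Set ℝ}
    (hs : MeasurableSet s) (hsfin : volume s ≠ ⊤) (hψ : ∀ k, Measurable (ψ k))
    (hbd : ∀ k, ∀ x ∈ s, ψ k x ∈ Set.Icc (a k) (b k)) (B : Finset (Fin n)) :
    IntegrableOn (fun x => ∏ j ∈ B, ψ j x) s := by
  refine Measure.integrableOn_of_bounded (M := ∏ j ∈ B, max |a j| |b j|) hsfin
    (Finset.measurable_prod B fun j _ => hψ j).aestronglyMeasurable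
    (ae_restrict_of_forall_mem hs fun x hx => ?_)
  rw [Real.norm_eq_abs, abs_prod]
  exact prod_le_prod (fun j _ => abs_nonneg _)
    fun j _ => abs_le_max_abs_abs (hbd j x hx).1 (hbd j x hx).2

lemma integralProd_eq_add_setIntegral {ψ : Fin n → ℝ → ℝ} {c d : ℝ}
    (hc : 0 ≤ c) (hcd : c ≤ d) (hψ : ∀ k, Measurable (ψ k))
    (hbd : ∀ k, ∀ x ∈ Set.Ico 0 d, ψ k x ∈ Set.Icc (a k) (b k)) (B : Finset (Fin n)) :
    integralProd d ψ B = integralProd c ψ B + ∫ x in Set.Ico c d, ∏ j ∈ B, ψ j x := by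
  have hint : IntegrableOn (fun x => ∏ j ∈ B, ψ j x) (Set.Ico 0 d) :=
    integrableOn_prod_of_mem_Icc measurableSet_Ico measure_Ico_lt_top.ne hψ hbd B
  rw [integralProd, integralProd, ← Set.Ico_union_Ico_eq_Ico hc hcd,
    setIntegral_union Set.Ico_disjoint_Ico_same measurableSet_Ico
      (hint.mono_set (Set.Ico_subset_Ico_right hcd)) (hint.mono_set (Set.Ico_subset_Ico_left hc))]

lemma min_neg_pos (ha : ∀ k, a k < 0) (hb : ∀ k, 0 < b k) (k : Fin n) :
    0 < min (-(a k)) (b k) :=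
  lt_min (neg_pos.mpr (ha k)) (hb k)

/-- The summand of `μ_M(φ)` for `A`, computed on `[0, c)`. -/
noncomputable def blockLength (a b : Fin n → ℝ) (c : ℝ) (φ : Fin n → ℝ → ℝ)
    (A : Finset (Fin n)) : ℝ :=
  (∏ j ∈ A, (min (-(a j)) (b j))⁻¹) * |integralProd c φ A|

lemma blockLength_nonneg (ha : ∀ k, a k < 0) (hb : ∀ k, 0 < b k) (c : ℝ)
    (φ : Fin n → ℝ → ℝ) (A : Finset (Fin n)) : 0 ≤ blockLength a b c φ A :=
  mul_nonneg (prod_nonneg fun j _ => (inv_pos.mpr (min_neg_pos ha hb j)).le) (abs_nonneg _)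

noncomputable def blockValue (a b : Fin n → ℝ) (A : Finset (Fin n)) (k₀ : Fin n) (s : ℝ)
    (k : Fin n) (t : ℕ) : ℝ :=
  if k ∈ A then min (-(a k)) (b k) * signPattern A k₀ s t k else 0

lemma blockValue_mem_Icc (ha : ∀ k, a k < 0) (hb : ∀ k, 0 < b k) {A : Finset (Fin n)}
    {k₀ : Fin n} {s : ℝ} (hs : |s| ≤ 1) (k : Fin n) (t : ℕ) :
    blockValue a b A k₀ s k t ∈ Set.Icc (a k) (b k) := by
  have hC := min_neg_pos ha hb k
  have habs : |blockValue a b A k₀ s k t| ≤ min (-(a k)) (b k) := by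
    rw [blockValue]
    split_ifs
    · rw [abs_mul, abs_of_pos hC]
      exact mul_le_of_le_one_right hC.le (abs_signPattern_le hs t k)
    · simpa using hC.le
  have := abs_le.mp habs
  constructor <;> linarith [min_le_left (-(a k)) (b k), min_le_right (-(a k)) (b k)]

lemma sum_prod_blockValue {A B : Finset (Fin n)} {k₀ : Fin n} (hk₀ : k₀ ∈ A) (s : ℝ)
    (hB : B.Nonempty) :
    ∑ t ∈ range (2 ^ n), ∏ j ∈ B, blockValue a b A k₀ s j t =
      if B = A then 2 ^ n * (s * ∏ j ∈ A, min (-(a j)) (b j)) else 0 := by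
  by_cases hBA : B ⊆ A
  · have hprod : ∀ t, ∏ j ∈ B, blockValue a b A k₀ s j t =
        (∏ j ∈ B, min (-(a j)) (b j)) * ∏ j ∈ B, signPattern A k₀ s t j := fun t => by
      rw [← prod_mul_distrib]
      exact prod_congr rfl fun j hj => if_pos (hBA hj)
    simp_rw [hprod, ← mul_sum]
    split_ifs with hBeq
    · subst hBeq
      simp_rw [prod_signPattern_self hk₀, sum_const, card_range, nsmul_eq_mul]
      push_cast
      ring
    · rw [sum_prod_signPattern_eq_zero (ssubset_of_subset_of_ne hBA hBeq) hB, mul_zero]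
  · obtain ⟨j, hjB, hjA⟩ := not_subset.mp hBA
    rw [if_neg fun h => hBA h.subset]
    exact sum_eq_zero fun t _ => prod_eq_zero hjB (if_neg hjA)

noncomputable def blockExtension (a b : Fin n → ℝ) (c : ℝ) (φ : Fin n → ℝ → ℝ)
    (A : Finset (Fin n)) (k₀ : Fin n) (k : Fin n) (x : ℝ) : ℝ :=
  if x ∈ Set.Ico c (c + blockLength a b c φ A) then
    blockValue a b A k₀ (-SignType.sign (integralProd c φ A)) k
      ⌊(x - c) / (blockLength a b c φ A / 2 ^ n)⌋₊
  else φ k x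

structure IsBalancedExtension (a b : Fin n → ℝ) (M : Finset (Finset (Fin n))) (c d : ℝ)
    (φ ψ : Fin n → ℝ → ℝ) : Prop where
  measurable : ∀ k, Measurable (ψ k)
  eqOn : ∀ k, Set.EqOn (ψ k) (φ k) (Set.Ico 0 c)
  mem_Icc : ∀ k, ∀ x ∈ Set.Ico 0 d, ψ k x ∈ Set.Icc (a k) (b k)
  integralProd_eq : ∀ B : Finset (Fin n), B.Nonempty →
    integralProd d ψ B = if B ∈ M then 0 else integralProd c φ B
  isStepFunction : ∀ k, IsStepFunction (ψ k) c d

section Block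

variable {c : ℝ} {φ : Fin n → ℝ → ℝ} {A : Finset (Fin n)} {k₀ : Fin n}

lemma blockExtension_of_lt {x : ℝ} (hx : x < c) (k : Fin n) :
    blockExtension a b c φ A k₀ k x = φ k x :=
  if_neg fun h => (hx.trans_le h.1).false

lemma blockExtension_eqOn_block (k : Fin n) :
    Set.EqOn (blockExtension a b c φ A k₀ k)
      (fun x => blockValue a b A k₀ (-SignType.sign (integralProd c φ A)) k
        ⌊(x - c) / (blockLength a b c φ A / 2 ^ n)⌋₊)
      (Set.Ico c (c + blockLength a b c φ A)) :=
  fun _ hx => if_pos hx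

lemma measurable_blockExtension (hφ : ∀ k, Measurable (φ k)) (k : Fin n) :
    Measurable (blockExtension a b c φ A k₀ k) :=
  Measurable.ite measurableSet_Ico
    ((measurable_from_nat (f := blockValue a b A k₀ _ k)).comp
      (Nat.measurable_floor.comp ((measurable_id.sub_const c).div_const _))) (hφ k)

lemma blockExtension_mem_Icc (ha : ∀ k, a k < 0) (hb : ∀ k, 0 < b k)
    (hbd : ∀ k, ∀ x ∈ Set.Ico 0 c, φ k x ∈ Set.Icc (a k) (b k)) (k : Fin n) :
    ∀ x ∈ Set.Ico 0 (c + blockLength a b c φ A),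
      blockExtension a b c φ A k₀ k x ∈ Set.Icc (a k) (b k) := by
  intro x hx
  by_cases hxb : x ∈ Set.Ico c (c + blockLength a b c φ A)
  · rw [blockExtension_eqOn_block k hxb]
    refine blockValue_mem_Icc ha hb ?_ k _
    rcases lt_trichotomy (integralProd c φ A) 0 with h | h | h <;> simp [h]
  · have hxc : x < c := lt_of_not_ge fun h => hxb ⟨h, hx.2⟩
    rw [blockExtension_of_lt hxc]
    exact hbd k x ⟨hx.1, hxc⟩

lemma natCast_two_pow_mul_div (L : ℝ) : ((2 ^ n : ℕ) : ℝ) * (L / 2 ^ n) = L := by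
  push_cast
  field_simp

lemma setIntegral_prod_blockExtension (ha : ∀ k, a k < 0) (hb : ∀ k, 0 < b k) (hk₀ : k₀ ∈ A)
    {B : Finset (Fin n)} (hB : B.Nonempty) :
    ∫ x in Set.Ico c (c + blockLength a b c φ A), ∏ j ∈ B, blockExtension a b c φ A k₀ j x =
      if B = A then -integralProd c φ A else 0 := by
  set s : ℝ := -SignType.sign (integralProd c φ A)
  have hh : 0 ≤ blockLength a b c φ A / 2 ^ n :=
    div_nonneg (blockLength_nonneg ha hb c φ A) (by positivity)
  have hblock := setIntegral_floor_comp (c := c)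
    (fun t => ∏ j ∈ B, blockValue a b A k₀ s j t) hh (2 ^ n)
  rw [natCast_two_pow_mul_div, sum_prod_blockValue hk₀ s hB] at hblock
  rw [setIntegral_congr_fun measurableSet_Ico fun x hx =>
    prod_congr rfl fun j _ => blockExtension_eqOn_block j hx, hblock]
  split_ifs with hBA
  · subst hBA
    have hC : ∏ j ∈ B, min (-(a j)) (b j) ≠ 0 :=
      prod_ne_zero_iff.mpr fun j _ => (min_neg_pos ha hb j).ne'
    rw [blockLength, prod_inv_distrib]
    field_simp
    linear_combination -abs_mul_sign (integralProd c φ B)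
  · rw [mul_zero]

lemma isBalancedExtension_blockExtension (ha : ∀ k, a k < 0) (hb : ∀ k, 0 < b k)
    (hk₀ : k₀ ∈ A) (hc : 0 ≤ c) (hφ : ∀ k, Measurable (φ k))
    (hbd : ∀ k, ∀ x ∈ Set.Ico 0 c, φ k x ∈ Set.Icc (a k) (b k)) :
    IsBalancedExtension a b {A} c (c + blockLength a b c φ A) φ
      (blockExtension a b c φ A k₀) where
  measurable := measurable_blockExtension hφ
  eqOn k _ hx := blockExtension_of_lt hx.2 k
  mem_Icc := blockExtension_mem_Icc ha hb hbd
  integralProd_eq B hB := by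
    have hφB : integralProd c (blockExtension a b c φ A k₀) B = integralProd c φ B :=
      setIntegral_congr_fun measurableSet_Ico fun x hx =>
        prod_congr rfl fun j _ => blockExtension_of_lt hx.2 j
    rw [integralProd_eq_add_setIntegral hc
      (le_add_of_nonneg_right (blockLength_nonneg ha hb c φ A))
      (measurable_blockExtension hφ) (blockExtension_mem_Icc ha hb hbd),
      setIntegral_prod_blockExtension ha hb hk₀ hB, hφB]
    by_cases hBA : B = A <;> simp [hBA]
  isStepFunction k := by
    have hstep := isStepFunction_floor_comp (c := c)
      (blockValue a b A k₀ (-SignType.sign (integralProd c φ A)) k)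
      (div_nonneg (blockLength_nonneg ha hb c φ A) (by positivity : (0 : ℝ) ≤ 2 ^ n)) (2 ^ n)
    rw [natCast_two_pow_mul_div] at hstep
    exact hstep.of_eqOn (blockExtension_eqOn_block k)

end Block

namespace IsBalancedExtension

variable {c c' d : ℝ} {φ φ' ψ : Fin n → ℝ → ℝ}

lemma refl (hφ : ∀ k, Measurable (φ k))
    (hbd : ∀ k, ∀ x ∈ Set.Ico 0 c, φ k x ∈ Set.Icc (a k) (b k)) :
    IsBalancedExtension a b ∅ c c φ φ where
  measurable := hφ
  eqOn _ := Set.eqOn_refl _ _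
  mem_Icc := hbd
  integralProd_eq _ _ := (if_neg (notMem_empty _)).symm
  isStepFunction _ := IsStepFunction.self _ c

lemma trans {M M' : Finset (Finset (Fin n))} (h₁ : IsBalancedExtension a b M c c' φ φ')
    (h₂ : IsBalancedExtension a b M' c' d φ' ψ) (hc : 0 ≤ c) (hcc' : c ≤ c') (hc'd : c' ≤ d) :
    IsBalancedExtension a b (M ∪ M') c d φ ψ where
  measurable := h₂.measurable
  eqOn k x hx := (h₂.eqOn k ⟨hx.1, hx.2.trans_le hcc'⟩).trans (h₁.eqOn k hx)
  mem_Icc := h₂.mem_Icc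
  integralProd_eq B hB := by
    rw [h₂.integralProd_eq B hB, h₁.integralProd_eq B hB]
    by_cases hM : B ∈ M <;> by_cases hM' : B ∈ M' <;> simp [hM, hM']
  isStepFunction k :=
    ((h₁.isStepFunction k).of_eqOn fun _ hx => h₂.eqOn k ⟨hc.trans hx.1, hx.2⟩).append
      (h₂.isStepFunction k) hcc' hc'd

end IsBalancedExtension

/-- The block for `A` leaves the integrals of the other products unchanged, so the later block
lengths may be computed from the original `φ`. -/
theorem exists_isBalancedExtension (ha : ∀ k, a k < 0) (hb : ∀ k, 0 < b k)
    {M : Finset (Finset (Fin n))} (hM : ∀ A ∈ M, A.Nonempty) {c : ℝ} (hc : 0 ≤ c)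
    {φ : Fin n → ℝ → ℝ} (hφ : ∀ k, Measurable (φ k))
    (hbd : ∀ k, ∀ x ∈ Set.Ico 0 c, φ k x ∈ Set.Icc (a k) (b k)) :
    ∃ ψ, IsBalancedExtension a b M c (c + ∑ A ∈ M, blockLength a b c φ A) φ ψ := by
  induction M using Finset.induction_on generalizing c φ with
  | empty => exact ⟨φ, by simpa using IsBalancedExtension.refl hφ hbd⟩
  | insert A M hAM ih =>
    obtain ⟨k₀, hk₀⟩ := hM A (mem_insert_self A M)
    have hL := blockLength_nonneg ha hb c φ A
    have h₁ := isBalancedExtension_blockExtension ha hb hk₀ hc hφ hbd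
    obtain ⟨ψ, h₂⟩ := ih (fun B hB => hM B (mem_insert_of_mem hB)) (add_nonneg hc hL)
      h₁.measurable h₁.mem_Icc
    have hlen : ∀ B ∈ M, blockLength a b (c + blockLength a b c φ A)
        (blockExtension a b c φ A k₀) B = blockLength a b c φ B := fun B hB =>
      congrArg (_ * |·|) ((h₁.integralProd_eq B (hM B (mem_insert_of_mem hB))).trans
        (if_neg (mem_singleton.not.mpr fun h : B = A => hAM (h ▸ hB))))
    rw [sum_congr rfl hlen] at h₂
    refine ⟨ψ, ?_⟩
    rw [sum_insert hAM, ← add_assoc, insert_eq]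
    exact h₁.trans h₂ hc (le_add_of_nonneg_right hL)
      (le_add_of_nonneg_right (sum_nonneg fun B _ => blockLength_nonneg ha hb _ _ B))

end ExtensionLemma

open ExtensionLemma

/-- Lemma 2.2 of \[Kar4\]. Measurable functions `φ_k` on `[0,1)` with
`A_k ≤ φ_k ≤ B_k`, `A_k < 0 < B_k`, can be extended to `[0, 1+μ)`, where `μ = μ_M(φ)` is the
multiplicative error corresponding to an arbitrary family `M` of nonempty subsets of
`{1, …, n}`, so that the bounds persist, `∫_0^{1+μ} ∏_{j∈A} φ_j = 0` for all `A ∈ M`, and each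
extension is a step function on `[1, 1+μ)`. -/
theorem extension_lemma
    (n : ℕ) (φ : Fin n → ℝ → ℝ)
    (hφmeas : ∀ k, Measurable (fun x : Set.Ico (0:ℝ) 1 => φ k x.1))
    (a b : Fin n → ℝ) (ha : ∀ k, a k < 0) (hb : ∀ k, 0 < b k)
    (hbound : ∀ k, ∀ x ∈ Set.Ico (0:ℝ) 1, a k ≤ φ k x ∧ φ k x ≤ b k)
    (M : Finset (Finset (Fin n))) (hM : ∀ A ∈ M, A.Nonempty)
    (μ : ℝ)
    (hμ : μ = ∑ A ∈ M, (∏ j ∈ A, (min (-(a j)) (b j))⁻¹) *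
        |∫ x in Set.Ico (0:ℝ) 1, ∏ j ∈ A, φ j x|) :
    ∃ ψ : Fin n → ℝ → ℝ,
      (∀ k, ∀ x ∈ Set.Ico (0:ℝ) 1, ψ k x = φ k x) ∧
      (∀ k, Measurable (fun x : Set.Ico (0:ℝ) (1 + μ) => ψ k x.1)) ∧
      (∀ k, ∀ x ∈ Set.Ico (0:ℝ) (1 + μ), a k ≤ ψ k x ∧ ψ k x ≤ b k) ∧
      (∀ A ∈ M, ∫ x in Set.Ico (0:ℝ) (1 + μ), ∏ j ∈ A, ψ j x = 0) ∧
      (∀ k, IsStepFunction (ψ k) 1 (1 + μ)) := by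
  set φ₀ : Fin n → ℝ → ℝ := fun k => (Set.Ico 0 1).indicator (φ k)
  have hφ₀ : ∀ k, Set.EqOn (φ₀ k) (φ k) (Set.Ico 0 1) := fun k x hx => Set.indicator_of_mem hx _
  have hμ₀ : μ = ∑ A ∈ M, blockLength a b 1 φ₀ A := by
    refine hμ.trans (Finset.sum_congr rfl fun A _ => ?_)
    rw [blockLength, integralProd, setIntegral_congr_fun measurableSet_Ico fun x hx =>
      Finset.prod_congr rfl fun j _ => hφ₀ j hx]
  obtain ⟨ψ, hψ⟩ := exists_isBalancedExtension ha hb hM zero_le_one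
    (fun k => measurable_indicator_of_measurable_restrict measurableSet_Ico (hφmeas k))
    (fun k x hx => by rw [Set.indicator_of_mem hx]; exact hbound k x hx)
  rw [← hμ₀] at hψ
  refine ⟨ψ, fun k x hx => (hψ.eqOn k hx).trans (hφ₀ k hx), fun k => ?_, hψ.mem_Icc,
    fun A hA => ?_, hψ.isStepFunction⟩
  · exact (hψ.measurable k).comp measurable_subtype_coe
  · simpa [hA, integralProd] using hψ.integralProd_eq A (hM A hA)
end

section
/- Let f_1, …, f_n be real-valued step functions on [0,1) with A_k ≤ f_k(x) ≤ B_k, where A_k < 0 < B_k, and let G : ℝ^n → [0,∞) be convex in each variable separately. Then there exist step functions ξ_1, …, ξ_n on [0,1), each taking only the two values A_k and B_k, such that ∫_0^1 ξ_{n_1} ξ_{n_2} ⋯ ξ_{n_ν} = ∫_0^1 f_{n_1} f_{n_2} ⋯ f_{n_ν} for every nonempty subset {n_1, …, n_ν} ⊆ {1,…,n}, and ∫_0^1 G(f_1, …, f_n) ≤ ∫_0^1 G(ξ_1, …, ξ_n). -/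
open MeasureTheory

/-! A step function takes finitely many values, each on a set of known measure, so every
integral `∫ g (f₁, …, fₙ)` is a finite weighted sum `∑ w_y g(y)`. Split each value `y` among the
corners of the box `∏ [a_k, b_k]` with the product weights `∏_k (t_k or 1 - t_k)`, where
`y_k = t_k a_k + (1 - t_k) b_k`. A monomial `∏_{k ∈ A} y_k` is affine in each coordinate, so the
split preserves all mixed moments; `G` is convex in each coordinate, so applying Jensen's
inequality one coordinate at a time shows that the split can only increase `∑ w_y G(y)`. Finally,
any finite family of weights summing to one is realized by laying consecutive intervals of those
lengths side by side in `[0, 1)`. -/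

open Set

section Partition

variable {α E ι : Type*} [MeasurableSpace α] {μ : Measure α}
  [NormedAddCommGroup E] [NormedSpace ℝ E] [CompleteSpace E]

theorem setIntegral_biUnion_eq_sum_of_eqOn_const (t : Finset ι) {s : ι → Set α}
    (hs : ∀ i ∈ t, MeasurableSet (s i)) (hd : (t : Set ι).PairwiseDisjoint s)
    (hμ : ∀ i ∈ t, μ (s i) ≠ ⊤) {f : α → E} {c : ι → E}
    (hf : ∀ i ∈ t, EqOn f (fun _ => c i) (s i)) :
    ∫ x in ⋃ i ∈ t, s i, f x ∂μ = ∑ i ∈ t, μ.real (s i) • c i := by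
  have hint : ∀ i ∈ t, IntegrableOn f (s i) μ := fun i hi =>
    (integrableOn_const (hμ i hi)).congr_fun (hf i hi).symm (hs i hi)
  rw [integral_biUnion_finset t hs hd hint]
  refine Finset.sum_congr rfl fun i hi => ?_
  rw [setIntegral_congr_fun (hs i hi) (hf i hi), setIntegral_const]

theorem setIntegral_comp_eq_sum_measureReal_fiber {β : Type*} [MeasurableSpace β]
    [MeasurableSingletonClass β] {F : α → β} (hF : Measurable F) {s : Set α}
    (hs : MeasurableSet s) (hμs : μ s ≠ ⊤) (hfin : (F '' s).Finite) (g : β → E) :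
    ∫ x in s, g (F x) ∂μ = ∑ y ∈ hfin.toFinset, μ.real (s ∩ F ⁻¹' {y}) • g y := by
  have hcover : s = ⋃ y ∈ hfin.toFinset, s ∩ F ⁻¹' {y} := by
    ext x
    simp only [mem_iUnion, Finite.mem_toFinset, mem_inter_iff, mem_preimage, mem_singleton_iff]
    exact ⟨fun hx => ⟨F x, mem_image_of_mem F hx, hx, rfl⟩, fun ⟨_, _, hx, _⟩ => hx⟩
  conv_lhs => rw [hcover]
  refine setIntegral_biUnion_eq_sum_of_eqOn_const _
    (fun y _ => hs.inter (hF (measurableSet_singleton y))) ?_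
    (fun y _ => measure_ne_top_of_subset inter_subset_left hμs)
    (fun y _ x hx => congrArg g hx.2)
  intro y _ z _ hyz
  exact Disjoint.mono inter_subset_right inter_subset_right
    ((disjoint_singleton.2 hyz).preimage F)

end Partition

theorem IsStepFunction.exists_measurable_finite_range {f : ℝ → ℝ} {a b : ℝ}
    (hf : IsStepFunction f a b) :
    ∃ g : ℝ → ℝ, Measurable g ∧ (range g).Finite ∧ EqOn f g (Ico a b) := by
  obtain ⟨m, c, α, β, -, hfg⟩ := hf
  refine ⟨fun x => ∑ i, c i * (Ico (α i) (β i)).indicator (fun _ => 1) x,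
    Finset.measurable_sum _ fun i _ => (measurable_const.indicator measurableSet_Ico).const_mul _,
    ?_, hfg⟩
  refine ((Finite.pi fun _ => toFinite {0, 1}).image fun u : Fin m → ℝ => ∑ i, c i * u i).subset ?_
  rintro _ ⟨x, rfl⟩
  refine ⟨fun i => (Ico (α i) (β i)).indicator (fun _ => 1) x, fun i _ => ?_, rfl⟩
  by_cases hx : x ∈ Ico (α i) (β i) <;> simp [hx]

theorem exists_finset_setIntegral_comp_eq_sum_of_isStepFunction {ι : Type*} [Fintype ι]
    {f : ι → ℝ → ℝ} {a b : ℝ} (hf : ∀ k, IsStepFunction (f k) a b) :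
    ∃ (R : Finset (ι → ℝ)) (w : (ι → ℝ) → ℝ), (∀ y, 0 ≤ w y) ∧
      (↑R ⊆ (fun x k => f k x) '' Ico a b) ∧
      ∀ g : (ι → ℝ) → ℝ, ∫ x in Ico a b, g (fun k => f k x) = ∑ y ∈ R, w y * g y := by
  choose g hg_meas hg_fin hfg using fun k => (hf k).exists_measurable_finite_range
  set F : ℝ → ι → ℝ := fun x k => g k x
  have hF : EqOn (fun x k => f k x) F (Ico a b) := fun x hx => funext fun k => hfg k hx
  have hfin : (F '' Ico a b).Finite :=
    (Finite.pi fun k => hg_fin k).subset (by rintro _ ⟨x, -, rfl⟩ k -; exact mem_range_self x)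
  refine ⟨hfin.toFinset, fun y => volume.real (Ico a b ∩ F ⁻¹' {y}), fun y => measureReal_nonneg,
    by rw [Finite.coe_toFinset, hF.image_eq], fun G => ?_⟩
  rw [setIntegral_congr_fun measurableSet_Ico fun x hx => congrArg G (hF hx),
    setIntegral_comp_eq_sum_measureReal_fiber (measurable_pi_lambda _ hg_meas) measurableSet_Ico
      measure_Ico_lt_top.ne hfin]
  rfl

theorem Monotone.biUnion_range_Ico_eq_Ico {X : Type*} [LinearOrder X] {f : ℕ → X}
    (hf : Monotone f) (N : ℕ) :
    ⋃ i ∈ Finset.range N, Ico (f i) (f (i + 1)) = Ico (f 0) (f N) := by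
  refine (iUnion₂_subset fun i hi => Ico_subset_Ico (hf (Nat.zero_le i)) (hf ?_)).antisymm
    (Ico_subset_biUnion_Ico N f)
  exact Finset.mem_range.1 hi

theorem exists_isStepFunction_of_weights_fin {κ : Type*} {M : ℕ} (w : Fin M → ℝ) (hw : ∀ i, 0 ≤ w i)
    (v : Fin M → κ → ℝ) :
    ∃ ξ : κ → ℝ → ℝ, (∀ k, IsStepFunction (ξ k) 0 (∑ i, w i)) ∧
      (∀ x ∈ Ico 0 (∑ i, w i), ∃ i, (fun k => ξ k x) = v i) ∧
      ∀ g : (κ → ℝ) → ℝ, ∫ x in Ico 0 (∑ i, w i), g (fun k => ξ k x) = ∑ i, w i * g (v i) := by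
  set W : ℕ → ℝ := fun j => if h : j < M then w ⟨j, h⟩ else 0
  have hW : ∀ i : Fin M, W i = w i := fun i => dif_pos i.isLt
  set p : ℕ → ℝ := fun j => ∑ i ∈ Finset.range j, W i
  have hp_succ : ∀ j, p (j + 1) = p j + W j := fun j => Finset.sum_range_succ W j
  have hp : Monotone p := monotone_nat_of_le_succ fun j => by
    rw [hp_succ]
    by_cases h : j < M <;> simp [W, h, hw]
  have hp0 : p 0 = 0 := Finset.sum_range_zero W
  have hpM : p M = ∑ i, w i := by simp only [p, ← Fin.sum_univ_eq_sum_range, hW]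
  set I : ℕ → Set ℝ := fun i => Ico (p i) (p (i + 1))
  have hI : (↑(Finset.univ : Finset (Fin M)) : Set (Fin M)).PairwiseDisjoint (I ·) :=
    fun i _ j _ hij => by
      simpa [I] using hp.pairwise_disjoint_on_Ico_succ (Fin.val_injective.ne hij)
  have hcover : Ico 0 (∑ i, w i) = ⋃ i ∈ (Finset.univ : Finset (Fin M)), I i := by
    rw [← hpM, ← hp0, ← hp.biUnion_range_Ico_eq_Ico]
    ext x
    simp [Fin.exists_iff, I, and_left_comm]
  have hlen : ∀ i : Fin M, volume.real (I i) = w i := fun i => by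
    rw [Real.volume_real_Ico_of_le (hp (Nat.le_succ i)), hp_succ, add_sub_cancel_left, hW]
  set ξ : κ → ℝ → ℝ := fun k x => ∑ i : Fin M, v i k * (I i).indicator (fun _ => 1) x
  have hξ : ∀ i : Fin M, EqOn (fun x k => ξ k x) (fun _ => v i) (I i) := fun i x hx => by
    ext k
    show ∑ j : Fin M, v j k * (I j).indicator (fun _ => 1) x = v i k
    rw [Finset.sum_eq_single i (fun j _ hji => ?_) (by simp), indicator_of_mem hx, mul_one]
    have hxj : x ∉ I j := fun hxj => disjoint_left.1 (hI (by simp) (by simp) hji) hxj hx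
    rw [indicator_of_notMem hxj, mul_zero]
  refine ⟨ξ, fun k => ⟨M, fun i => v i k, fun i => p i, fun i => p (i + 1),
    fun i => ⟨hp0 ▸ hp (Nat.zero_le _), hpM ▸ hp i.isLt⟩, fun x _ => rfl⟩, fun x hx => ?_,
    fun g => ?_⟩
  · rw [hcover, mem_iUnion₂] at hx
    obtain ⟨i, -, hx⟩ := hx
    exact ⟨i, hξ i hx⟩
  · rw [hcover, setIntegral_biUnion_eq_sum_of_eqOn_const _ (fun _ _ => measurableSet_Ico) hI
      (fun _ _ => measure_Ico_lt_top.ne) (c := fun i => g (v i))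
      (fun i _ x hx => congrArg g (hξ i hx))]
    exact Finset.sum_congr rfl fun i _ => congrArg (· * g (v i)) (hlen i)

theorem exists_isStepFunction_of_weights {ι κ : Type*} [Fintype ι] (w : ι → ℝ)
    (hw : ∀ i, 0 ≤ w i) (v : ι → κ → ℝ) :
    ∃ ξ : κ → ℝ → ℝ, (∀ k, IsStepFunction (ξ k) 0 (∑ i, w i)) ∧
      (∀ x ∈ Ico 0 (∑ i, w i), ∃ i, (fun k => ξ k x) = v i) ∧
      ∀ g : (κ → ℝ) → ℝ, ∫ x in Ico 0 (∑ i, w i), g (fun k => ξ k x) = ∑ i, w i * g (v i) := by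
  set e := (Fintype.equivFin ι).symm
  obtain ⟨ξ, hstep, hval, hint⟩ :=
    exists_isStepFunction_of_weights_fin (w ∘ e) (fun i => hw _) (v ∘ e)
  rw [show ∑ i, (w ∘ e) i = ∑ i, w i from e.sum_comp w] at hstep hval hint
  exact ⟨ξ, hstep, fun x hx => (hval x hx).elim fun i hi => ⟨e i, hi⟩,
    fun g => (hint g).trans (e.sum_comp fun i => w i * g (v i))⟩

section Corners

variable {ι : Type*} [Fintype ι]

def boxCorner (a b : ι → ℝ) (s : ι → Bool) : ι → ℝ := fun k => bif s k then a k else b k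

def cornerWeight (t : ι → ℝ) (s : ι → Bool) : ℝ := ∏ k, bif s k then t k else 1 - t k

theorem cornerWeight_nonneg {t : ι → ℝ} (ht : ∀ k, t k ∈ Icc 0 1) (s : ι → Bool) :
    0 ≤ cornerWeight t s :=
  Finset.prod_nonneg fun k _ => by cases s k <;> simp [(ht k).1, (ht k).2]

theorem sum_cornerWeight_mul_prod_boxCorner [DecidableEq ι] (t a b : ι → ℝ) (A : Finset ι) :
    ∑ s, cornerWeight t s * ∏ k ∈ A, boxCorner a b s k =
      ∏ k ∈ A, (t k * a k + (1 - t k) * b k) := by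
  have hk : ∀ k, ∑ e : Bool, (bif e then t k else 1 - t k) *
      (if k ∈ A then (bif e then a k else b k) else 1) =
      if k ∈ A then t k * a k + (1 - t k) * b k else 1 := by
    intro k
    rw [Fintype.sum_bool]
    split_ifs <;> simp
  calc ∑ s, cornerWeight t s * ∏ k ∈ A, boxCorner a b s k
      = ∑ s : ι → Bool, ∏ k, (bif s k then t k else 1 - t k) *
          (if k ∈ A then (bif s k then a k else b k) else 1) := by
        simp only [cornerWeight, boxCorner, Finset.prod_mul_distrib, Finset.prod_ite_mem,
          Finset.univ_inter]
    _ = ∏ k, ∑ e : Bool, (bif e then t k else 1 - t k) *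
          (if k ∈ A then (bif e then a k else b k) else 1) :=
        (Fintype.prod_sum fun k (e : Bool) => (bif e then t k else 1 - t k) *
          (if k ∈ A then (bif e then a k else b k) else 1)).symm
    _ = ∏ k ∈ A, (t k * a k + (1 - t k) * b k) := by
        rw [Finset.prod_congr rfl fun k _ => hk k, Finset.prod_ite_mem, Finset.univ_inter]

end Corners

def SeparatelyConvex {ι : Type*} [DecidableEq ι] (G : (ι → ℝ) → ℝ) : Prop :=
  ∀ k x, ConvexOn ℝ univ fun t => G (Function.update x k t)

theorem SeparatelyConvex.comp_cons {n : ℕ} {G : (Fin (n + 1) → ℝ) → ℝ}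
    (hG : SeparatelyConvex G) (c : ℝ) : SeparatelyConvex fun y : Fin n → ℝ => G (Fin.cons c y) := by
  intro k y
  simpa only [Fin.cons_update] using hG k.succ (Fin.cons c y)

theorem SeparatelyConvex.le_sum_cornerWeight_mul {n : ℕ} {G : (Fin n → ℝ) → ℝ}
    (hG : SeparatelyConvex G) (a b : Fin n → ℝ) {t : Fin n → ℝ} (ht : ∀ k, t k ∈ Icc 0 1) :
    G (fun k => t k * a k + (1 - t k) * b k) ≤
      ∑ s, cornerWeight t s * G (boxCorner a b s) := by
  induction n with
  | zero => simpa [cornerWeight] using le_of_eq (congrArg G (Subsingleton.elim _ _))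
  | succ n ih =>
    set x : Fin (n + 1) → ℝ := fun k => t k * a k + (1 - t k) * b k
    have hupdate : ∀ c, Function.update x 0 c = Fin.cons c (Fin.tail x) := fun c => by
      ext k; cases k using Fin.cases <;> simp [Fin.tail]
    have hcorner : ∀ e s, boxCorner a b (Fin.cons e s) =
        Fin.cons (bif e then a 0 else b 0) (boxCorner (Fin.tail a) (Fin.tail b) s) := fun e s => by
      ext k; cases k using Fin.cases <;> simp [boxCorner, Fin.tail]
    have hsplit : G x ≤ t 0 * G (Fin.cons (a 0) (Fin.tail x)) +
        (1 - t 0) * G (Fin.cons (b 0) (Fin.tail x)) := by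
      have h := (hG 0 x).2 (mem_univ (a 0)) (mem_univ (b 0)) (ht 0).1 (sub_nonneg.2 (ht 0).2)
        (add_sub_cancel _ _)
      have hx0 : Function.update x 0 (t 0 * a 0 + (1 - t 0) * b 0) = x :=
        Function.update_eq_self 0 x
      simpa only [smul_eq_mul, hx0, hupdate (a 0), hupdate (b 0)] using h
    have htail : ∀ c, G (Fin.cons c (Fin.tail x)) ≤ ∑ s, cornerWeight (Fin.tail t) s *
        G (Fin.cons c (boxCorner (Fin.tail a) (Fin.tail b) s)) := fun c =>
      ih (hG.comp_cons c) (Fin.tail a) (Fin.tail b) fun k => ht k.succ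
    calc G x ≤ t 0 * ∑ s, cornerWeight (Fin.tail t) s *
            G (Fin.cons (a 0) (boxCorner (Fin.tail a) (Fin.tail b) s)) +
          (1 - t 0) * ∑ s, cornerWeight (Fin.tail t) s *
            G (Fin.cons (b 0) (boxCorner (Fin.tail a) (Fin.tail b) s)) := by
          refine hsplit.trans (add_le_add ?_ ?_)
          · exact mul_le_mul_of_nonneg_left (htail _) (ht 0).1
          · exact mul_le_mul_of_nonneg_left (htail _) (sub_nonneg.2 (ht 0).2)
      _ = ∑ s, cornerWeight t s * G (boxCorner a b s) := by
          rw [← (Fin.consEquiv fun _ => Bool).sum_comp, Fintype.sum_prod_type, Fintype.sum_bool]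
          simp [Fin.consEquiv, cornerWeight, Fin.prod_univ_succ, Finset.mul_sum, mul_assoc,
            hcorner, Fin.tail]

theorem SeparatelyConvex.exists_boxCorner_weights {n : ℕ} {G : (Fin n → ℝ) → ℝ}
    (hG : SeparatelyConvex G) {a b : Fin n → ℝ} (R : Finset (Fin n → ℝ))
    (w : (Fin n → ℝ) → ℝ) (hw : ∀ y, 0 ≤ w y) (hR : ∀ y ∈ R, ∀ k, y k ∈ Icc (a k) (b k)) :
    ∃ W : (Fin n → Bool) → ℝ, (∀ s, 0 ≤ W s) ∧
      (∀ A : Finset (Fin n),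
        ∑ s, W s * ∏ k ∈ A, boxCorner a b s k = ∑ y ∈ R, w y * ∏ k ∈ A, y k) ∧
      ∑ y ∈ R, w y * G y ≤ ∑ s, W s * G (boxCorner a b s) := by
  have hseg : ∀ y ∈ R, ∀ k, ∃ θ ∈ Icc (0 : ℝ) 1, θ * a k + (1 - θ) * b k = y k := by
    intro y hy k
    obtain ⟨θ, θ', hθ, hθ', hsum, hcomb⟩ := Icc_subset_segment (hR y hy k)
    obtain rfl : θ' = 1 - θ := by linarith
    exact ⟨θ, ⟨hθ, by linarith⟩, hcomb⟩
  choose! t ht hty using hseg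
  have hy : ∀ y ∈ R, y = fun k => t y k * a k + (1 - t y k) * b k :=
    fun y hy => funext fun k => (hty y hy k).symm
  set W : (Fin n → Bool) → ℝ := fun s => ∑ y ∈ R, w y * cornerWeight (t y) s
  have hmix : ∀ h : (Fin n → ℝ) → ℝ, ∑ s, W s * h (boxCorner a b s) =
      ∑ y ∈ R, w y * ∑ s, cornerWeight (t y) s * h (boxCorner a b s) := fun h => by
    simp only [W, Finset.sum_mul, Finset.mul_sum, mul_assoc]
    exact Finset.sum_comm
  refine ⟨W, fun s => Finset.sum_nonneg fun y hy =>
    mul_nonneg (hw y) (cornerWeight_nonneg (ht y hy) s), fun A => ?_, ?_⟩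
  · rw [hmix]
    refine Finset.sum_congr rfl fun y hyR => ?_
    rw [sum_cornerWeight_mul_prod_boxCorner, ← hy y hyR]
  · rw [hmix]
    refine Finset.sum_le_sum fun y hyR => mul_le_mul_of_nonneg_left ?_ (hw y)
    conv_lhs => rw [hy y hyR]
    exact hG.le_sum_cornerWeight_mul a b (ht y hyR)

theorem two_valued_replacement_general
    (n : ℕ) (f : Fin n → ℝ → ℝ)
    (hf : ∀ k, IsStepFunction (f k) 0 1)
    (a b : Fin n → ℝ)
    (hbound : ∀ k, ∀ x ∈ Set.Ico (0:ℝ) 1, a k ≤ f k x ∧ f k x ≤ b k)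
    (G : (Fin n → ℝ) → ℝ)
    (hGconv : ∀ (k : Fin n) (x : Fin n → ℝ),
      ConvexOn ℝ Set.univ (fun t : ℝ => G (Function.update x k t))) :
    ∃ ξ : Fin n → ℝ → ℝ,
      (∀ k, IsStepFunction (ξ k) 0 1) ∧
      (∀ k, ∀ x ∈ Set.Ico (0:ℝ) 1, ξ k x = a k ∨ ξ k x = b k) ∧
      (∀ A : Finset (Fin n), A.Nonempty →
        (∫ x in Set.Ico (0:ℝ) 1, ∏ j ∈ A, ξ j x) =
          (∫ x in Set.Ico (0:ℝ) 1, ∏ j ∈ A, f j x)) ∧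
      (∫ x in Set.Ico (0:ℝ) 1, G (fun k => f k x)) ≤
        (∫ x in Set.Ico (0:ℝ) 1, G (fun k => ξ k x)) := by
  obtain ⟨R, w, hw, hRf, hint⟩ := exists_finset_setIntegral_comp_eq_sum_of_isStepFunction hf
  have hR : ∀ y ∈ R, ∀ k, y k ∈ Icc (a k) (b k) := by
    intro y hy k
    obtain ⟨x, hx, rfl⟩ := hRf hy
    exact hbound k x hx
  obtain ⟨W, hW, hmom, hGle⟩ := SeparatelyConvex.exists_boxCorner_weights hGconv R w hw hR
  have hW1 : ∑ s, W s = 1 := by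
    simpa using (hmom ∅).trans (hint fun _ => 1).symm
  obtain ⟨ξ, hstep, hval, hξint⟩ := exists_isStepFunction_of_weights W hW (boxCorner a b)
  rw [hW1] at hstep hval hξint
  refine ⟨ξ, hstep, fun k x hx => ?_, fun A _ => ?_, ?_⟩
  · obtain ⟨s, hs⟩ := hval x hx
    rw [congrFun hs k, boxCorner]
    cases s k
    · exact Or.inr rfl
    · exact Or.inl rfl
  · rw [hξint fun y => ∏ j ∈ A, y j, hint, hmom]
  · rw [hξint G, hint]
    exact hGle

/-- Lemma 2.5 of the paper. Given step functions `f_k` on `[0,1)` with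
`A_k ≤ f_k ≤ B_k`, `A_k < 0 < B_k`, and a function `G : ℝⁿ → [0,∞)` convex in each variable
separately, there exist `{A_k, B_k}`-valued step functions `ξ_k` on `[0,1)` with the same
mixed moments, `∫_0^1 ξ_{n_1} ⋯ ξ_{n_ν} = ∫_0^1 f_{n_1} ⋯ f_{n_ν}` for every nonempty
`{n_1, …, n_ν} ⊆ {1,…,n}`, and `∫_0^1 G(f_1, …, f_n) ≤ ∫_0^1 G(ξ_1, …, ξ_n)`. -/
theorem two_valued_replacement
    (n : ℕ) (f : Fin n → ℝ → ℝ)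
    (hf : ∀ k, IsStepFunction (f k) 0 1)
    (a b : Fin n → ℝ) (ha : ∀ k, a k < 0) (hb : ∀ k, 0 < b k)
    (hbound : ∀ k, ∀ x ∈ Set.Ico (0:ℝ) 1, a k ≤ f k x ∧ f k x ≤ b k)
    (G : (Fin n → ℝ) → ℝ) (hG0 : ∀ t, 0 ≤ G t)
    (hGconv : ∀ (k : Fin n) (x : Fin n → ℝ),
      ConvexOn ℝ Set.univ (fun t : ℝ => G (Function.update x k t))) :
    ∃ ξ : Fin n → ℝ → ℝ,
      (∀ k, IsStepFunction (ξ k) 0 1) ∧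
      (∀ k, ∀ x ∈ Set.Ico (0:ℝ) 1, ξ k x = a k ∨ ξ k x = b k) ∧
      (∀ A : Finset (Fin n), A.Nonempty →
        (∫ x in Set.Ico (0:ℝ) 1, ∏ j ∈ A, ξ j x) =
          (∫ x in Set.Ico (0:ℝ) 1, ∏ j ∈ A, f j x)) ∧
      (∫ x in Set.Ico (0:ℝ) 1, G (fun k => f k x)) ≤
        (∫ x in Set.Ico (0:ℝ) 1, G (fun k => ξ k x)) :=
  two_valued_replacement_general n f hf a b hbound G hGconv
end

section
/- Let g_1, …, g_n be nonzero random variables such that each g_k takes exactly two values, and suppose the system is d-multiplicative, i.e. E[∏_{j∈A} g_j] = 0 for every nonempty subset A ⊆ {1,…,n} with #A ≤ d. Then the random variables g_1, …, g_n are d-independent: any d of them are mutually independent. -/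
/-!
A random variable taking only the values `u ≠ v` is an affine function of the indicator of
`{g = u}`, and conversely. Expanding `∏ k ∈ T, (a k * g k + b k)` shows that the vanishing of all
mixed moments of the `g k` over `T` makes the indicators multiplicative on `T`, i.e.
`μ (⋂ k ∈ T, {g k = u k}) = ∏ k ∈ T, μ {g k = u k}`. So for `#S ≤ d` the events `{g k = u k}`,
`k ∈ S`, are independent, and with them their indicators and the affine images `g k`.
-/

open MeasureTheory ProbabilityTheory Finset

section TwoValued

variable {Ω : Type*} {f : Ω → ℝ} {u v : ℝ}

lemma indicator_eq_of_two_valued (huv : u ≠ v) (hf : ∀ ω, f ω = u ∨ f ω = v) (ω : Ω) :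
    {x | f x = u}.indicator (fun _ => (1 : ℝ)) ω = (u - v)⁻¹ * f ω + v / (v - u) := by
  have huv' : u - v ≠ 0 := sub_ne_zero.mpr huv
  have hvu : v - u ≠ 0 := sub_ne_zero.mpr huv.symm
  rcases hf ω with h | h
  · rw [Set.indicator_of_mem (by exact h), h]
    field_simp
    ring
  · rw [Set.indicator_of_notMem (by simpa [h] using huv.symm), h]
    field_simp
    ring

lemma eq_comp_indicator_of_two_valued (huv : u ≠ v) (hf : ∀ ω, f ω = u ∨ f ω = v) :
    f = (fun x => (u - v) * x + v) ∘ {x | f x = u}.indicator (fun _ => (1 : ℝ)) := by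
  funext ω
  rcases hf ω with h | h
  · simp [h]
  · simp [h, huv.symm]

end TwoValued

section MixedMoments

variable {Ω ι : Type*} [MeasurableSpace Ω] {μ : Measure Ω}

lemma integrable_finset_prod_of_abs_le [IsFiniteMeasure μ] {g : ι → Ω → ℝ}
    (hmeas : ∀ k, Measurable (g k)) {C : ι → ℝ} (hC : ∀ k ω, |g k ω| ≤ C k) (t : Finset ι) :
    Integrable (fun ω => ∏ k ∈ t, g k ω) μ := by
  refine .of_bound (measurable_prod t fun k _ => hmeas k).aestronglyMeasurable (∏ k ∈ t, C k)
    (ae_of_all _ fun ω => ?_)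
  rw [Real.norm_eq_abs, abs_prod]
  exact prod_le_prod (fun k _ => abs_nonneg _) fun k _ => hC k ω

lemma integral_prod_mul_add_eq_prod [DecidableEq ι] [IsProbabilityMeasure μ] {g : ι → Ω → ℝ}
    {T : Finset ι}
    (hint : ∀ t ⊆ T, Integrable (fun ω => ∏ j ∈ t, g j ω) μ)
    (hmult : ∀ t ⊆ T, t.Nonempty → ∫ ω, ∏ j ∈ t, g j ω ∂μ = 0) (a b : ι → ℝ) :
    ∫ ω, ∏ k ∈ T, (a k * g k ω + b k) ∂μ = ∏ k ∈ T, b k := by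
  have expand : ∀ ω, ∏ k ∈ T, (a k * g k ω + b k) =
      ∑ t ∈ T.powerset, (∏ k ∈ t, a k) * (∏ k ∈ T \ t, b k) * ∏ k ∈ t, g k ω := by
    intro ω
    rw [prod_add]
    refine sum_congr rfl fun t _ => ?_
    rw [prod_mul_distrib]
    ring
  simp_rw [expand]
  rw [integral_finsetSum _ fun t ht => (hint t (mem_powerset.mp ht)).const_mul _,
    sum_eq_single_of_mem ∅ (empty_mem_powerset T)]
  · simp
  · intro t ht hne
    rw [integral_const_mul, hmult t (mem_powerset.mp ht) (nonempty_iff_ne_empty.mpr hne),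
      mul_zero]

lemma iIndepSet_of_measureReal_biInter [IsFiniteMeasure μ] {A : ι → Set Ω}
    (hA : ∀ i, MeasurableSet (A i)) {p : ι → ℝ}
    (h : ∀ t : Finset ι, μ.real (⋂ k ∈ t, A k) = ∏ k ∈ t, p k) : iIndepSet A μ := by
  refine (iIndepSet_iff_meas_biInter hA).mpr fun t => ?_
  have hsingle : ∀ k, μ.real (A k) = p k := fun k => by simpa using h {k}
  rw [← ENNReal.toReal_eq_toReal_iff' (measure_ne_top μ _)
    (ENNReal.prod_ne_top fun k _ => measure_ne_top μ _), ENNReal.toReal_prod]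
  simpa [← measureReal_def, hsingle] using h t

theorem iIndepFun_of_two_valued_of_integral_prod_eq_zero [IsProbabilityMeasure μ]
    {g : ι → Ω → ℝ} (hmeas : ∀ k, Measurable (g k))
    (hval : ∀ k, ∃ u v : ℝ, u ≠ v ∧ ∀ ω, g k ω = u ∨ g k ω = v)
    (hmult : ∀ t : Finset ι, t.Nonempty → ∫ ω, ∏ j ∈ t, g j ω ∂μ = 0) :
    iIndepFun g μ := by
  classical
  choose u v huv hval using hval
  set A : ι → Set Ω := fun k => {ω | g k ω = u k}
  have hA : ∀ k, MeasurableSet (A k) := fun k => hmeas k (measurableSet_singleton _)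
  have hint : ∀ t : Finset ι, Integrable (fun ω => ∏ k ∈ t, g k ω) μ :=
    integrable_finset_prod_of_abs_le hmeas (C := fun k => max |u k| |v k|)
      fun k ω => by
        rcases hval k ω with h | h <;> rw [h]
        exacts [le_max_left _ _, le_max_right _ _]
  have hinter (t : Finset ι) : μ.real (⋂ k ∈ t, A k) = ∏ k ∈ t, v k / (v k - u k) :=
    calc μ.real (⋂ k ∈ t, A k) = ∫ ω, ∏ k ∈ t, (A k).indicator (fun _ => (1 : ℝ)) ω ∂μ := by
          rw [← integral_indicator_one (t.measurableSet_biInter fun k _ => hA k)]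
          congr with ω
          rw [prod_indicator_const_apply, ← Pi.one_def, one_pow]
      _ = ∫ ω, ∏ k ∈ t, ((u k - v k)⁻¹ * g k ω + v k / (v k - u k)) ∂μ := by
          refine integral_congr_ae (ae_of_all _ fun ω => prod_congr rfl fun k _ => ?_)
          exact indicator_eq_of_two_valued (huv k) (hval k) ω
      _ = ∏ k ∈ t, v k / (v k - u k) :=
          integral_prod_mul_add_eq_prod (fun s _ => hint s) (fun s _ => hmult s) _ _
  have hindep : iIndepFun (fun k => (A k).indicator fun _ => (1 : ℝ)) μ :=
    (iIndepSet_of_measureReal_biInter hA hinter).iIndepFun_indicator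
  convert hindep.comp (fun k x => (u k - v k) * x + v k) fun k => by fun_prop with k
  exact eq_comp_indicator_of_two_valued (huv k) (hval k)

end MixedMoments

theorem two_valued_multiplicative_implies_independent_general
    {Ω : Type*} [MeasurableSpace Ω] (μ : Measure Ω) [IsProbabilityMeasure μ]
    (n d : ℕ)
    (g : Fin n → Ω → ℝ) (hgmeas : ∀ k, Measurable (g k))
    (hgval : ∀ k, ∃ u v : ℝ, u ≠ v ∧ (∀ ω, g k ω = u ∨ g k ω = v) ∧
      μ {ω | g k ω = u} ≠ 0 ∧ μ {ω | g k ω = v} ≠ 0)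
    -- the system is `d`-multiplicative
    (hmult : ∀ A : Finset (Fin n), A.Nonempty → A.card ≤ d →
      ∫ ω, ∏ j ∈ A, g j ω ∂μ = 0) :
    ∀ S : Finset (Fin n), S.card ≤ d →
      iIndepFun (fun i : S => g i) μ := by
  intro S hS
  refine iIndepFun_of_two_valued_of_integral_prod_eq_zero (fun i => hgmeas i)
    (fun i => ?_) fun t ht => ?_
  · obtain ⟨u, v, huv, hval, -⟩ := hgval i
    exact ⟨u, v, huv, hval⟩
  · have hcard : (t.map (Function.Embedding.subtype _)).card ≤ d := by
      simpa using (card_le_univ t).trans (Fintype.card_coe S).le |>.trans hS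
    simpa [prod_map] using hmult _ ht.map hcard

/-- Lemma 2.4 of \[Kar4\]. A `d`-multiplicative system of nonzero random
variables `g_1, …, g_n`, each taking exactly two values, is `d`-independent: any `d` of the
`g_k` are mutually independent. -/
theorem two_valued_multiplicative_implies_independent
    {Ω : Type*} [MeasurableSpace Ω] (μ : Measure Ω) [IsProbabilityMeasure μ]
    (n d : ℕ) (hd : 0 < d) (hdn : d ≤ n)
    (g : Fin n → Ω → ℝ) (hgmeas : ∀ k, Measurable (g k))
    -- each `g_k` is a nonzero random variable taking exactly two values
    (hgne : ∀ k, ¬ (g k =ᵐ[μ] fun _ => (0 : ℝ)))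
    (hgval : ∀ k, ∃ u v : ℝ, u ≠ v ∧ (∀ ω, g k ω = u ∨ g k ω = v) ∧
      μ {ω | g k ω = u} ≠ 0 ∧ μ {ω | g k ω = v} ≠ 0)
    -- the system is `d`-multiplicative
    (hmult : ∀ A : Finset (Fin n), A.Nonempty → A.card ≤ d →
      ∫ ω, ∏ j ∈ A, g j ω ∂μ = 0) :
    ∀ S : Finset (Fin n), S.card ≤ d →
      iIndepFun (fun i : S => g i) μ :=
  two_valued_multiplicative_implies_independent_general μ n d g hgmeas hgval hmult
end

section
/- Let Φ : ℝ → [0,∞) be a convex function and let φ = (φ_1, …, φ_n) be random variables with A_k ≤ φ_k ≤ B_k almost surely, where A_k < 0 < B_k. Then for any integer d ≤ n and any real coefficients a_1, …, a_n, there exist a probability space and random variables ξ_1, …, ξ_n on it, each taking only the two values A_k and B_k with mean zero and any d of them mutually independent, such that E[Φ(Σ_{k=1}^n a_k φ_k)] ≤ (1 + μ_d(φ)) · E[Φ(Σ_{k=1}^n a_k ξ_k)]. -/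
/-!
Write each `x ∈ [lo k, hi k]` as the convex combination of the endpoints `v ∈ {lo k, hi k}` with
barycentric weights `λ_v(x) = p_v (1 + u_v x)`, where `p` is the mean-zero law on `{lo k, hi k}`
and `u_v = v / (-lo k * hi k)`. Jensen's inequality on the vertices of the box gives
`E Φ(∑ a_k φ_k) ≤ ∑_ε w(ε) Φ(∑ a_k v(ε_k))` with `w(ε) = E ∏_k λ_{ε_k}(φ_k)`, and expanding the
product, `w(ε) = P(ε) ∑_A u_A(ε) E[φ_A]` with `P` the product of the laws `p`.
The terms with `1 ≤ #A ≤ d` are bounded by `μ_d(φ)` since `|u_v| ≤ 1 / C_k`; dropping them in favour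
of this bound and normalising gives the law `Q = P (1 + ∑_{#A > d} u_A E[φ_A] / (1 + μ_d))` with
`w ≤ (1 + μ_d) Q`. Every monomial `u_A` with `#A > d` integrates to zero against any function of
at most `d` coordinates under `P`, so the coordinates under `Q` are `d`-wise independent with the
mean-zero two-point marginals.
-/

open MeasureTheory ProbabilityTheory Finset

namespace ExtremeInequality

noncomputable section

section TwoPoint

variable {lo hi : ℝ}

def twoPointValue (lo hi : ℝ) (b : Bool) : ℝ := if b then hi else lo

theorem twoPointValue_eq_or (lo hi : ℝ) (b : Bool) :
    twoPointValue lo hi b = lo ∨ twoPointValue lo hi b = hi := by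
  cases b <;> simp [twoPointValue]

/-- At `x = 0` these are the weights of the mean-zero law on `{lo, hi}`. -/
def baryWeight (lo hi x : ℝ) (b : Bool) : ℝ :=
  if b then (x - lo) / (hi - lo) else (hi - x) / (hi - lo)

/-- `-lo * hi` is the variance of the mean-zero law on `{lo, hi}`. -/
def twoPointScaled (lo hi : ℝ) (b : Bool) : ℝ := twoPointValue lo hi b / (-lo * hi)

theorem sum_baryWeight (hlohi : lo ≠ hi) (x : ℝ) : ∑ b, baryWeight lo hi x b = 1 := by
  have : hi - lo ≠ 0 := sub_ne_zero.2 hlohi.symm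
  simp only [Fintype.sum_bool, baryWeight, if_true, Bool.false_eq_true, if_false]
  field_simp
  ring

theorem sum_baryWeight_mul_value (hlohi : lo ≠ hi) (x : ℝ) :
    ∑ b, baryWeight lo hi x b * twoPointValue lo hi b = x := by
  have : hi - lo ≠ 0 := sub_ne_zero.2 hlohi.symm
  simp only [Fintype.sum_bool, baryWeight, twoPointValue, if_true, Bool.false_eq_true, if_false]
  field_simp
  ring

theorem sum_baryWeight_zero_mul_scaled (hlohi : lo ≠ hi) :
    ∑ b, baryWeight lo hi 0 b * twoPointScaled lo hi b = 0 := by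
  simp only [twoPointScaled, mul_div_assoc', ← sum_div, sum_baryWeight_mul_value hlohi, zero_div]

theorem baryWeight_nonneg {x : ℝ} (hlox : lo ≤ x) (hxhi : x ≤ hi) (b : Bool) :
    0 ≤ baryWeight lo hi x b := by
  unfold baryWeight
  split_ifs <;> apply div_nonneg <;> linarith

theorem baryWeight_eq_baryWeight_zero_mul (hlo : lo ≠ 0) (hhi : hi ≠ 0) (hlohi : lo ≠ hi)
    (x : ℝ) (b : Bool) :
    baryWeight lo hi x b = baryWeight lo hi 0 b * (1 + twoPointScaled lo hi b * x) := by
  have : hi - lo ≠ 0 := sub_ne_zero.2 hlohi.symm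
  cases b <;> simp only [baryWeight, twoPointScaled, twoPointValue, if_true, Bool.false_eq_true,
    if_false] <;> field_simp <;> ring

theorem abs_twoPointScaled_le (hlo : lo < 0) (hhi : 0 < hi) (b : Bool) :
    |twoPointScaled lo hi b| ≤ (min (-lo) hi)⁻¹ := by
  have hvar : 0 < -lo * hi := mul_pos (neg_pos.2 hlo) hhi
  rw [twoPointScaled, abs_div, abs_of_pos hvar, div_le_iff₀ hvar,
    inv_mul_eq_div, le_div_iff₀ (lt_min (neg_pos.2 hlo) hhi)]
  cases b <;> simp only [twoPointValue, if_true, Bool.false_eq_true, if_false]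
  · rw [abs_of_neg hlo]
    exact mul_le_mul_of_nonneg_left (min_le_right _ _) (neg_pos.2 hlo).le
  · rw [abs_of_pos hhi, mul_comm (-lo)]
    exact mul_le_mul_of_nonneg_left (min_le_left _ _) hhi.le

end TwoPoint

section ProductLaw

variable {ι β R : Type*} [Fintype ι] [DecidableEq ι] [Fintype β] [CommSemiring R]

theorem sum_pi_prod_mul_prod_mul_prod (p u f : ι → β → R) (A K : Finset ι) :
    ∑ ε : ι → β, (∏ k, p k (ε k)) * (∏ k ∈ A, u k (ε k)) * ∏ k ∈ K, f k (ε k) =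
      ∏ k, ∑ b, p k b * (if k ∈ A then u k b else 1) * (if k ∈ K then f k b else 1) := by
  rw [Fintype.prod_sum]
  refine sum_congr rfl fun ε _ => ?_
  rw [prod_mul_distrib, prod_mul_distrib, prod_ite_mem, prod_ite_mem, univ_inter, univ_inter]

theorem sum_pi_prod_mul_prod_mul_prod_eq_zero {p u : ι → β → R}
    (hpu : ∀ k, ∑ b, p k b * u k b = 0) {A K : Finset ι} (hAK : ¬A ⊆ K) (f : ι → β → R) :
    ∑ ε : ι → β, (∏ k, p k (ε k)) * (∏ k ∈ A, u k (ε k)) * ∏ k ∈ K, f k (ε k) = 0 := by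
  obtain ⟨j, hjA, hjK⟩ := not_subset.1 hAK
  rw [sum_pi_prod_mul_prod_mul_prod]
  exact prod_eq_zero (mem_univ j) (by simpa [hjA, hjK] using hpu j)

theorem sum_pi_prod_mul_prod {p : ι → β → R} (hp : ∀ k, ∑ b, p k b = 1)
    (K : Finset ι) (f : ι → β → R) :
    ∑ ε : ι → β, (∏ k, p k (ε k)) * ∏ k ∈ K, f k (ε k) = ∏ k ∈ K, ∑ b, p k b * f k b := by
  have h := sum_pi_prod_mul_prod_mul_prod p p f ∅ K
  simp only [prod_empty, mul_one, notMem_empty, if_false] at h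
  rw [h]
  calc _ = ∏ k, if k ∈ K then ∑ b, p k b * f k b else 1 :=
        prod_congr rfl fun k _ => by
          by_cases hk : k ∈ K <;> simp only [hk, if_true, if_false, mul_one, hp]
    _ = _ := by rw [prod_ite_mem, univ_inter]

/-- Every monomial `∏ k ∈ A, u k` with `A ⊄ K` has a factor of mean zero that is independent of
the other factors. -/
theorem sum_pi_prod_mul_one_add_mul_prod {p u : ι → β → R} (hp : ∀ k, ∑ b, p k b = 1)
    (hpu : ∀ k, ∑ b, p k b * u k b = 0) (c : Finset ι → R) {K : Finset ι}
    (hc : ∀ A ⊆ K, c A = 0) (f : ι → β → R) :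
    ∑ ε : ι → β, (∏ k, p k (ε k)) * (1 + ∑ A, (∏ k ∈ A, u k (ε k)) * c A) *
        ∏ k ∈ K, f k (ε k) = ∏ k ∈ K, ∑ b, p k b * f k b := by
  have hvanish : ∀ A, (∑ ε : ι → β,
      (∏ k, p k (ε k)) * (∏ k ∈ A, u k (ε k)) * ∏ k ∈ K, f k (ε k)) * c A = 0 := fun A => by
    by_cases hAK : A ⊆ K
    · rw [hc A hAK, mul_zero]
    · rw [sum_pi_prod_mul_prod_mul_prod_eq_zero hpu hAK, zero_mul]
  have hexpand : ∀ ε : ι → β,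
      (∏ k, p k (ε k)) * (1 + ∑ A, (∏ k ∈ A, u k (ε k)) * c A) * ∏ k ∈ K, f k (ε k) =
        (∏ k, p k (ε k)) * ∏ k ∈ K, f k (ε k) +
          ∑ A, ((∏ k, p k (ε k)) * (∏ k ∈ A, u k (ε k)) * ∏ k ∈ K, f k (ε k)) * c A := by
    intro ε
    rw [mul_add, mul_one, add_mul, mul_sum, sum_mul]
    exact congrArg _ (sum_congr rfl fun A _ => by ring)
  rw [sum_congr rfl fun ε _ => hexpand ε, sum_add_distrib, sum_comm]
  simp only [← sum_mul, hvanish, sum_const_zero, add_zero]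
  exact sum_pi_prod_mul_prod hp K f

end ProductLaw

section Box

variable {ι : Type*} [Fintype ι] {lo hi : ι → ℝ}

/-- `x` is the barycenter of the vertices of the box `∏ k, [lo k, hi k]` weighted by the product
of the barycentric coordinates. -/
theorem map_sum_le_sum_prod_baryWeight [DecidableEq ι] (hlohi : ∀ k, lo k < hi k) {Φ : ℝ → ℝ}
    (hΦ : ConvexOn ℝ Set.univ Φ) (a : ι → ℝ) {x : ι → ℝ} (hx : ∀ k, lo k ≤ x k ∧ x k ≤ hi k) :
    Φ (∑ k, a k * x k) ≤ ∑ ε : ι → Bool, (∏ k, baryWeight (lo k) (hi k) (x k) (ε k)) *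
      Φ (∑ k, a k * twoPointValue (lo k) (hi k) (ε k)) := by
  have hsum : ∀ k, ∑ b, baryWeight (lo k) (hi k) (x k) b = 1 :=
    fun k => sum_baryWeight (hlohi k).ne _
  have hbarycenter : ∑ ε : ι → Bool, (∏ k, baryWeight (lo k) (hi k) (x k) (ε k)) *
      ∑ k, a k * twoPointValue (lo k) (hi k) (ε k) = ∑ k, a k * x k := by
    simp only [mul_sum]
    rw [sum_comm]
    refine sum_congr rfl fun k _ => ?_
    have h := sum_pi_prod_mul_prod hsum {k} fun k => twoPointValue (lo k) (hi k)
    simp only [prod_singleton, sum_baryWeight_mul_value (hlohi k).ne] at h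
    rw [← h, mul_sum]
    exact sum_congr rfl fun ε _ => by ring
  have hjensen := hΦ.map_sum_le (t := univ)
    (w := fun ε : ι → Bool => ∏ k, baryWeight (lo k) (hi k) (x k) (ε k))
    (p := fun ε => ∑ k, a k * twoPointValue (lo k) (hi k) (ε k))
    (fun ε _ => prod_nonneg fun k _ => baryWeight_nonneg (hx k).1 (hx k).2 (ε k))
    (by rw [← Fintype.prod_sum]; simp only [hsum, prod_const_one]) (fun _ _ => Set.mem_univ _)
  simp only [smul_eq_mul] at hjensen
  rwa [hbarycenter] at hjensen

theorem prod_baryWeight_eq (hlo : ∀ k, lo k < 0) (hhi : ∀ k, 0 < hi k) (x : ι → ℝ)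
    (ε : ι → Bool) :
    ∏ k, baryWeight (lo k) (hi k) (x k) (ε k) = (∏ k, baryWeight (lo k) (hi k) 0 (ε k)) *
      ∑ A, (∏ j ∈ A, twoPointScaled (lo j) (hi j) (ε j)) * ∏ j ∈ A, x j := by
  rw [prod_congr rfl fun k _ => baryWeight_eq_baryWeight_zero_mul (hlo k).ne (hhi k).ne'
    ((hlo k).trans (hhi k)).ne (x k) (ε k), prod_mul_distrib, prod_one_add, powerset_univ]
  simp only [prod_mul_distrib]

end Box

section Density

variable {ι : Type*} [Fintype ι] (lo hi : ι → ℝ) (d : ℕ) (e : Finset ι → ℝ)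

/-- `μ_d(φ)`, written in terms of the moments `e A = E[∏ j ∈ A, φ j]`. -/
def multiplicativeError : ℝ :=
  ∑ A ∈ univ.filter (fun A : Finset ι => A.Nonempty ∧ A.card ≤ d),
    (∏ j ∈ A, (min (-(lo j)) (hi j))⁻¹) * |e A|

/-- The product of the mean-zero two-point laws, perturbed by the moments of order `> d`. -/
def extremeDensity (ε : ι → Bool) : ℝ :=
  (∏ k, baryWeight (lo k) (hi k) 0 (ε k)) *
    (1 + ∑ A, (∏ j ∈ A, twoPointScaled (lo j) (hi j) (ε j)) *
      if d < A.card then e A / (1 + multiplicativeError lo hi d e) else 0)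

variable {lo hi}

theorem sum_eq_add_sum_filter_add_sum_filter {M : Type*} [AddCommMonoid M] (g : Finset ι → M) :
    ∑ A, g A = g ∅ + ∑ A ∈ univ.filter (fun A : Finset ι => A.Nonempty ∧ A.card ≤ d), g A +
      ∑ A ∈ univ.filter (fun A : Finset ι => d < A.card), g A := by
  classical
  have hsmall : univ.filter (fun A : Finset ι => ¬d < A.card) =
      insert ∅ (univ.filter fun A : Finset ι => A.Nonempty ∧ A.card ≤ d) := by
    ext A
    rcases A.eq_empty_or_nonempty with rfl | hA
    · simp
    · simp [hA, hA.ne_empty]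
  rw [← sum_filter_add_sum_filter_not univ (fun A : Finset ι => d < A.card), hsmall,
    sum_insert (by simp), add_comm]

theorem sum_extremeDensity_mul_prod [DecidableEq ι] (hlohi : ∀ k, lo k ≠ hi k) {K : Finset ι}
    (hK : K.card ≤ d) (f : ι → Bool → ℝ) :
    ∑ ε : ι → Bool, extremeDensity lo hi d e ε * ∏ k ∈ K, f k (ε k) =
      ∏ k ∈ K, ∑ b, baryWeight (lo k) (hi k) 0 b * f k b := by
  refine sum_pi_prod_mul_one_add_mul_prod (fun k => sum_baryWeight (hlohi k) 0)
    (fun k => sum_baryWeight_zero_mul_scaled (hlohi k)) _ (fun A hAK => ?_) f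
  rw [if_neg (not_lt.2 ((card_le_card hAK).trans hK))]

variable (hlo : ∀ k, lo k < 0) (hhi : ∀ k, 0 < hi k)
include hlo hhi

theorem multiplicativeError_nonneg : 0 ≤ multiplicativeError lo hi d e :=
  sum_nonneg fun _ _ => mul_nonneg
    (prod_nonneg fun j _ => inv_nonneg.2 (le_min (neg_pos.2 (hlo j)).le (hhi j).le))
    (abs_nonneg _)

theorem sum_filter_mul_prod_twoPointScaled_le (ε : ι → Bool) :
    ∑ A ∈ univ.filter (fun A : Finset ι => A.Nonempty ∧ A.card ≤ d),
      (∏ j ∈ A, twoPointScaled (lo j) (hi j) (ε j)) * e A ≤ multiplicativeError lo hi d e := by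
  refine (le_abs_self _).trans <| (abs_sum_le_sum_abs _ _).trans <| sum_le_sum fun A _ => ?_
  rw [abs_mul, abs_prod]
  gcongr with j
  exact abs_twoPointScaled_le (hlo j) (hhi j) (ε j)

theorem one_add_multiplicativeError_mul_extremeDensity (he : e ∅ = 1) (ε : ι → Bool) :
    (1 + multiplicativeError lo hi d e) * extremeDensity lo hi d e ε =
      (∏ k, baryWeight (lo k) (hi k) 0 (ε k)) *
          ∑ A, (∏ j ∈ A, twoPointScaled (lo j) (hi j) (ε j)) * e A +
        (∏ k, baryWeight (lo k) (hi k) 0 (ε k)) * (multiplicativeError lo hi d e -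
          ∑ A ∈ univ.filter (fun A : Finset ι => A.Nonempty ∧ A.card ≤ d),
            (∏ j ∈ A, twoPointScaled (lo j) (hi j) (ε j)) * e A) := by
  have hM := (add_pos_of_pos_of_nonneg one_pos (multiplicativeError_nonneg d e hlo hhi)).ne'
  have hlarge : (1 + multiplicativeError lo hi d e) * ∑ A,
      (∏ j ∈ A, twoPointScaled (lo j) (hi j) (ε j)) *
        (if d < A.card then e A / (1 + multiplicativeError lo hi d e) else 0) =
      ∑ A ∈ univ.filter (fun A : Finset ι => d < A.card),
        (∏ j ∈ A, twoPointScaled (lo j) (hi j) (ε j)) * e A := by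
    rw [sum_filter, mul_sum]
    refine sum_congr rfl fun A _ => ?_
    split_ifs
    · field_simp
    · simp
  rw [sum_eq_add_sum_filter_add_sum_filter d, ← hlarge, extremeDensity, he, prod_empty]
  ring

theorem extremeDensity_nonneg (he : e ∅ = 1) {ε : ι → Bool}
    (hT : 0 ≤ (∏ k, baryWeight (lo k) (hi k) 0 (ε k)) *
      ∑ A, (∏ j ∈ A, twoPointScaled (lo j) (hi j) (ε j)) * e A) :
    0 ≤ extremeDensity lo hi d e ε := by
  have hP : 0 ≤ ∏ k, baryWeight (lo k) (hi k) 0 (ε k) :=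
    prod_nonneg fun k _ => baryWeight_nonneg (hlo k).le (hhi k).le _
  refine nonneg_of_mul_nonneg_right ?_
    (add_pos_of_pos_of_nonneg one_pos (multiplicativeError_nonneg d e hlo hhi))
  rw [one_add_multiplicativeError_mul_extremeDensity d e hlo hhi he ε]
  exact add_nonneg hT
    (mul_nonneg hP (sub_nonneg.2 (sum_filter_mul_prod_twoPointScaled_le d e hlo hhi ε)))

theorem le_one_add_multiplicativeError_mul_extremeDensity (he : e ∅ = 1) (ε : ι → Bool) :
    (∏ k, baryWeight (lo k) (hi k) 0 (ε k)) *
        ∑ A, (∏ j ∈ A, twoPointScaled (lo j) (hi j) (ε j)) * e A ≤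
      (1 + multiplicativeError lo hi d e) * extremeDensity lo hi d e ε := by
  have hP : 0 ≤ ∏ k, baryWeight (lo k) (hi k) 0 (ε k) :=
    prod_nonneg fun k _ => baryWeight_nonneg (hlo k).le (hhi k).le _
  rw [one_add_multiplicativeError_mul_extremeDensity d e hlo hhi he ε, le_add_iff_nonneg_right]
  exact mul_nonneg hP (sub_nonneg.2 (sum_filter_mul_prod_twoPointScaled_le d e hlo hhi ε))

end Density

section WeightedPMF

variable {α : Type*} [Fintype α] {Q : α → ℝ}

def pmfOfWeights (Q : α → ℝ) (hQ0 : ∀ a, 0 ≤ Q a) (hQ1 : ∑ a, Q a = 1) : PMF α :=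
  PMF.ofFintype (fun a => ENNReal.ofReal (Q a)) <| by
    rw [← ENNReal.ofReal_sum_of_nonneg fun a _ => hQ0 a, hQ1, ENNReal.ofReal_one]

variable [MeasurableSpace α] [MeasurableSingletonClass α] (hQ0 : ∀ a, 0 ≤ Q a)
  (hQ1 : ∑ a, Q a = 1)

theorem integral_pmfOfWeights (f : α → ℝ) :
    ∫ a, f a ∂(pmfOfWeights Q hQ0 hQ1).toMeasure = ∑ a, Q a * f a := by
  simp [PMF.integral_eq_sum, pmfOfWeights, ENNReal.toReal_ofReal (hQ0 _)]

theorem measureReal_pmfOfWeights (s : Set α) :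
    (pmfOfWeights Q hQ0 hQ1).toMeasure.real s = ∑ a, Q a * s.indicator 1 a := by
  rw [← integral_indicator_one s.toFinite.measurableSet, integral_pmfOfWeights]

end WeightedPMF

theorem iIndepFun_subtype_of_measureReal_inter_preimage {Ω ι β : Type*} [MeasurableSpace Ω]
    [MeasurableSpace β] {ν : Measure Ω} [IsFiniteMeasure ν] {X : ι → Ω → β} (S : Finset ι)
    (h : ∀ K ⊆ S, ∀ B : ι → Set β, (∀ k ∈ K, MeasurableSet (B k)) →
      ν.real (⋂ k ∈ K, X k ⁻¹' B k) = ∏ k ∈ K, ν.real (X k ⁻¹' B k)) :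
    iIndepFun (fun i : S => X i) ν := by
  classical
  rw [iIndepFun_iff_measure_inter_preimage_eq_mul]
  intro T sets hsets
  let B : ι → Set β := fun k => if hk : k ∈ S then sets ⟨k, hk⟩ else Set.univ
  have hB : ∀ i : S, B i = sets i := fun i => dif_pos i.2
  have hT := h (T.image Subtype.val)
    (fun k hk => by obtain ⟨i, -, rfl⟩ := mem_image.1 hk; exact i.2) B
    (fun k hk => by obtain ⟨i, hi, rfl⟩ := mem_image.1 hk; rw [hB]; exact hsets i hi)
  rw [set_biInter_finset_image, prod_image Subtype.val_injective.injOn] at hT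
  simp only [hB] at hT
  rw [← ofReal_measureReal, hT, ENNReal.ofReal_prod_of_nonneg fun _ _ => measureReal_nonneg]
  exact prod_congr rfl fun _ _ => ofReal_measureReal

section ExtremeLaw

variable {ι : Type*} [Fintype ι] [DecidableEq ι] {lo hi : ι → ℝ} {d : ℕ} {e : Finset ι → ℝ}

theorem iIndepFun_twoPointValue_extremeDensity (hlohi : ∀ k, lo k ≠ hi k)
    (hQ0 : ∀ ε, 0 ≤ extremeDensity lo hi d e ε) (hQ1 : ∑ ε, extremeDensity lo hi d e ε = 1)
    {S : Finset ι} (hS : S.card ≤ d) :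
    iIndepFun (fun i : S => fun ε : ι → Bool => twoPointValue (lo i) (hi i) (ε i))
      (pmfOfWeights _ hQ0 hQ1).toMeasure := by
  refine iIndepFun_subtype_of_measureReal_inter_preimage
    (X := fun k (ε : ι → Bool) => twoPointValue (lo k) (hi k) (ε k)) S fun K hKS B _ => ?_
  have hmeasure : ∀ K ⊆ S, (pmfOfWeights _ hQ0 hQ1).toMeasure.real
      (⋂ k ∈ K, (fun ε : ι → Bool => twoPointValue (lo k) (hi k) (ε k)) ⁻¹' B k) =
        ∏ k ∈ K, ∑ b, baryWeight (lo k) (hi k) 0 b *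
          (B k).indicator 1 (twoPointValue (lo k) (hi k) b) := fun K hKS => by
    rw [measureReal_pmfOfWeights, ← sum_extremeDensity_mul_prod d e hlohi
      ((card_le_card hKS).trans hS)]
    refine sum_congr rfl fun ε _ => congrArg _ ?_
    have h := prod_indicator_const_apply K
      (fun k => (fun ε : ι → Bool => twoPointValue (lo k) (hi k) (ε k)) ⁻¹' B k)
      (1 : (ι → Bool) → ℝ) ε
    rw [one_pow] at h
    exact h.symm
  rw [hmeasure K hKS]
  refine prod_congr rfl fun k hk => ?_
  simpa using (hmeasure {k} (singleton_subset_iff.2 (hKS hk))).symm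

theorem sum_extremeDensity (hlohi : ∀ k, lo k ≠ hi k) : ∑ ε, extremeDensity lo hi d e ε = 1 := by
  simpa using sum_extremeDensity_mul_prod d e hlohi (K := ∅) (Nat.zero_le d) fun _ _ => 1

theorem integral_twoPointValue_extremeDensity (hlohi : ∀ k, lo k ≠ hi k) (hd : 0 < d)
    (hQ0 : ∀ ε, 0 ≤ extremeDensity lo hi d e ε) (hQ1 : ∑ ε, extremeDensity lo hi d e ε = 1)
    (k : ι) :
    ∫ ε, twoPointValue (lo k) (hi k) (ε k) ∂(pmfOfWeights _ hQ0 hQ1).toMeasure = 0 := by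
  have h := sum_extremeDensity_mul_prod d e hlohi (K := {k}) (by rwa [card_singleton])
    fun k => twoPointValue (lo k) (hi k)
  simp only [prod_singleton, sum_baryWeight_mul_value (hlohi k)] at h
  rw [integral_pmfOfWeights, h]

end ExtremeLaw

section Moments

variable {ι : Type*} [Fintype ι] {lo hi : ι → ℝ} {Ω : Type*} [MeasurableSpace Ω]
  {μ : Measure Ω} {φ : ι → Ω → ℝ}

theorem integrable_prod_of_bounded [IsFiniteMeasure μ] (hφ : ∀ k, AEStronglyMeasurable (φ k) μ)
    (hbound : ∀ k, ∀ᵐ ω ∂μ, lo k ≤ φ k ω ∧ φ k ω ≤ hi k) (A : Finset ι) :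
    Integrable (fun ω => ∏ j ∈ A, φ j ω) μ := by
  refine .of_bound (Finset.aestronglyMeasurable_fun_prod A fun j _ => hφ j)
    (∏ j ∈ A, max |lo j| |hi j|) ?_
  filter_upwards [ae_all_iff.2 hbound] with ω hω
  rw [norm_prod]
  exact prod_le_prod (fun _ _ => norm_nonneg _) fun j _ => abs_le_max_abs_abs (hω j).1 (hω j).2

theorem integral_prod_baryWeight_nonneg (hbound : ∀ k, ∀ᵐ ω ∂μ, lo k ≤ φ k ω ∧ φ k ω ≤ hi k)
    (ε : ι → Bool) : 0 ≤ ∫ ω, ∏ k, baryWeight (lo k) (hi k) (φ k ω) (ε k) ∂μ :=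
  integral_nonneg_of_ae <| by
    filter_upwards [ae_all_iff.2 hbound] with ω hω
    exact prod_nonneg fun k _ => baryWeight_nonneg (hω k).1 (hω k).2 _

variable [IsFiniteMeasure μ] (hφ : ∀ k, AEStronglyMeasurable (φ k) μ)
  (hbound : ∀ k, ∀ᵐ ω ∂μ, lo k ≤ φ k ω ∧ φ k ω ≤ hi k) (hlo : ∀ k, lo k < 0)
  (hhi : ∀ k, 0 < hi k)
include hφ hbound hlo hhi

theorem integrable_prod_baryWeight (ε : ι → Bool) :
    Integrable (fun ω => ∏ k, baryWeight (lo k) (hi k) (φ k ω) (ε k)) μ := by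
  rw [funext fun ω => prod_baryWeight_eq hlo hhi (fun k => φ k ω) ε]
  exact (integrable_finsetSum _ fun A _ =>
    (integrable_prod_of_bounded hφ hbound A).const_mul _).const_mul _

theorem integral_prod_baryWeight (ε : ι → Bool) :
    ∫ ω, ∏ k, baryWeight (lo k) (hi k) (φ k ω) (ε k) ∂μ =
      (∏ k, baryWeight (lo k) (hi k) 0 (ε k)) *
        ∑ A, (∏ j ∈ A, twoPointScaled (lo j) (hi j) (ε j)) * ∫ ω, ∏ j ∈ A, φ j ω ∂μ := by
  rw [funext fun ω => prod_baryWeight_eq hlo hhi (fun k => φ k ω) ε, integral_const_mul,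
    integral_finsetSum _ fun A _ => (integrable_prod_of_bounded hφ hbound A).const_mul _]
  simp only [integral_const_mul]

theorem integral_map_sum_le [DecidableEq ι] {Φ : ℝ → ℝ} (hΦ : ConvexOn ℝ Set.univ Φ)
    (hΦ0 : ∀ t, 0 ≤ Φ t) (a : ι → ℝ) :
    ∫ ω, Φ (∑ k, a k * φ k ω) ∂μ ≤ ∑ ε : ι → Bool,
      (∫ ω, ∏ k, baryWeight (lo k) (hi k) (φ k ω) (ε k) ∂μ) *
        Φ (∑ k, a k * twoPointValue (lo k) (hi k) (ε k)) := by
  have hint : ∀ ε : ι → Bool, Integrable (fun ω =>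
      (∏ k, baryWeight (lo k) (hi k) (φ k ω) (ε k)) *
        Φ (∑ k, a k * twoPointValue (lo k) (hi k) (ε k))) μ :=
    fun ε => (integrable_prod_baryWeight hφ hbound hlo hhi ε).mul_const _
  calc ∫ ω, Φ (∑ k, a k * φ k ω) ∂μ
      ≤ ∫ ω, ∑ ε : ι → Bool, (∏ k, baryWeight (lo k) (hi k) (φ k ω) (ε k)) *
          Φ (∑ k, a k * twoPointValue (lo k) (hi k) (ε k)) ∂μ := by
        refine integral_mono_of_nonneg (ae_of_all _ fun _ => hΦ0 _)
          (integrable_finsetSum _ fun ε _ => hint ε) ?_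
        filter_upwards [ae_all_iff.2 hbound] with ω hω
        exact map_sum_le_sum_prod_baryWeight (fun k => (hlo k).trans (hhi k)) hΦ a hω
    _ = _ := by
        rw [integral_finsetSum _ fun ε _ => hint ε]
        exact sum_congr rfl fun ε _ => integral_mul_const _ _

end Moments

end

end ExtremeInequality

open ExtremeInequality in
theorem extreme_inequality_sums_general
    {Ω : Type*} [MeasurableSpace Ω] (μ : Measure Ω) [IsProbabilityMeasure μ]
    (n d : ℕ) (hd : 0 < d)
    (Φ : ℝ → ℝ) (hΦconv : ConvexOn ℝ Set.univ Φ) (hΦ0 : ∀ t, 0 ≤ Φ t)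
    (φ : Fin n → Ω → ℝ) (hφmeas : ∀ k, Measurable (φ k))
    (lo hi : Fin n → ℝ) (hlo : ∀ k, lo k < 0) (hhi : ∀ k, 0 < hi k)
    (hbound : ∀ k, ∀ᵐ ω ∂μ, lo k ≤ φ k ω ∧ φ k ω ≤ hi k)
    (a : Fin n → ℝ) :
    ∃ (Ω' : Type) (_ : MeasurableSpace Ω') (μ' : Measure Ω')
      (_ : IsProbabilityMeasure μ') (ξ : Fin n → Ω' → ℝ),
      (∀ k, Measurable (ξ k)) ∧
      (∀ k ω', ξ k ω' = lo k ∨ ξ k ω' = hi k) ∧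
      (∀ k, ∫ ω', ξ k ω' ∂μ' = 0) ∧
      (∀ S : Finset (Fin n), S.card ≤ d →
        iIndepFun (fun i : S => ξ i) μ') ∧
      ∫ ω, Φ (∑ k, a k * φ k ω) ∂μ ≤
        (1 + ∑ A ∈ Finset.univ.filter
              (fun A : Finset (Fin n) => A.Nonempty ∧ A.card ≤ d),
            (∏ j ∈ A, (min (-(lo j)) (hi j))⁻¹) * |∫ ω, ∏ j ∈ A, φ j ω ∂μ|) *
          ∫ ω', Φ (∑ k, a k * ξ k ω') ∂μ' := by
  set e : Finset (Fin n) → ℝ := fun A => ∫ ω, ∏ j ∈ A, φ j ω ∂μ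
  have he : e ∅ = 1 := by simp [e]
  have hlohi : ∀ k, lo k ≠ hi k := fun k => ((hlo k).trans (hhi k)).ne
  have hφ : ∀ k, AEStronglyMeasurable (φ k) μ := fun k => (hφmeas k).aestronglyMeasurable
  have hQ0 : ∀ ε, 0 ≤ extremeDensity lo hi d e ε := fun ε =>
    extremeDensity_nonneg d e hlo hhi he <| by
      rw [← integral_prod_baryWeight hφ hbound hlo hhi]
      exact integral_prod_baryWeight_nonneg hbound ε
  have hQ1 := sum_extremeDensity (d := d) (e := e) hlohi
  refine ⟨Fin n → Bool, inferInstance, (pmfOfWeights _ hQ0 hQ1).toMeasure, inferInstance,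
    fun k ε => twoPointValue (lo k) (hi k) (ε k), fun _ => .of_discrete,
    fun k ε => twoPointValue_eq_or _ _ _,
    integral_twoPointValue_extremeDensity hlohi hd hQ0 hQ1,
    fun S hS => iIndepFun_twoPointValue_extremeDensity hlohi hQ0 hQ1 hS, ?_⟩
  calc ∫ ω, Φ (∑ k, a k * φ k ω) ∂μ
      ≤ ∑ ε : Fin n → Bool, (∫ ω, ∏ k, baryWeight (lo k) (hi k) (φ k ω) (ε k) ∂μ) *
          Φ (∑ k, a k * twoPointValue (lo k) (hi k) (ε k)) :=
        integral_map_sum_le hφ hbound hlo hhi hΦconv hΦ0 a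
    _ ≤ ∑ ε : Fin n → Bool, ((1 + multiplicativeError lo hi d e) * extremeDensity lo hi d e ε) *
          Φ (∑ k, a k * twoPointValue (lo k) (hi k) (ε k)) := by
        refine sum_le_sum fun ε _ => mul_le_mul_of_nonneg_right ?_ (hΦ0 _)
        rw [integral_prod_baryWeight hφ hbound hlo hhi]
        exact le_one_add_multiplicativeError_mul_extremeDensity d e hlo hhi he ε
    _ = (1 + multiplicativeError lo hi d e) *
          ∫ ε, Φ (∑ k, a k * twoPointValue (lo k) (hi k) (ε k))
            ∂(pmfOfWeights _ hQ0 hQ1).toMeasure := by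
        rw [integral_pmfOfWeights, mul_sum]
        simp only [mul_assoc]

/-- Theorem A of \[Kar4\]. For `Φ : ℝ → [0,∞)` convex and random variables
`A_k ≤ φ_k ≤ B_k` a.s. (`A_k < 0 < B_k`), any integer `d ≤ n` and reals `a_1, …, a_n`, there are
`{A_k, B_k}`-valued mean-zero `d`-independent random variables `ξ_k` with
`E[Φ(∑ a_k φ_k)] ≤ (1 + μ_d(φ)) E[Φ(∑ a_k ξ_k)]`. -/
theorem extreme_inequality_sums
    {Ω : Type*} [MeasurableSpace Ω] (μ : Measure Ω) [IsProbabilityMeasure μ]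
    (n d : ℕ) (hd : 0 < d) (hdn : d ≤ n)
    (Φ : ℝ → ℝ) (hΦconv : ConvexOn ℝ Set.univ Φ) (hΦ0 : ∀ t, 0 ≤ Φ t)
    (φ : Fin n → Ω → ℝ) (hφmeas : ∀ k, Measurable (φ k))
    (lo hi : Fin n → ℝ) (hlo : ∀ k, lo k < 0) (hhi : ∀ k, 0 < hi k)
    (hbound : ∀ k, ∀ᵐ ω ∂μ, lo k ≤ φ k ω ∧ φ k ω ≤ hi k)
    (a : Fin n → ℝ) :
    ∃ (Ω' : Type) (_ : MeasurableSpace Ω') (μ' : Measure Ω')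
      (_ : IsProbabilityMeasure μ') (ξ : Fin n → Ω' → ℝ),
      (∀ k, Measurable (ξ k)) ∧
      (∀ k ω', ξ k ω' = lo k ∨ ξ k ω' = hi k) ∧
      (∀ k, ∫ ω', ξ k ω' ∂μ' = 0) ∧
      (∀ S : Finset (Fin n), S.card ≤ d →
        iIndepFun (fun i : S => ξ i) μ') ∧
      ∫ ω, Φ (∑ k, a k * φ k ω) ∂μ ≤
        (1 + ∑ A ∈ Finset.univ.filter
              (fun A : Finset (Fin n) => A.Nonempty ∧ A.card ≤ d),
            (∏ j ∈ A, (min (-(lo j)) (hi j))⁻¹) * |∫ ω, ∏ j ∈ A, φ j ω ∂μ|) *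
          ∫ ω', Φ (∑ k, a k * ξ k ω') ∂μ' :=
  extreme_inequality_sums_general μ n d hd Φ hΦconv hΦ0 φ hφmeas lo hi hlo hhi hbound a
end

section
/- Let Φ : ℝ → [0,∞) be a convex function and let φ_1, …, φ_n be a multiplicative system of random variables satisfying ‖φ_k‖_∞ ≤ 1. Then for any real coefficients a_1, …, a_n, E[Φ(Σ_{k=1}^n a_k φ_k)] ≤ E[Φ(Σ_{k=1}^n a_k r_k)], where r_1, …, r_n are independent Rademacher random variables. -/
/-!
Every point `x` of the cube `[-1, 1]ⁿ` is the barycenter of the vertices `ε ∈ {±1}ⁿ` with the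
product weights `w_x(ε) = ∏ₖ (1 + εₖ xₖ) / 2`, so by Jensen
`Φ(∑ aₖ xₖ) ≤ ∑_ε w_x(ε) Φ(∑ aₖ εₖ)`, with equality when `x` is itself a vertex.
Expanding the product, `w_x(ε) = 2⁻ⁿ ∑_A ∏_{k ∈ A} εₖ xₖ`, so for a multiplicative system `φ`
all terms with `A ≠ ∅` vanish in expectation and `E[w_φ(ε)] = 2⁻ⁿ`. Independent Rademacher
variables form a multiplicative system with values at the vertices, so both sides of the
inequality are compared with the same average `2⁻ⁿ ∑_ε Φ(∑ aₖ εₖ)`.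
-/

open MeasureTheory ProbabilityTheory Finset

noncomputable def boolSign (b : Bool) : ℝ := if b then 1 else -1

lemma sum_bool_one_add_boolSign_mul_div_two (t : ℝ) :
    ∑ b : Bool, (1 + boolSign b * t) / 2 = 1 := by
  simp [boolSign]; ring

lemma sum_bool_one_add_boolSign_mul_div_two_mul_boolSign (t : ℝ) :
    ∑ b : Bool, (1 + boolSign b * t) / 2 * boolSign b = t := by
  simp [boolSign]; ring

section Cube

variable {ι : Type*}

noncomputable def cubeVertex (ε : ι → Bool) : ι → ℝ := fun k => boolSign (ε k)

variable [Fintype ι]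

noncomputable def cubeWeight (x : ι → ℝ) (ε : ι → Bool) : ℝ := ∏ k, (1 + boolSign (ε k) * x k) / 2

lemma cubeWeight_nonneg {x : ι → ℝ} (hx : ∀ k, |x k| ≤ 1) (ε : ι → Bool) :
    0 ≤ cubeWeight x ε := by
  refine prod_nonneg fun k _ => ?_
  have := abs_le.mp (hx k)
  cases ε k <;> simp [boolSign] <;> linarith

lemma cubeVertex_eq_of_cubeWeight_ne_zero {x : ι → ℝ} (hx : ∀ k, x k = -1 ∨ x k = 1)
    {ε : ι → Bool} (h : cubeWeight x ε ≠ 0) : cubeVertex ε = x := by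
  ext k
  have hk := prod_ne_zero_iff.mp h k (mem_univ k)
  rcases hx k with hxk | hxk <;> cases hε : ε k <;>
    simp_all [cubeVertex, boolSign]

lemma cubeWeight_eq_sum_powerset (x : ι → ℝ) (ε : ι → Bool) :
    cubeWeight x ε =
      (∑ A ∈ univ.powerset, (∏ k ∈ A, boolSign (ε k)) * ∏ k ∈ A, x k) / 2 ^ Fintype.card ι := by
  rw [cubeWeight, prod_div_distrib, prod_const, card_univ, prod_one_add]
  simp only [prod_mul_distrib]

variable [DecidableEq ι]

lemma sum_cubeWeight (x : ι → ℝ) : ∑ ε, cubeWeight x ε = 1 := by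
  have := Fintype.prod_sum fun k (b : Bool) => (1 + boolSign b * x k) / 2
  simp only [sum_bool_one_add_boolSign_mul_div_two, prod_const_one] at this
  exact this.symm

lemma cubeWeight_le_one {x : ι → ℝ} (hx : ∀ k, |x k| ≤ 1) (ε : ι → Bool) :
    cubeWeight x ε ≤ 1 :=
  (single_le_sum (fun ε _ => cubeWeight_nonneg hx ε) (mem_univ ε)).trans_eq (sum_cubeWeight x)

lemma sum_cubeWeight_mul_boolSign (x : ι → ℝ) (k : ι) :
    ∑ ε, cubeWeight x ε * boolSign (ε k) = x k := by
  -- attaching `boolSign (ε k)` to the `k`-th factor keeps the sum over `ε` a product of sums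
  let g : ι → Bool → ℝ := fun j b => (1 + boolSign b * x j) / 2 * if j = k then boolSign b else 1
  have hg : ∀ ε : ι → Bool, ∏ j, g j (ε j) = cubeWeight x ε * boolSign (ε k) := by
    intro ε
    simp only [g, prod_mul_distrib, prod_ite_eq', mem_univ, if_true, cubeWeight]
  have hsum : ∀ j, ∑ b, g j b = if j = k then x k else 1 := by
    intro j
    by_cases hj : j = k
    · subst hj; simp only [g, if_true, sum_bool_one_add_boolSign_mul_div_two_mul_boolSign]
    · simp only [g, hj, if_false, mul_one, sum_bool_one_add_boolSign_mul_div_two]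
  simp_rw [← hg, ← Fintype.prod_sum g, hsum, prod_ite_eq', mem_univ, if_true]

lemma sum_cubeWeight_smul_cubeVertex (x : ι → ℝ) : ∑ ε, cubeWeight x ε • cubeVertex ε = x := by
  ext k
  simp only [Finset.sum_apply, Pi.smul_apply, smul_eq_mul, cubeVertex, sum_cubeWeight_mul_boolSign]

lemma ConvexOn.le_sum_cubeWeight_mul {f : (ι → ℝ) → ℝ} (hf : ConvexOn ℝ (Set.Icc (-1) 1) f)
    {x : ι → ℝ} (hx : ∀ k, |x k| ≤ 1) :
    f x ≤ ∑ ε, cubeWeight x ε * f (cubeVertex ε) := by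
  have hvertex : ∀ ε, cubeVertex ε ∈ Set.Icc (-1 : ι → ℝ) 1 := fun ε =>
    ⟨fun k => by simp only [cubeVertex, boolSign]; split_ifs <;> norm_num,
     fun k => by simp only [cubeVertex, boolSign]; split_ifs <;> norm_num⟩
  have := hf.map_sum_le (t := univ) (fun ε _ => cubeWeight_nonneg hx ε) (sum_cubeWeight x)
    fun ε _ => hvertex ε
  simpa only [sum_cubeWeight_smul_cubeVertex, smul_eq_mul] using this

lemma sum_cubeWeight_mul_of_forall_eq_neg_one_or_one (f : (ι → ℝ) → ℝ) {x : ι → ℝ}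
    (hx : ∀ k, x k = -1 ∨ x k = 1) :
    ∑ ε, cubeWeight x ε * f (cubeVertex ε) = f x := by
  calc ∑ ε, cubeWeight x ε * f (cubeVertex ε) = ∑ ε, cubeWeight x ε * f x := by
        refine sum_congr rfl fun ε _ => ?_
        by_cases h : cubeWeight x ε = 0
        · simp [h]
        · rw [cubeVertex_eq_of_cubeWeight_ne_zero hx h]
    _ = f x := by rw [← sum_mul, sum_cubeWeight, one_mul]

end Cube

section Multiplicative

variable {ι Ω : Type*} [MeasurableSpace Ω] {μ : Measure Ω}

def IsMultiplicativeSystem (μ : Measure Ω) (ψ : ι → Ω → ℝ) : Prop :=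
  ∀ A : Finset ι, A.Nonempty → ∫ ω, ∏ j ∈ A, ψ j ω ∂μ = 0

variable {ψ : ι → Ω → ℝ}

lemma isMultiplicativeSystem_of_iIndepFun (hind : iIndepFun ψ μ) (hmeas : ∀ k, Measurable (ψ k))
    (hmean : ∀ k, ∫ ω, ψ k ω ∂μ = 0) : IsMultiplicativeSystem μ ψ := by
  intro A ⟨j, hj⟩
  have hindA : iIndepFun (fun k : A => ψ k) μ := hind.precomp Subtype.val_injective
  simp_rw [← prod_coe_sort A]
  rw [hindA.integral_fun_prod_eq_prod_integral fun k => (hmeas k).aestronglyMeasurable]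
  exact prod_eq_zero (mem_univ ⟨j, hj⟩) (hmean j)

lemma integrable_prod_of_abs_le_one [Countable ι] [IsFiniteMeasure μ]
    (hmeas : ∀ k, Measurable (ψ k)) (hbdd : ∀ k, ∀ᵐ ω ∂μ, |ψ k ω| ≤ 1)
    (A : Finset ι) :
    Integrable (fun ω => ∏ k ∈ A, ψ k ω) μ := by
  refine .of_bound (measurable_prod A fun k _ => hmeas k).aestronglyMeasurable 1 ?_
  filter_upwards [ae_all_iff.mpr hbdd] with ω hω
  rw [Real.norm_eq_abs, abs_prod]
  exact prod_le_one (fun k _ => abs_nonneg _) fun k _ => hω k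

variable [Fintype ι] [DecidableEq ι]

lemma integrable_cubeWeight [IsFiniteMeasure μ] (hmeas : ∀ k, Measurable (ψ k))
    (hbdd : ∀ k, ∀ᵐ ω ∂μ, |ψ k ω| ≤ 1) (ε : ι → Bool) :
    Integrable (fun ω => cubeWeight (ψ · ω) ε) μ := by
  have hmeas_weight : Measurable fun ω => cubeWeight (ψ · ω) ε :=
    measurable_prod _ fun k _ => (((hmeas k).const_mul _).const_add 1).div_const 2
  refine .of_bound hmeas_weight.aestronglyMeasurable 1 ?_
  filter_upwards [ae_all_iff.mpr hbdd] with ω hω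
  rw [Real.norm_eq_abs, abs_of_nonneg (cubeWeight_nonneg hω ε)]
  exact cubeWeight_le_one hω ε

lemma IsMultiplicativeSystem.integral_cubeWeight [IsProbabilityMeasure μ]
    (hψ : IsMultiplicativeSystem μ ψ) (hmeas : ∀ k, Measurable (ψ k))
    (hbdd : ∀ k, ∀ᵐ ω ∂μ, |ψ k ω| ≤ 1) (ε : ι → Bool) :
    ∫ ω, cubeWeight (ψ · ω) ε ∂μ = (2 ^ Fintype.card ι)⁻¹ := by
  have hterm : ∀ A ∈ (univ : Finset ι).powerset,
      ∫ ω, (∏ k ∈ A, boolSign (ε k)) * ∏ k ∈ A, ψ k ω ∂μ = if A = ∅ then 1 else 0 := by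
    intro A _
    rw [integral_const_mul]
    split_ifs with hA
    · simp [hA]
    · rw [hψ A (nonempty_iff_ne_empty.mpr hA), mul_zero]
  simp_rw [cubeWeight_eq_sum_powerset, div_eq_inv_mul]
  rw [integral_const_mul, integral_finsetSum _ fun A _ =>
      (integrable_prod_of_abs_le_one hmeas hbdd A).const_mul _,
    sum_congr rfl hterm, sum_ite_eq' _ ∅ (fun _ => (1 : ℝ))]
  simp

lemma IsMultiplicativeSystem.integral_sum_cubeWeight_mul [IsProbabilityMeasure μ]
    (hψ : IsMultiplicativeSystem μ ψ) (hmeas : ∀ k, Measurable (ψ k))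
    (hbdd : ∀ k, ∀ᵐ ω ∂μ, |ψ k ω| ≤ 1) (c : (ι → Bool) → ℝ) :
    ∫ ω, ∑ ε, cubeWeight (ψ · ω) ε * c ε ∂μ = (∑ ε, c ε) / 2 ^ Fintype.card ι := by
  rw [integral_finsetSum _ fun ε _ => (integrable_cubeWeight hmeas hbdd ε).mul_const _,
    sum_div]
  refine sum_congr rfl fun ε _ => ?_
  rw [integral_mul_const, hψ.integral_cubeWeight hmeas hbdd ε, inv_mul_eq_div]

end Multiplicative

lemma integral_eq_zero_of_eq_neg_one_or_one {Ω : Type*} [MeasurableSpace Ω] {μ : Measure Ω}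
    [IsProbabilityMeasure μ] {X : Ω → ℝ} (hX : Measurable X) (hval : ∀ ω, X ω = -1 ∨ X ω = 1)
    (hhalf : μ {ω | X ω = 1} = 1 / 2) : ∫ ω, X ω ∂μ = 0 := by
  have hS : MeasurableSet {ω | X ω = 1} := hX (measurableSet_singleton 1)
  have hX_eq : X = fun ω => 2 * Set.indicator {ω | X ω = 1} 1 ω - 1 := by
    ext ω
    rcases hval ω with h | h <;> simp [Set.indicator, h] <;> norm_num
  rw [hX_eq, integral_sub ((integrable_const 1).indicator hS |>.const_mul 2) (integrable_const 1),
    integral_const_mul, integral_indicator_one hS, measureReal_def, hhalf]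
  simp

/-- Theorem B of \[Kar4\], extremal property of Rademacher variables. For a
convex `Φ : ℝ → [0,∞)` and a multiplicative system `φ_1, …, φ_n` with `‖φ_k‖_∞ ≤ 1`,
`E[Φ(∑ a_k φ_k)] ≤ E[Φ(∑ a_k r_k)]` for any reals `a_k`, where `r_1, …, r_n` are independent
Rademacher random variables (values `±1` with probability `1/2` each). -/
theorem extreme_inequality_rademacher
    {Ω : Type*} [MeasurableSpace Ω] (μ : Measure Ω) [IsProbabilityMeasure μ]
    {Ω' : Type*} [MeasurableSpace Ω'] (μ' : Measure Ω') [IsProbabilityMeasure μ']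
    (n : ℕ)
    (Φ : ℝ → ℝ) (hΦconv : ConvexOn ℝ Set.univ Φ) (hΦ0 : ∀ t, 0 ≤ Φ t)
    (φ : Fin n → Ω → ℝ) (hφmeas : ∀ k, Measurable (φ k))
    (hφbdd : ∀ k, ∀ᵐ ω ∂μ, |φ k ω| ≤ 1)
    (hmult : ∀ A : Finset (Fin n), A.Nonempty → ∫ ω, ∏ j ∈ A, φ j ω ∂μ = 0)
    -- independent Rademacher random variables
    (r : Fin n → Ω' → ℝ) (hrmeas : ∀ k, Measurable (r k))
    (hrval : ∀ k ω', r k ω' = -1 ∨ r k ω' = 1)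
    (hrhalf : ∀ k, μ' {ω' | r k ω' = 1} = 1/2)
    (hrindep : iIndepFun r μ')
    (a : Fin n → ℝ) :
    ∫ ω, Φ (∑ k, a k * φ k ω) ∂μ ≤ ∫ ω', Φ (∑ k, a k * r k ω') ∂μ' := by
  set F : (Fin n → ℝ) → ℝ := fun x => Φ (∑ k, a k * x k)
  have hF : ConvexOn ℝ Set.univ F := by
    simpa [Function.comp_def, Fintype.linearCombination_apply, mul_comm] using
      hΦconv.comp_linearMap (Fintype.linearCombination ℝ a)
  have hr : IsMultiplicativeSystem μ' r := isMultiplicativeSystem_of_iIndepFun hrindep hrmeas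
    fun k => integral_eq_zero_of_eq_neg_one_or_one (hrmeas k) (hrval k) (hrhalf k)
  have hrbdd : ∀ k, ∀ᵐ ω' ∂μ', |r k ω'| ≤ 1 := fun k =>
    ae_of_all _ fun ω' => by rcases hrval k ω' with h | h <;> simp [h]
  calc ∫ ω, F (φ · ω) ∂μ ≤ ∫ ω, ∑ ε, cubeWeight (φ · ω) ε * F (cubeVertex ε) ∂μ := by
        refine integral_mono_of_nonneg (ae_of_all _ fun ω => hΦ0 _)
          (integrable_finsetSum _ fun ε _ => (integrable_cubeWeight hφmeas hφbdd ε).mul_const _) ?_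
        filter_upwards [ae_all_iff.mpr hφbdd] with ω hω
        exact (hF.subset (Set.subset_univ _) (convex_Icc (-1) 1)).le_sum_cubeWeight_mul hω
    _ = ∫ ω', ∑ ε, cubeWeight (r · ω') ε * F (cubeVertex ε) ∂μ' := by
        rw [IsMultiplicativeSystem.integral_sum_cubeWeight_mul hmult hφmeas hφbdd,
          hr.integral_sum_cubeWeight_mul hrmeas hrbdd]
    _ = ∫ ω', F (r · ω') ∂μ' :=
        integral_congr_ae (ae_of_all _ fun ω' =>
          sum_cubeWeight_mul_of_forall_eq_neg_one_or_one F (hrval · ω'))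
end

section
/- Let φ = (φ_1, …, φ_n) be random variables on a probability space satisfying A_k ≤ φ_k ≤ B_k almost surely, where A_k < 0 < B_k. Then for every λ > 0, P(Σ_{k=1}^n φ_k > λ) ≤ (1 + μ_n(φ)) · exp(−2λ² / Σ_{k=1}^n (B_k − A_k)²). -/
open MeasureTheory ProbabilityTheory

/-!
On `[A, B]` the convex function `x ↦ exp (t x)` lies below its chord `α + β x`, so
`E[exp (t ∑ φ_k)] ≤ E[∏ (α_k + β_k φ_k)]`. Expanding the product expresses the right-hand side
through the mixed moments `E[∏_{j ∈ A} φ_j]`; since `β_k C_k ≤ α_k`, it is at most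
`(∏ α_k) (1 + μ_n(φ))`. The intercept `α_k` is the moment generating function of the centred
two-point law on `{A_k, B_k}`, so Hoeffding's lemma gives `α_k ≤ exp (t² (B_k - A_k)² / 8)`, and
Chernoff's bound with `t = 4λ / ∑ (B_k - A_k)²` concludes.
-/

open Real Finset

noncomputable def expChordIntercept (A B t : ℝ) : ℝ :=
  (B * exp (t * A) - A * exp (t * B)) / (B - A)

noncomputable def expChordSlope (A B t : ℝ) : ℝ := (exp (t * B) - exp (t * A)) / (B - A)

lemma exp_mul_le_expChord {A B x : ℝ} (hAB : A < B) (hx : x ∈ Set.Icc A B) (t : ℝ) :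
    exp (t * x) ≤ expChordIntercept A B t + expChordSlope A B t * x := by
  have hBA : 0 < B - A := sub_pos.2 hAB
  set θ := (x - A) / (B - A)
  have hθ₀ : 0 ≤ θ := div_nonneg (by linarith [hx.1]) hBA.le
  have hθ₁ : θ ≤ 1 := (div_le_one hBA).2 (by linarith [hx.2])
  have hconv := convexOn_exp.2 (Set.mem_univ (t * A)) (Set.mem_univ (t * B))
    (sub_nonneg.2 hθ₁) hθ₀ (sub_add_cancel 1 θ)
  have hx : (1 - θ) • (t * A) + θ • (t * B) = t * x := by
    simp only [θ, smul_eq_mul]; field_simp; ring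
  rw [hx] at hconv
  refine hconv.trans_eq ?_
  simp only [θ, expChordIntercept, expChordSlope, smul_eq_mul]
  field_simp
  ring

lemma expChordSlope_nonneg {A B t : ℝ} (hAB : A ≤ B) (ht : 0 ≤ t) : 0 ≤ expChordSlope A B t :=
  div_nonneg (sub_nonneg.2 (exp_le_exp.2 (mul_le_mul_of_nonneg_left hAB ht))) (sub_nonneg.2 hAB)

lemma expChordSlope_mul_le_expChordIntercept {A B C : ℝ} (hBC : -B ≤ C) (hCA : C ≤ -A) (t : ℝ) :
    expChordSlope A B t * C ≤ expChordIntercept A B t := by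
  rw [expChordSlope, expChordIntercept, div_mul_eq_mul_div]
  refine div_le_div_of_nonneg_right ?_ (by linarith)
  nlinarith [mul_nonneg (neg_le_iff_add_nonneg'.1 hBC) (exp_pos (t * A)).le,
    mul_nonneg (sub_nonneg.2 hCA) (exp_pos (t * B)).le]

lemma expChordIntercept_le_exp {A B : ℝ} (hA : A ≤ 0) (hB : 0 ≤ B) (hAB : A < B) (t : ℝ) :
    expChordIntercept A B t ≤ exp (t ^ 2 * (B - A) ^ 2 / 8) := by
  have hBA : 0 < B - A := sub_pos.2 hAB
  set ν : Measure ℝ := ENNReal.ofReal (B / (B - A)) • Measure.dirac A +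
    ENNReal.ofReal (-A / (B - A)) • Measure.dirac B
  have hν (f : ℝ → ℝ) : ∫ x, f x ∂ν = B / (B - A) * f A + -A / (B - A) * f B := by
    rw [integral_add_measure ((integrable_dirac enorm_lt_top).smul_measure ENNReal.ofReal_ne_top)
      ((integrable_dirac enorm_lt_top).smul_measure ENNReal.ofReal_ne_top)]
    simp [integral_smul_measure, ENNReal.toReal_ofReal, div_nonneg, hB, hBA.le, hA]
  have : IsProbabilityMeasure ν := by
    constructor
    simp only [ν, Measure.add_apply, Measure.smul_apply, measure_univ, smul_eq_mul, mul_one]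
    rw [← ENNReal.ofReal_add (by positivity) (div_nonneg (neg_nonneg.2 hA) hBA.le), ← add_div,
      ← sub_eq_add_neg, div_self hBA.ne', ENNReal.ofReal_one]
  have hmean : ∫ x, x ∂ν = 0 := by rw [hν]; field_simp; ring
  have hsupp : ∀ᵐ x ∂ν, x ∈ Set.Icc A B := by
    rw [ae_add_measure_iff]
    exact ⟨Measure.ae_smul_measure ((ae_dirac_iff measurableSet_Icc).2 ⟨le_rfl, hAB.le⟩) _,
      Measure.ae_smul_measure ((ae_dirac_iff measurableSet_Icc).2 ⟨hAB.le, le_rfl⟩) _⟩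
  have hoeffding :=
    (hasSubgaussianMGF_of_mem_Icc_of_integral_eq_zero aemeasurable_id hsupp hmean).mgf_le t
  rw [mgf, hν] at hoeffding
  convert hoeffding using 1
  · rw [expChordIntercept]; simp only [id]; field_simp; ring
  · rw [NNReal.coe_pow, NNReal.coe_div, coe_nnnorm, norm_of_nonneg hBA.le]
    congr 1; push_cast; ring

section Moments

variable {Ω ι : Type*} [MeasurableSpace Ω] {μ : Measure Ω} {φ : ι → Ω → ℝ}

lemma memLp_top_of_mem_Icc {f : Ω → ℝ} {a b : ℝ} (hf : AEMeasurable f μ)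
    (hab : ∀ᵐ ω ∂μ, f ω ∈ Set.Icc a b) : MemLp f ⊤ μ :=
  memLp_top_of_bound hf.aestronglyMeasurable (max |a| |b|)
    (hab.mono fun _ h => abs_le_max_abs_abs h.1 h.2)

lemma integrable_finset_prod_of_memLp_top [IsFiniteMeasure μ] (s : Finset ι)
    (hφ : ∀ i, MemLp (φ i) ⊤ μ) : Integrable (fun ω => ∏ i ∈ s, φ i ω) μ :=
  (MemLp.prod' (p := fun _ => ⊤) fun i _ => hφ i).integrable (by simp)

variable [Fintype ι]

noncomputable def multiplicativeError (μ : Measure Ω) (φ : ι → Ω → ℝ) (C : ι → ℝ) : ℝ :=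
  ∑ A ∈ univ.filter (fun A : Finset ι => A.Nonempty),
    (∏ j ∈ A, (C j)⁻¹) * |∫ ω, ∏ j ∈ A, φ j ω ∂μ|

lemma multiplicativeError_nonneg {C : ι → ℝ} (hC : ∀ i, 0 ≤ C i) :
    0 ≤ multiplicativeError μ φ C :=
  sum_nonneg fun _ _ => mul_nonneg (prod_nonneg fun i _ => inv_nonneg.2 (hC i)) (abs_nonneg _)

lemma integral_prod_add_mul_eq [IsFiniteMeasure μ] [DecidableEq ι] (hφ : ∀ i, MemLp (φ i) ⊤ μ)
    (α β : ι → ℝ) :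
    ∫ ω, ∏ i, (α i + β i * φ i ω) ∂μ =
      ∑ T ∈ univ.powerset, (∏ i ∈ T, β i) * (∏ i ∈ univ \ T, α i) * ∫ ω, ∏ i ∈ T, φ i ω ∂μ := by
  have hexpand (ω : Ω) : ∏ i, (α i + β i * φ i ω) =
      ∑ T ∈ univ.powerset, (∏ i ∈ T, β i) * (∏ i ∈ univ \ T, α i) * ∏ i ∈ T, φ i ω := by
    simp_rw [add_comm (α _), prod_add, prod_mul_distrib]
    exact sum_congr rfl fun T _ => by ring
  simp_rw [hexpand]
  rw [integral_finsetSum _ fun T _ => (integrable_finset_prod_of_memLp_top T hφ).const_mul _]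
  simp_rw [integral_const_mul]

lemma integral_prod_add_mul_le [IsProbabilityMeasure μ] (hφ : ∀ i, MemLp (φ i) ⊤ μ)
    {α β C : ι → ℝ} (hβ : ∀ i, 0 ≤ β i) (hC : ∀ i, 0 < C i) (hβα : ∀ i, β i * C i ≤ α i) :
    ∫ ω, ∏ i, (α i + β i * φ i ω) ∂μ ≤ (∏ i, α i) * (1 + multiplicativeError μ φ C) := by
  classical
  have hα (i : ι) : 0 ≤ α i := (mul_nonneg (hβ i) (hC i).le).trans (hβα i)
  have hterm (T : Finset ι) :
      (∏ i ∈ T, β i) * (∏ i ∈ univ \ T, α i) * ∫ ω, ∏ i ∈ T, φ i ω ∂μ ≤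
        (∏ i, α i) * ((∏ i ∈ T, (C i)⁻¹) * |∫ ω, ∏ i ∈ T, φ i ω ∂μ|) := by
    have hβT : ∏ i ∈ T, β i ≤ (∏ i ∈ T, α i) * ∏ i ∈ T, (C i)⁻¹ := by
      rw [← prod_mul_distrib]
      exact prod_le_prod (fun i _ => hβ i) fun i _ => (le_mul_inv_iff₀ (hC i)).2 (hβα i)
    calc (∏ i ∈ T, β i) * (∏ i ∈ univ \ T, α i) * ∫ ω, ∏ i ∈ T, φ i ω ∂μ
        ≤ (∏ i ∈ T, β i) * (∏ i ∈ univ \ T, α i) * |∫ ω, ∏ i ∈ T, φ i ω ∂μ| := by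
          gcongr
          · exact mul_nonneg (prod_nonneg fun i _ => hβ i) (prod_nonneg fun i _ => hα i)
          · exact le_abs_self _
      _ ≤ (∏ i ∈ T, α i) * (∏ i ∈ T, (C i)⁻¹) * (∏ i ∈ univ \ T, α i) *
            |∫ ω, ∏ i ∈ T, φ i ω ∂μ| := by
          gcongr
          exact prod_nonneg fun i _ => hα i
      _ = (∏ i, α i) * ((∏ i ∈ T, (C i)⁻¹) * |∫ ω, ∏ i ∈ T, φ i ω ∂μ|) := by
          rw [← prod_sdiff (subset_univ T)]
          ring
  have hsplit : (univ : Finset (Finset ι)) = insert ∅ (univ.filter fun T => T.Nonempty) := by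
    ext T; simp [or_iff_not_imp_left, nonempty_iff_ne_empty]
  rw [integral_prod_add_mul_eq hφ, powerset_univ, hsplit, sum_insert (by simp)]
  simp only [prod_empty, sdiff_empty, integral_const, one_mul, probReal_univ, smul_eq_mul, mul_one]
  rw [mul_add, mul_one, multiplicativeError, mul_sum]
  exact add_le_add_right (sum_le_sum fun T _ => hterm T) _

lemma mgf_sum_le_exp_mul_one_add_multiplicativeError [IsProbabilityMeasure μ] {a b : ι → ℝ}
    (hφ : ∀ i, AEMeasurable (φ i) μ) (ha : ∀ i, a i < 0) (hb : ∀ i, 0 < b i)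
    (hbound : ∀ i, ∀ᵐ ω ∂μ, φ i ω ∈ Set.Icc (a i) (b i)) {t : ℝ} (ht : 0 ≤ t) :
    mgf (fun ω => ∑ i, φ i ω) μ t ≤
      exp (t ^ 2 * (∑ i, (b i - a i) ^ 2) / 8) *
        (1 + multiplicativeError μ φ fun i => min (-(a i)) (b i)) := by
  set α := fun i => expChordIntercept (a i) (b i) t
  set β := fun i => expChordSlope (a i) (b i) t
  have hab (i : ι) : a i < b i := (ha i).trans (hb i)
  have hC (i : ι) : 0 < min (-(a i)) (b i) := lt_min (neg_pos.2 (ha i)) (hb i)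
  have hβ (i : ι) : 0 ≤ β i := expChordSlope_nonneg (hab i).le ht
  have hβα (i : ι) : β i * min (-(a i)) (b i) ≤ α i :=
    expChordSlope_mul_le_expChordIntercept
      (le_min (neg_le_neg (hab i).le) (neg_le_self (hb i).le)) (min_le_left _ _) t
  have hφLp (i : ι) : MemLp (φ i) ⊤ μ := memLp_top_of_mem_Icc (hφ i) (hbound i)
  have hexpLp (i : ι) : MemLp (fun ω => exp (t * φ i ω)) ⊤ μ :=
    memLp_top_of_mem_Icc (a := exp (t * a i)) (b := exp (t * b i)) ((hφ i).const_mul t).exp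
      ((hbound i).mono fun _ h => ⟨exp_le_exp.2 (mul_le_mul_of_nonneg_left h.1 ht),
        exp_le_exp.2 (mul_le_mul_of_nonneg_left h.2 ht)⟩)
  calc mgf (fun ω => ∑ i, φ i ω) μ t = ∫ ω, ∏ i, exp (t * φ i ω) ∂μ := by
        simp only [mgf, mul_sum, exp_sum]
    _ ≤ ∫ ω, ∏ i, (α i + β i * φ i ω) ∂μ := by
        refine integral_mono_ae (integrable_finset_prod_of_memLp_top univ hexpLp)
          (integrable_finset_prod_of_memLp_top univ fun i =>
            (memLp_const (α i)).add ((hφLp i).const_mul (β i))) ?_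
        filter_upwards [ae_all_iff.2 hbound] with ω hω
        exact prod_le_prod (fun i _ => (exp_pos _).le)
          fun i _ => exp_mul_le_expChord (hab i) (hω i) t
    _ ≤ (∏ i, α i) * (1 + multiplicativeError μ φ fun i => min (-(a i)) (b i)) :=
        integral_prod_add_mul_le hφLp hβ hC hβα
    _ ≤ (∏ i, exp (t ^ 2 * (b i - a i) ^ 2 / 8)) *
          (1 + multiplicativeError μ φ fun i => min (-(a i)) (b i)) := by
        gcongr with i
        · exact add_nonneg zero_le_one (multiplicativeError_nonneg fun i => (hC i).le)
        · exact fun i _ => (mul_nonneg (hβ i) (hC i).le).trans (hβα i)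
        · exact expChordIntercept_le_exp (ha i).le (hb i).le (hab i) t
    _ = _ := by rw [← exp_sum, mul_sum, sum_div]

end Moments

/-- Theorem C of \[Kar4\], a generalization of the Azuma–Hoeffding
inequality. For random variables `A_k ≤ φ_k ≤ B_k` a.s. with `A_k < 0 < B_k`,
`P(∑ φ_k > λ) ≤ (1 + μ_n(φ)) exp(-2λ² / ∑ (B_k - A_k)²)` for every `λ > 0`. -/
theorem azuma_hoeffding_multiplicative
    {Ω : Type*} [MeasurableSpace Ω] (μ : Measure Ω) [IsProbabilityMeasure μ]
    (n : ℕ)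
    (φ : Fin n → Ω → ℝ) (hφmeas : ∀ k, Measurable (φ k))
    (a b : Fin n → ℝ) (ha : ∀ k, a k < 0) (hb : ∀ k, 0 < b k)
    (hbound : ∀ k, ∀ᵐ ω ∂μ, a k ≤ φ k ω ∧ φ k ω ≤ b k)
    (lam : ℝ) (hlam : 0 < lam) :
    (μ {ω | lam < ∑ k, φ k ω}).toReal ≤
      (1 + ∑ A ∈ Finset.univ.filter (fun A : Finset (Fin n) => A.Nonempty),
          (∏ j ∈ A, (min (-(a j)) (b j))⁻¹) * |∫ ω, ∏ j ∈ A, φ j ω ∂μ|) *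
        Real.exp (-(2 * lam ^ 2) / ∑ k, (b k - a k) ^ 2) := by
  set S := ∑ k, (b k - a k) ^ 2
  set t := 4 * lam / S
  have ht : 0 ≤ t := by positivity
  have hsum : ∀ᵐ ω ∂μ, ∑ k, φ k ω ∈ Set.Icc (∑ k, a k) (∑ k, b k) := by
    filter_upwards [ae_all_iff.2 hbound] with ω hω
    exact ⟨sum_le_sum fun k _ => (hω k).1, sum_le_sum fun k _ => (hω k).2⟩
  -- `t` minimises `-t λ + t² S / 8`; for `S = 0` both sides are `0` since `x / 0 = 0`.
  have hexponent : -t * lam + t ^ 2 * S / 8 = -(2 * lam ^ 2) / S := by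
    rcases eq_or_ne S 0 with hS | hS
    · simp [t, hS]
    · simp only [t]; field_simp; ring
  calc (μ {ω | lam < ∑ k, φ k ω}).toReal ≤ μ.real {ω | lam ≤ ∑ k, φ k ω} :=
        measureReal_mono (Set.ofPred_subset_ofPred.2 fun _ => le_of_lt)
    _ ≤ exp (-t * lam) * mgf (fun ω => ∑ k, φ k ω) μ t :=
        measure_ge_le_exp_mul_mgf lam ht (integrable_exp_mul_of_mem_Icc
          (Finset.aemeasurable_fun_sum _ fun k _ => (hφmeas k).aemeasurable) hsum)
    _ ≤ exp (-t * lam) * (exp (t ^ 2 * S / 8) *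
          (1 + multiplicativeError μ φ fun k => min (-(a k)) (b k))) := by
        gcongr
        exact mgf_sum_le_exp_mul_one_add_multiplicativeError (fun k => (hφmeas k).aemeasurable)
          ha hb hbound ht
    _ = _ := by rw [← mul_assoc, ← exp_add, hexponent, mul_comm, multiplicativeError]
end
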